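/- arXiv:1409.4130 — 12 statements merged into one kernel-verified Lean document; each statement's English description precedes it below -/
import Mathlib

section
/- Every vertex of the Kimura-3 polytope K(m) satisfies all the defining inequalities of Δ(m); consequently K(m) ⊆ Δ(m). -/
open Finset

/-- The map `g : ℤ₂ × ℤ₂ → ℝ³` sending the identity to `0` and the three
non-identity elements to the standard basis vectors. -/
def gmap (a : ZMod 2 × ZMod 2) : Fin 3 → ℝ :=
  if a = (1, 0) then (fun i => if i = 0 then 1 else 0)
  else if a = (0, 1) then (fun i => if i = 1 then 1 else 0)
  else if a = (1, 1) then (fun i => if i = 2 then 1 else 0)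
  else 0

/-- The vertex set of the Kimura-3 polytope `K(m)`: points of `ℝ^{3×m}` whose
columns are images under `g` of group elements summing to the identity. -/
def KVert (m : ℕ) : Set (Fin 3 → Fin m → ℝ) :=
  {x | ∃ gs : Fin m → ZMod 2 × ZMod 2,
        (∑ j, gs j) = 0 ∧ ∀ j, (fun i => x i j) = gmap (gs j)}

/-- The polytope `Δ(m)`, given by its H-description. -/
def DeltaSet (m : ℕ) : Set (Fin 3 → Fin m → ℝ) :=
  {x | (∀ i j, 0 ≤ x i j) ∧ (∀ j, (∑ i, x i j) ≤ 1) ∧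
    ∀ A : Finset (Fin m), Odd A.card → ∀ r s : Fin 3, r ≠ s →
      ∑ j ∈ A, (x r j + x s j) ≤ (A.card : ℝ) - 1 + ∑ j ∈ Aᶜ, (x r j + x s j)}

lemma gmap00 : gmap 0 = 0 := by
  rw [gmap, if_neg (by decide), if_neg (by decide), if_neg (by decide)]
lemma gmap10 : gmap (1,0) = (fun i => if i = 0 then 1 else 0) := by
  rw [gmap, if_pos rfl]
lemma gmap01 : gmap (0,1) = (fun i => if i = 1 then 1 else 0) := by
  rw [gmap, if_neg (by decide), if_pos rfl]
lemma gmap11 : gmap 1 = (fun i => if i = 2 then 1 else 0) := by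
  rw [gmap, if_neg (by decide), if_neg (by decide), if_pos (by decide)]

lemma elems (a : ZMod 2 × ZMod 2) : a = 0 ∨ a = (1,0) ∨ a = (0,1) ∨ a = 1 := by
  revert a; decide

lemma z2add : (1 + 1 : ZMod 2) = 0 := by decide

lemma gmap_nonneg (a : ZMod 2 × ZMod 2) (i : Fin 3) : 0 ≤ gmap a i := by
  rcases elems a with h|h|h|h <;> subst h <;>
    simp only [gmap00, gmap10, gmap01, gmap11, Pi.zero_apply, le_refl] <;>
    split <;> norm_num

lemma gmap_colsum (a : ZMod 2 × ZMod 2) : (∑ i, gmap a i) ≤ 1 := by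
  rcases elems a with h|h|h|h <;> subst h <;>
    simp [gmap00, gmap10, gmap01, gmap11, Fin.sum_univ_three]

/-- The key parity argument: if `χ` is a character taking value `1` exactly
where `v` equals `1` (and `v` is `0` elsewhere), and the group elements sum
to zero, then the odd-set inequality holds. -/
lemma key_parity {m : ℕ} (gs : Fin m → ZMod 2 × ZMod 2)
    (hsum : (∑ j, gs j) = 0) (χ : ZMod 2 × ZMod 2 →+ ZMod 2)
    (v : ZMod 2 × ZMod 2 → ℝ) (hv : ∀ a, v a = if χ a = 1 then 1 else 0)
    (A : Finset (Fin m)) (hA : Odd A.card) :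
    ∑ j ∈ A, v (gs j) ≤ (A.card : ℝ) - 1 + ∑ j ∈ Aᶜ, v (gs j) := by
  have hnn : ∀ a, 0 ≤ v a := by
    intro a; rw [hv]; split <;> norm_num
  have hle1 : ∀ a, v a ≤ 1 := by
    intro a; rw [hv]; split <;> norm_num
  have hz2 : ∀ x : ZMod 2, x ≠ 1 → x = 0 := by decide
  by_cases h : ∀ j ∈ A, χ (gs j) = 1
  · -- all terms in `A` are `1`; parity forces a `1` in the complement
    have hAsum : ∑ j ∈ A, χ (gs j) = 1 := by
      rw [Finset.sum_congr rfl h, Finset.sum_const, nsmul_eq_mul, mul_one]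
      obtain ⟨k, hk⟩ := hA
      rw [hk]; push_cast
      have h2 : (2 : ZMod 2) = 0 := by decide
      rw [h2]; ring
    have htot : ∑ j ∈ A, χ (gs j) + ∑ j ∈ Aᶜ, χ (gs j) = 0 := by
      rw [Finset.sum_add_sum_compl, ← map_sum, hsum, map_zero]
    have hcsum : ∑ j ∈ Aᶜ, χ (gs j) = 1 := by
      rw [hAsum] at htot
      have h10 : ∀ x : ZMod 2, 1 + x = 0 → x = 1 := by decide
      exact h10 _ htot
    have hex : ∃ j ∈ Aᶜ, χ (gs j) = 1 := by
      by_contra hc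
      push_neg at hc
      have h0 : ∑ j ∈ Aᶜ, χ (gs j) = 0 :=
        Finset.sum_eq_zero fun j hj => hz2 _ (hc j hj)
      rw [h0] at hcsum; exact absurd hcsum (by decide)
    obtain ⟨j0, hj0, hχj0⟩ := hex
    have h1 : (1 : ℝ) ≤ ∑ j ∈ Aᶜ, v (gs j) := by
      have hs := Finset.single_le_sum (f := fun j => v (gs j))
        (fun j _ => hnn _) hj0
      have hv1 : v (gs j0) = 1 := by rw [hv, if_pos hχj0]
      simpa [hv1] using hs
    have h2 : ∑ j ∈ A, v (gs j) ≤ (A.card : ℝ) := by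
      have hs : ∑ j ∈ A, v (gs j) ≤ ∑ _j ∈ A, (1 : ℝ) :=
        Finset.sum_le_sum fun j _ => hle1 _
      simpa using hs
    linarith
  · push_neg at h
    obtain ⟨j0, hj0, hχj0⟩ := h
    have hv0 : v (gs j0) = 0 := by rw [hv, if_neg hχj0]
    have hcard : 1 ≤ A.card := Finset.card_pos.mpr ⟨j0, hj0⟩
    have h2 : ∑ j ∈ A, v (gs j) ≤ (A.card : ℝ) - 1 := by
      rw [← Finset.add_sum_erase _ _ hj0, hv0, zero_add]
      have hs : ∑ j ∈ A.erase j0, v (gs j) ≤ ∑ _j ∈ A.erase j0, (1 : ℝ) :=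
        Finset.sum_le_sum fun j _ => hle1 _
      have hc : ((A.erase j0).card : ℝ) = (A.card : ℝ) - 1 := by
        rw [Finset.card_erase_of_mem hj0]
        push_cast [Nat.cast_sub hcard]; ring
      simpa [hc] using hs
    have h3 : (0 : ℝ) ≤ ∑ j ∈ Aᶜ, v (gs j) :=
      Finset.sum_nonneg fun j _ => hnn _
    linarith

lemma gmap_pair (r s : Fin 3) (hrs : r ≠ s) :
    ∃ χ : ZMod 2 × ZMod 2 →+ ZMod 2,
      ∀ a, gmap a r + gmap a s = if χ a = 1 then 1 else 0 := by
  fin_cases r <;> fin_cases s <;> (try exact absurd rfl hrs)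
  · exact ⟨AddMonoidHom.fst _ _ + AddMonoidHom.snd _ _, fun a => by
      rcases elems a with h|h|h|h <;> subst h <;>
        simp [gmap00, gmap10, gmap01, gmap11, z2add]⟩
  · exact ⟨AddMonoidHom.fst _ _, fun a => by
      rcases elems a with h|h|h|h <;> subst h <;>
        simp [gmap00, gmap10, gmap01, gmap11, z2add]⟩
  · exact ⟨AddMonoidHom.fst _ _ + AddMonoidHom.snd _ _, fun a => by
      rcases elems a with h|h|h|h <;> subst h <;>
        simp [gmap00, gmap10, gmap01, gmap11, z2add, add_comm]⟩
  · exact ⟨AddMonoidHom.snd _ _, fun a => by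
      rcases elems a with h|h|h|h <;> subst h <;>
        simp [gmap00, gmap10, gmap01, gmap11, z2add, add_comm]⟩
  · exact ⟨AddMonoidHom.fst _ _, fun a => by
      rcases elems a with h|h|h|h <;> subst h <;>
        simp [gmap00, gmap10, gmap01, gmap11, z2add, add_comm]⟩
  · exact ⟨AddMonoidHom.snd _ _, fun a => by
      rcases elems a with h|h|h|h <;> subst h <;>
        simp [gmap00, gmap10, gmap01, gmap11, z2add, add_comm]⟩

lemma KVert_subset_Delta (m : ℕ) : KVert m ⊆ DeltaSet m := by
  rintro x ⟨gs, hsum, hcol⟩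
  have hx : ∀ i j, x i j = gmap (gs j) i := fun i j => congrFun (hcol j) i
  refine ⟨fun i j => ?_, fun j => ?_, fun A hA r s hrs => ?_⟩
  · rw [hx]; exact gmap_nonneg _ _
  · have he : (∑ i, x i j) = ∑ i, gmap (gs j) i :=
      Finset.sum_congr rfl fun i _ => hx i j
    rw [he]; exact gmap_colsum _
  · obtain ⟨χ, hχ⟩ := gmap_pair r s hrs
    have heq : ∀ j, x r j + x s j
        = (fun a => if χ a = 1 then (1:ℝ) else 0) (gs j) := by
      intro j; rw [hx, hx, hχ]
    have e1 : ∑ j ∈ A, (x r j + x s j)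
        = ∑ j ∈ A, (fun a => if χ a = 1 then (1:ℝ) else 0) (gs j) :=
      Finset.sum_congr rfl fun j _ => heq j
    have e2 : ∑ j ∈ Aᶜ, (x r j + x s j)
        = ∑ j ∈ Aᶜ, (fun a => if χ a = 1 then (1:ℝ) else 0) (gs j) :=
      Finset.sum_congr rfl fun j _ => heq j
    rw [e1, e2]
    exact key_parity gs hsum χ _ (fun a => rfl) A hA

lemma Delta_convex (m : ℕ) : Convex ℝ (DeltaSet m) := by
  rintro x ⟨hx1, hx2, hx3⟩ y ⟨hy1, hy2, hy3⟩ a b ha hb hab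
  have hval : ∀ i j, (a • x + b • y) i j = a * x i j + b * y i j := by
    intro i j; simp
  refine ⟨fun i j => ?_, fun j => ?_, fun A hA r s hrs => ?_⟩
  · rw [hval]
    exact add_nonneg (mul_nonneg ha (hx1 i j)) (mul_nonneg hb (hy1 i j))
  · have he : (∑ i, (a • x + b • y) i j)
        = a * (∑ i, x i j) + b * (∑ i, y i j) := by
      simp only [hval]
      rw [Finset.sum_add_distrib, ← Finset.mul_sum, ← Finset.mul_sum]
    rw [he]
    have h1 : a * (∑ i, x i j) ≤ a * 1 := mul_le_mul_of_nonneg_left (hx2 j) ha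
    have h2 : b * (∑ i, y i j) ≤ b * 1 := mul_le_mul_of_nonneg_left (hy2 j) hb
    nlinarith
  · have e1 : ∀ (B : Finset (Fin m)),
        ∑ j ∈ B, ((a • x + b • y) r j + (a • x + b • y) s j)
          = a * (∑ j ∈ B, (x r j + x s j)) + b * (∑ j ∈ B, (y r j + y s j)) := by
      intro B
      simp only [hval]
      rw [Finset.mul_sum, Finset.mul_sum, ← Finset.sum_add_distrib]
      exact Finset.sum_congr rfl fun j _ => by ring
    rw [e1, e1]
    have h1 := hx3 A hA r s hrs
    have h2 := hy3 A hA r s hrs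
    nlinarith [mul_le_mul_of_nonneg_left h1 ha, mul_le_mul_of_nonneg_left h2 hb]

/-- Every vertex of `K(m)` satisfies all defining inequalities of `Δ(m)`;
consequently `K(m) ⊆ Δ(m)`. -/
theorem Kimura_subset_Delta (m : ℕ) (hm : 3 ≤ m) :
    (KVert m ⊆ DeltaSet m) ∧ convexHull ℝ (KVert m) ⊆ DeltaSet m :=
  ⟨KVert_subset_Delta m, convexHull_min (KVert_subset_Delta m) (Delta_convex m)⟩
end

section
/- If a point P of the 3-simplex {(a,b,c): a,b,c ≥ 0, a+b+c ≤ 1} maps under f(a,b,c) = (a+b, a+c, b+c) to a point with all coordinates integral, then P itself is integral (i.e., P is a vertex of the simplex). -/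
/-- The coordinate change `f(a,b,c) = (a+b, a+c, b+c)`. -/
def fmap (p : ℝ × ℝ × ℝ) : ℝ × ℝ × ℝ :=
  (p.1 + p.2.1, p.1 + p.2.2, p.2.1 + p.2.2)

/-- If a point of the unit 3-simplex maps under `f` to a point with all
coordinates integral, then the point itself is integral. -/
theorem integral_image_implies_integral
    (p : ℝ × ℝ × ℝ) (hp : 0 ≤ p.1 ∧ 0 ≤ p.2.1 ∧ 0 ≤ p.2.2 ∧ p.1 + p.2.1 + p.2.2 ≤ 1)
    (hint : (∃ n : ℤ, (fmap p).1 = n) ∧ (∃ n : ℤ, (fmap p).2.1 = n) ∧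
      (∃ n : ℤ, (fmap p).2.2 = n)) :
    (∃ n : ℤ, p.1 = n) ∧ (∃ n : ℤ, p.2.1 = n) ∧ (∃ n : ℤ, p.2.2 = n) := by
  obtain ⟨ha, hb, hc, hs⟩ := hp
  obtain ⟨⟨n1, h1⟩, ⟨n2, h2⟩, ⟨n3, h3⟩⟩ := hint
  simp only [fmap] at h1 h2 h3
  have hn1l : (0:ℤ) ≤ n1 := by exact_mod_cast (by linarith : (0:ℝ) ≤ (n1:ℝ))
  have hn1u : n1 ≤ 1 := by exact_mod_cast (by linarith : (n1:ℝ) ≤ 1)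
  have hn2l : (0:ℤ) ≤ n2 := by exact_mod_cast (by linarith : (0:ℝ) ≤ (n2:ℝ))
  have hn2u : n2 ≤ 1 := by exact_mod_cast (by linarith : (n2:ℝ) ≤ 1)
  have hn3l : (0:ℤ) ≤ n3 := by exact_mod_cast (by linarith : (0:ℝ) ≤ (n3:ℝ))
  have hn3u : n3 ≤ 1 := by exact_mod_cast (by linarith : (n3:ℝ) ≤ 1)
  interval_cases n1 <;> interval_cases n2 <;> interval_cases n3 <;>
    push_cast at h1 h2 h3 <;>
    first
    | (exfalso; linarith)
    | exact ⟨⟨0, by push_cast; linarith⟩, ⟨0, by push_cast; linarith⟩,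
        ⟨0, by push_cast; linarith⟩⟩
    | exact ⟨⟨1, by push_cast; linarith⟩, ⟨0, by push_cast; linarith⟩,
        ⟨0, by push_cast; linarith⟩⟩
    | exact ⟨⟨0, by push_cast; linarith⟩, ⟨1, by push_cast; linarith⟩,
        ⟨0, by push_cast; linarith⟩⟩
    | exact ⟨⟨0, by push_cast; linarith⟩, ⟨0, by push_cast; linarith⟩,
        ⟨1, by push_cast; linarith⟩⟩
end

section
/- Every non-integral point P of the demihypercube DH(m) (m ≥ 3) has at least two non-integral coordinates. -/
open Finset

/-- Membership in the demihypercube `DH(m)` (H-representation). -/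
def inDH (m : ℕ) (p : Fin m → ℝ) : Prop :=
  (∀ k, p k ∈ Set.Icc (0:ℝ) 1) ∧
  ∀ A : Finset (Fin m), Odd A.card →
    ∑ j ∈ A, p j ≤ (A.card : ℝ) - 1 + ∑ j ∈ Aᶜ, p j

/-- The point `p` lies on the facet hyperplane `H_A`. -/
def onFacet (m : ℕ) (p : Fin m → ℝ) (A : Finset (Fin m)) : Prop :=
  ∑ j ∈ A, p j = (A.card : ℝ) - 1 + ∑ j ∈ Aᶜ, p j

/-
If every coordinate except `p k` is integral, let `S` be the set of coordinates equal to `1`.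
When `|S|` is even, the odd-set inequality for `S ∪ {k}` reads `|S| + p k ≤ |S|`, so `p k ≤ 0`;
when `|S|` is odd, the inequality for `S` itself reads `|S| ≤ |S| - 1 + p k`, so `p k ≥ 1`.
Either way the box constraint forces `p k ∈ {0, 1}`.
-/

namespace inDH

variable {m : ℕ} {p : Fin m → ℝ} {S : Finset (Fin m)} {k : Fin m}

lemma le_zero_of_even_card (hp : inDH m p) (hkS : k ∉ S) (hS : Even S.card)
    (hone : ∀ j ∈ S, p j = 1) (hzero : ∀ j, j ∉ S → j ≠ k → p j = 0) : p k ≤ 0 := by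
  have hcard : (insert k S).card = S.card + 1 := card_insert_of_notMem hkS
  have hle := hp.2 (insert k S) (by rw [hcard]; exact hS.add_one)
  have hcompl : ∑ j ∈ (insert k S)ᶜ, p j = 0 := by
    refine sum_eq_zero fun j hj => ?_
    simp only [mem_compl, mem_insert, not_or] at hj
    exact hzero j hj.2 hj.1
  rw [sum_insert hkS, sum_eq_card_nsmul hone, nsmul_one, hcompl, hcard] at hle
  push_cast at hle
  linarith

lemma one_le_of_odd_card (hp : inDH m p) (hkS : k ∉ S) (hS : Odd S.card)
    (hone : ∀ j ∈ S, p j = 1) (hzero : ∀ j, j ∉ S → j ≠ k → p j = 0) : 1 ≤ p k := by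
  have hle := hp.2 S hS
  have hcompl : ∑ j ∈ Sᶜ, p j = p k :=
    sum_eq_single_of_mem k (mem_compl.2 hkS) fun j hj hjk => hzero j (mem_compl.1 hj) hjk
  rw [sum_eq_card_nsmul hone, nsmul_one, hcompl] at hle
  linarith

lemma eq_zero_or_eq_one_of_forall_ne (hp : inDH m p) (hint : ∀ j, j ≠ k → p j = 0 ∨ p j = 1) :
    p k = 0 ∨ p k = 1 := by
  by_cases hk1 : p k = 1
  · exact Or.inr hk1
  set S := univ.filter fun j => p j = 1
  have hkS : k ∉ S := by simp [S, hk1]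
  have hone : ∀ j ∈ S, p j = 1 := fun j hj => (mem_filter.1 hj).2
  have hzero : ∀ j, j ∉ S → j ≠ k → p j = 0 := fun j hjS hjk =>
    (hint j hjk).resolve_right fun h => hjS (by simp [S, h])
  obtain ⟨hk0, hk1'⟩ := hp.1 k
  rcases Nat.even_or_odd S.card with hS | hS
  · exact Or.inl (le_antisymm (hp.le_zero_of_even_card hkS hS hone hzero) hk0)
  · exact Or.inr (le_antisymm hk1' (hp.one_le_of_odd_card hkS hS hone hzero))

end inDH

theorem two_nonintegral_coords_general (m : ℕ) (p : Fin m → ℝ)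
    (hp : inDH m p) (hni : ∃ k, p k ≠ 0 ∧ p k ≠ 1) :
    ∃ i j : Fin m, i ≠ j ∧ (p i ≠ 0 ∧ p i ≠ 1) ∧ (p j ≠ 0 ∧ p j ≠ 1) := by
  obtain ⟨k, hk⟩ := hni
  by_contra! hcon
  have hint : ∀ j, j ≠ k → p j = 0 ∨ p j = 1 := fun j hjk => by
    by_contra! hj
    exact hj.2 (hcon k j (Ne.symm hjk) hk hj.1)
  rcases hp.eq_zero_or_eq_one_of_forall_ne hint with h | h
  exacts [hk.1 h, hk.2 h]

/-- Every non-integral point of `DH(m)` (`m ≥ 3`) has at least two non-integral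
coordinates. -/
theorem two_nonintegral_coords (m : ℕ) (hm : 3 ≤ m) (p : Fin m → ℝ)
    (hp : inDH m p) (hni : ∃ k, p k ≠ 0 ∧ p k ≠ 1) :
    ∃ i j : Fin m, i ≠ j ∧ (p i ≠ 0 ∧ p i ≠ 1) ∧ (p j ≠ 0 ∧ p j ≠ 1) :=
  two_nonintegral_coords_general m p hp hni
end

section
/- If a point P ∈ [0,1]^m satisfies all A-inequalities of the demihypercube and lies on two distinct facet hyperplanes H_A and H_B (i.e., satisfies the corresponding A-inequalities with equality for two distinct odd-cardinality sets A, B), then p_j = 1 for all j ∈ A ∩ B, p_l = 0 for all l ∉ A ∪ B, and |A \ B| + |B \ A| = 2; in particular P has at most two non-integral coordinates. -/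
open Finset

open scoped Classical in
/-- A point of the demihypercube lying on two distinct facet hyperplanes `H_A`
and `H_B` has `p_j = 1` on `A ∩ B`, `p_l = 0` off `A ∪ B`,
`|A \ B| + |B \ A| = 2`, and at most two non-integral coordinates. -/
theorem two_facets_structure (m : ℕ) (p : Fin m → ℝ) (hp : inDH m p)
    (A B : Finset (Fin m)) (hA : Odd A.card) (hB : Odd B.card) (hAB : A ≠ B)
    (hHA : onFacet m p A) (hHB : onFacet m p B) :
    (∀ j ∈ A ∩ B, p j = 1) ∧ (∀ l, l ∉ A ∪ B → p l = 0) ∧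
      (A \ B).card + (B \ A).card = 2 ∧
      (Finset.univ.filter (fun k : Fin m => p k ≠ 0 ∧ p k ≠ 1)).card ≤ 2 := by
  classical
  obtain ⟨hbox, _⟩ := hp
  -- the two facet equalities in "distance" form
  have keyA : ∑ j ∈ A, (1 - p j) + ∑ j ∈ Aᶜ, p j = 1 := by
    have h := hHA
    unfold onFacet at h
    rw [Finset.sum_sub_distrib, Finset.sum_const, nsmul_eq_mul, mul_one]
    linarith
  have keyB : ∑ j ∈ B, (1 - p j) + ∑ j ∈ Bᶜ, p j = 1 := by
    have h := hHB
    unfold onFacet at h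
    rw [Finset.sum_sub_distrib, Finset.sum_const, nsmul_eq_mul, mul_one]
    linarith
  -- decompositions
  have decA : ∑ j ∈ A ∩ B, (1 - p j) + ∑ j ∈ A \ B, (1 - p j) = ∑ j ∈ A, (1 - p j) :=
    Finset.sum_inter_add_sum_sdiff A B _
  have decB : ∑ j ∈ B ∩ A, (1 - p j) + ∑ j ∈ B \ A, (1 - p j) = ∑ j ∈ B, (1 - p j) :=
    Finset.sum_inter_add_sum_sdiff B A _
  have hBA : B ∩ A = A ∩ B := Finset.inter_comm B A
  have hAc1 : Aᶜ ∩ B = B \ A := by ext x; simp [Finset.mem_sdiff, and_comm]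
  have hAc2 : Aᶜ \ B = (A ∪ B)ᶜ := by
    ext x; simp [Finset.mem_sdiff]; try tauto
  have hBc1 : Bᶜ ∩ A = A \ B := by ext x; simp [Finset.mem_sdiff, and_comm]
  have hBc2 : Bᶜ \ A = (A ∪ B)ᶜ := by
    ext x; simp [Finset.mem_sdiff]; try tauto
  have decAc : ∑ j ∈ B \ A, p j + ∑ j ∈ (A ∪ B)ᶜ, p j = ∑ j ∈ Aᶜ, p j := by
    rw [← hAc1, ← hAc2]; exact Finset.sum_inter_add_sum_sdiff Aᶜ B _
  have decBc : ∑ j ∈ A \ B, p j + ∑ j ∈ (A ∪ B)ᶜ, p j = ∑ j ∈ Bᶜ, p j := by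
    rw [← hBc1, ← hBc2]; exact Finset.sum_inter_add_sum_sdiff Bᶜ A _
  -- sums of (1-p)+p over differences are cardinalities
  have cardAB : ∑ j ∈ A \ B, (1 - p j) + ∑ j ∈ A \ B, p j = ((A \ B).card : ℝ) := by
    rw [← Finset.sum_add_distrib]
    simp
  have cardBA : ∑ j ∈ B \ A, (1 - p j) + ∑ j ∈ B \ A, p j = ((B \ A).card : ℝ) := by
    rw [← Finset.sum_add_distrib]
    simp
  -- nonnegativity
  have s1nn : ∀ j ∈ A ∩ B, (0:ℝ) ≤ 1 - p j := fun j _ => by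
    have := (hbox j).2; linarith
  have s2nn : ∀ j ∈ (A ∪ B)ᶜ, (0:ℝ) ≤ p j := fun j _ => (hbox j).1
  have s1 : (0:ℝ) ≤ ∑ j ∈ A ∩ B, (1 - p j) := Finset.sum_nonneg s1nn
  have s2 : (0:ℝ) ≤ ∑ j ∈ (A ∪ B)ᶜ, p j := Finset.sum_nonneg s2nn
  set n : ℕ := (A \ B).card + (B \ A).card with hn
  -- master equation
  have master : 2 * (∑ j ∈ A ∩ B, (1 - p j)) + 2 * (∑ j ∈ (A ∪ B)ᶜ, p j) + (n : ℝ) = 2 := by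
    push_cast [hn]
    rw [← cardAB, ← cardBA]
    rw [hBA] at decB
    linarith [keyA, keyB, decA, decB, decAc, decBc]
  -- n is even and positive
  have neven : Even n := by
    have h1 : A.card = (A ∩ B).card + (A \ B).card :=
      (Finset.card_inter_add_card_sdiff A B).symm
    have h2 : B.card = (A ∩ B).card + (B \ A).card := by
      rw [← hBA]; exact (Finset.card_inter_add_card_sdiff B A).symm
    have := hA.add_odd hB
    rw [h1, h2] at this
    rcases this with ⟨k, hk⟩
    exact ⟨k - (A ∩ B).card, by omega⟩
  have npos : 1 ≤ n := by
    by_contra h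
    push_neg at h
    interval_cases n
    · have h1 : A \ B = ∅ := Finset.card_eq_zero.mp (by omega)
      have h2 : B \ A = ∅ := Finset.card_eq_zero.mp (by omega)
      exact hAB (Finset.Subset.antisymm (Finset.sdiff_eq_empty_iff_subset.mp h1)
        (Finset.sdiff_eq_empty_iff_subset.mp h2))
  have nge2 : 2 ≤ n := by rcases neven with ⟨k, hk⟩; omega
  have nle2 : (n : ℝ) ≤ 2 := by linarith
  have n2 : n = 2 := le_antisymm (by exact_mod_cast nle2) nge2
  have s1z : ∑ j ∈ A ∩ B, (1 - p j) = 0 := by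
    rw [n2] at master; push_cast at master; linarith
  have s2z : ∑ j ∈ (A ∪ B)ᶜ, p j = 0 := by
    rw [n2] at master; push_cast at master; linarith
  have h1 : ∀ j ∈ A ∩ B, p j = 1 := by
    intro j hj
    have := (Finset.sum_eq_zero_iff_of_nonneg s1nn).mp s1z j hj
    linarith
  have h2 : ∀ l, l ∉ A ∪ B → p l = 0 := by
    intro l hl
    exact (Finset.sum_eq_zero_iff_of_nonneg s2nn).mp s2z l (Finset.mem_compl.mpr hl)
  refine ⟨h1, h2, n2, ?_⟩
  calc (Finset.univ.filter (fun k : Fin m => p k ≠ 0 ∧ p k ≠ 1)).card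
      ≤ ((A \ B) ∪ (B \ A)).card := by
        apply Finset.card_le_card
        intro k hk
        simp only [Finset.mem_filter] at hk
        obtain ⟨-, hk0, hk1⟩ := hk
        simp only [Finset.mem_union, Finset.mem_sdiff]
        by_cases hkA : k ∈ A <;> by_cases hkB : k ∈ B
        · exact absurd (h1 k (Finset.mem_inter.mpr ⟨hkA, hkB⟩)) hk1
        · exact Or.inl ⟨hkA, hkB⟩
        · exact Or.inr ⟨hkB, hkA⟩
        · exact absurd (h2 k (by simp [hkA, hkB])) hk0
    _ ≤ (A \ B).card + (B \ A).card := Finset.card_union_le _ _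
    _ = 2 := n2
end

section
/- If a point P ∈ [0,1]^m satisfying all demihypercube A-inequalities lies on three distinct facet hyperplanes H_A, H_B, H_C (for distinct odd-cardinality sets A, B, C), then P is integral, the number of coordinates of P equal to 1 is even, and P lies on exactly m facet hyperplanes. -/
open Finset
open scoped symmDiff

lemma card_symmDiff_aux {α : Type*} [DecidableEq α] (s t : Finset α) :
    (s ∆ t).card + 2 * (s ∩ t).card = s.card + t.card := by
  have h1 : s ∆ t = (s \ t) ∪ (t \ s) := rfl
  have hd : Disjoint (s \ t) (t \ s) := disjoint_sdiff_sdiff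
  have h2 := card_union_of_disjoint hd
  have h3 := Finset.card_sdiff_add_card_inter s t
  have h4 := Finset.card_sdiff_add_card_inter t s
  rw [Finset.inter_comm t s] at h4
  rw [h1, h2]; omega

/-- Slack function `F p A = ∑ (distance of p_j to its A-vertex)`. -/
noncomputable def Fs {m : ℕ} (p : Fin m → ℝ) (A : Finset (Fin m)) : ℝ :=
  ∑ j, (if j ∈ A then 1 - p j else p j)

lemma Fs_eq {m : ℕ} (p : Fin m → ℝ) (A : Finset (Fin m)) :
    Fs p A = (A.card : ℝ) - ∑ j ∈ A, p j + ∑ j ∈ Aᶜ, p j := by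
  unfold Fs
  rw [← Finset.sum_add_sum_compl A]
  have h1 : ∑ j ∈ A, (if j ∈ A then 1 - p j else p j) = (A.card : ℝ) - ∑ j ∈ A, p j := by
    rw [Finset.sum_congr rfl (fun j hj => if_pos hj), Finset.sum_sub_distrib,
      Finset.sum_const, nsmul_eq_mul, mul_one]
  have h2 : ∑ j ∈ Aᶜ, (if j ∈ A then 1 - p j else p j) = ∑ j ∈ Aᶜ, p j :=
    Finset.sum_congr rfl (fun j hj => if_neg (Finset.mem_compl.mp hj))
  rw [h1, h2]

lemma onFacet_iff_Fs {m : ℕ} (p : Fin m → ℝ) (A : Finset (Fin m)) :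
    onFacet m p A ↔ Fs p A = 1 := by
  rw [Fs_eq, onFacet]; constructor <;> intro h <;> linarith

lemma pair_lemma {m : ℕ} {p : Fin m → ℝ} (hp : inDH m p)
    {A B : Finset (Fin m)} (hA : Odd A.card) (hB : Odd B.card) (hAB : A ≠ B)
    (hFA : Fs p A = 1) (hFB : Fs p B = 1) :
    ∀ j ∉ A ∆ B, (if j ∈ A then 1 - p j else p j) = 0 := by
  classical
  have hq : ∀ (D : Finset (Fin m)) j, 0 ≤ (if j ∈ D then 1 - p j else p j) := by
    intro D j
    have := hp.1 j
    split <;> [linarith [this.2]; exact this.1]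
  -- sum over symm diff is its card
  have hsd : ∑ j ∈ A ∆ B, ((if j ∈ A then 1 - p j else p j) +
      (if j ∈ B then 1 - p j else p j)) = ((A ∆ B).card : ℝ) := by
    have : ∑ j ∈ A ∆ B, ((if j ∈ A then 1 - p j else p j) +
        (if j ∈ B then 1 - p j else p j)) = ∑ _j ∈ A ∆ B, (1:ℝ) := by
      refine Finset.sum_congr rfl fun j hj => ?_
      rcases Finset.mem_symmDiff.mp hj with ⟨h1, h2⟩ | ⟨h1, h2⟩
      · rw [if_pos h1, if_neg h2]; ring
      · rw [if_neg h2, if_pos h1]; ring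
    rw [this]; simp
  have htot : ∑ j, ((if j ∈ A then 1 - p j else p j) +
      (if j ∈ B then 1 - p j else p j)) = 2 := by
    rw [Finset.sum_add_distrib]
    show Fs p A + Fs p B = 2
    rw [hFA, hFB]; norm_num
  have hsplit := Finset.sum_add_sum_compl (A ∆ B)
    (fun j => (if j ∈ A then 1 - p j else p j) + (if j ∈ B then 1 - p j else p j))
  rw [htot, hsd] at hsplit
  -- card (A ∆ B) ≥ 2
  have hcards := card_symmDiff_aux A B
  have hne : (A ∆ B).card ≠ 0 := by
    simp only [ne_eq, Finset.card_eq_zero, Finset.symmDiff_eq_empty]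
    exact hAB
  have hge2 : 2 ≤ (A ∆ B).card := by
    obtain ⟨a, ha⟩ := hA; obtain ⟨b, hb⟩ := hB; omega
  have hnonneg : ∀ j ∈ (A ∆ B)ᶜ, 0 ≤ (if j ∈ A then 1 - p j else p j) +
      (if j ∈ B then 1 - p j else p j) := fun j _ => add_nonneg (hq A j) (hq B j)
  have hle : ∑ j ∈ (A ∆ B)ᶜ, ((if j ∈ A then 1 - p j else p j) +
      (if j ∈ B then 1 - p j else p j)) = 2 - ((A ∆ B).card : ℝ) := by linarith
  have hzero : ∀ j ∈ (A ∆ B)ᶜ, (if j ∈ A then 1 - p j else p j) +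
      (if j ∈ B then 1 - p j else p j) = 0 := by
    have hsum0 : ∑ j ∈ (A ∆ B)ᶜ, ((if j ∈ A then 1 - p j else p j) +
        (if j ∈ B then 1 - p j else p j)) ≤ 0 := by
      rw [hle]
      have : (2 : ℝ) ≤ ((A ∆ B).card : ℝ) := by exact_mod_cast hge2
      linarith
    intro j hj
    have := (Finset.sum_eq_zero_iff_of_nonneg hnonneg).mp
      (le_antisymm hsum0 (Finset.sum_nonneg hnonneg)) j hj
    exact this
  intro j hj
  have h := hzero j (Finset.mem_compl.mpr hj)
  have := hq A j; have := hq B j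
  linarith

lemma Fs_integral {m : ℕ} {p : Fin m → ℝ} {S : Finset (Fin m)}
    (hpS : ∀ k, p k = if k ∈ S then 1 else 0) (D : Finset (Fin m)) :
    Fs p D = ((D ∆ S).card : ℝ) := by
  classical
  unfold Fs
  have : ∀ j, (if j ∈ D then 1 - p j else p j) = (if j ∈ D ∆ S then (1:ℝ) else 0) := by
    intro j
    rw [hpS j]
    by_cases h1 : j ∈ D <;> by_cases h2 : j ∈ S <;>
      simp [h1, h2, Finset.mem_symmDiff]
  rw [Finset.sum_congr rfl fun j _ => this j]
  simp

open scoped Classical in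
/-- A point of the demihypercube lying on three distinct facet hyperplanes is
integral, has an even number of coordinates equal to one, and lies on exactly
`m` facet hyperplanes. -/
theorem three_facets_integral (m : ℕ) (p : Fin m → ℝ) (hp : inDH m p)
    (A B C : Finset (Fin m)) (hA : Odd A.card) (hB : Odd B.card) (hC : Odd C.card)
    (hAB : A ≠ B) (hAC : A ≠ C) (hBC : B ≠ C)
    (hHA : onFacet m p A) (hHB : onFacet m p B) (hHC : onFacet m p C) :
    (∀ k, p k = 0 ∨ p k = 1) ∧
      Even (Finset.univ.filter (fun k : Fin m => p k = 1)).card ∧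
      (Finset.univ.filter
        (fun D : Finset (Fin m) => Odd D.card ∧ onFacet m p D)).card = m := by
  classical
  have hFA := (onFacet_iff_Fs p A).mp hHA
  have hFB := (onFacet_iff_Fs p B).mp hHB
  have hFC := (onFacet_iff_Fs p C).mp hHC
  have qAB := pair_lemma hp hA hB hAB hFA hFB
  have qAC := pair_lemma hp hA hC hAC hFA hFC
  have qBC := pair_lemma hp hB hC hBC hFB hFC
  -- p is integral
  have key : ∀ {X : Finset (Fin m)} {k : Fin m},
      (if k ∈ X then 1 - p k else p k) = 0 → p k = 0 ∨ p k = 1 := by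
    intro X k h
    split at h
    · right; linarith
    · left; exact h
  have hint : ∀ k, p k = 0 ∨ p k = 1 := by
    intro k
    by_cases h1 : k ∈ A ∆ B
    · by_cases h2 : k ∈ A ∆ C
      · have h3 : k ∉ B ∆ C := by
          simp only [Finset.mem_symmDiff] at h1 h2 ⊢; tauto
        exact key (qBC k h3)
      · exact key (qAC k h2)
    · exact key (qAB k h1)
  refine ⟨hint, ?_⟩
  set S : Finset (Fin m) := Finset.univ.filter (fun k : Fin m => p k = 1) with hS
  have hpS : ∀ k, p k = if k ∈ S then 1 else 0 := by
    intro k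
    have hk : k ∈ S ↔ p k = 1 := by simp [hS]
    rcases hint k with h | h
    · rw [if_neg (fun hmem => by rw [hk.mp hmem] at h; norm_num at h), h]
    · rw [if_pos (hk.mpr h), h]
  have hFs : ∀ D, Fs p D = ((D ∆ S).card : ℝ) := Fs_integral hpS
  have hcard1 : ∀ D : Finset (Fin m), Fs p D = 1 → (D ∆ S).card = 1 := by
    intro D h
    have : ((D ∆ S).card : ℝ) = 1 := by rw [← hFs D, h]
    exact_mod_cast this
  have hAS : (A ∆ S).card = 1 := hcard1 A hFA
  -- S has even card
  obtain ⟨a, ha⟩ := hA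
  have hcs := card_symmDiff_aux A S
  have hSeven : Even S.card := by
    refine ⟨(A ∩ S).card - a, ?_⟩
    omega
  refine ⟨hSeven, ?_⟩
  obtain ⟨c, hc⟩ := hSeven
  -- characterize facet sets
  have hchar : Finset.univ.filter (fun D : Finset (Fin m) => Odd D.card ∧ onFacet m p D)
      = Finset.univ.image (fun j : Fin m => S ∆ {j}) := by
    ext D
    simp only [Finset.mem_filter, Finset.mem_univ, true_and, Finset.mem_image]
    constructor
    · rintro ⟨hodd, hface⟩
      have h1 : (D ∆ S).card = 1 := hcard1 D ((onFacet_iff_Fs p D).mp hface)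
      obtain ⟨j, hj⟩ := Finset.card_eq_one.mp h1
      refine ⟨j, ?_⟩
      rw [← hj, symmDiff_comm D S, symmDiff_symmDiff_cancel_left]
    · rintro ⟨j, rfl⟩
      have hj : (S ∆ {j}) ∆ S = {j} := by
        rw [symmDiff_comm S ({j} : Finset (Fin m)), symmDiff_symmDiff_cancel_right]
      have h1 : ((S ∆ {j}) ∆ S).card = 1 := by rw [hj]; simp
      have hcs2 := card_symmDiff_aux (S ∆ {j}) S
      constructor
      · refine ⟨((S ∆ {j}) ∩ S).card - c, ?_⟩
        omega
      · rw [onFacet_iff_Fs, hFs, h1]; norm_num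
  rw [hchar, Finset.card_image_of_injective _ (fun x y hxy => by
    have := symmDiff_right_injective S hxy
    exact Finset.singleton_injective this), Finset.card_univ, Fintype.card_fin]
end

section
/- Let P ∈ [0,1]^m satisfy all demihypercube A-inequalities, have exactly two non-integral coordinates at indices i and j, and lie on the hyperplane H_A for some odd-cardinality A with both i, j ∈ A. Then p_i + p_j = 1, the set I = {k : p_k = 1} has cardinality |A| − 2 (in particular |I| is odd), and I = A \ {i,j}. -/
open Finset

open scoped Classical in
lemma sum01_eq_card {m : ℕ} (p : Fin m → ℝ) (s : Finset (Fin m))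
    (h : ∀ k ∈ s, p k = 0 ∨ p k = 1) :
    ∑ k ∈ s, p k = ((s.filter (fun k => p k = 1)).card : ℝ) := by
  rw [← Finset.sum_boole]
  refine Finset.sum_congr rfl fun k hk => ?_
  rcases h k hk with h' | h' <;> simp [h']

open scoped Classical in
/-- S-facet with both non-integral indices inside `A`: if `P` has exactly two
non-integral coordinates `p_i, p_j` with `i, j ∈ A` and lies on `H_A`, then
`p_i + p_j = 1` and `I = {k : p_k = 1}` equals `A \ {i,j}` and has odd
cardinality `|A| − 2`. -/
theorem S_facet_inside (m : ℕ) (p : Fin m → ℝ) (hp : inDH m p)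
    (i j : Fin m) (hij : i ≠ j)
    (hi : p i ≠ 0 ∧ p i ≠ 1) (hj : p j ≠ 0 ∧ p j ≠ 1)
    (hother : ∀ k, k ≠ i → k ≠ j → p k = 0 ∨ p k = 1)
    (A : Finset (Fin m)) (hA : Odd A.card) (hiA : i ∈ A) (hjA : j ∈ A)
    (hH : onFacet m p A) :
    p i + p j = 1 ∧
      (Finset.univ.filter (fun k : Fin m => p k = 1)).card = A.card - 2 ∧
      Odd (Finset.univ.filter (fun k : Fin m => p k = 1)).card ∧
      (Finset.univ.filter (fun k : Fin m => p k = 1)) = A \ {i, j} := by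
  obtain ⟨hbox, _⟩ := hp
  set B : Finset (Fin m) := A \ {i, j} with hBdef
  have hsub : ({i, j} : Finset (Fin m)) ⊆ A := by
    intro k hk
    simp only [Finset.mem_insert, Finset.mem_singleton] at hk
    rcases hk with rfl | rfl <;> assumption
  have hpair : ({i, j} : Finset (Fin m)).card = 2 := by
    rw [Finset.card_insert_of_notMem (by simp [hij]), Finset.card_singleton]
  have hA2 : 2 ≤ A.card := hpair ▸ Finset.card_le_card hsub
  have hBcard : B.card = A.card - 2 := by
    rw [hBdef, Finset.card_sdiff_of_subset hsub, hpair]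
  have hsumA : ∑ k ∈ A, p k = p i + p j + ∑ k ∈ B, p k := by
    rw [← Finset.sum_sdiff hsub, Finset.sum_pair hij]; ring
  have hBsum : ∑ k ∈ B, p k = ((B.filter (fun k => p k = 1)).card : ℝ) := by
    refine sum01_eq_card p B fun k hk => ?_
    rw [hBdef, Finset.mem_sdiff] at hk
    simp only [Finset.mem_insert, Finset.mem_singleton, not_or] at hk
    exact hother k hk.2.1 hk.2.2
  have hCsum : ∑ k ∈ Aᶜ, p k = ((Aᶜ.filter (fun k => p k = 1)).card : ℝ) := by
    refine sum01_eq_card p Aᶜ fun k hk => ?_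
    rw [Finset.mem_compl] at hk
    exact hother k (fun h => hk (h ▸ hiA)) (fun h => hk (h ▸ hjA))
  set a := (B.filter (fun k => p k = 1)).card with ha_def
  set b := (Aᶜ.filter (fun k => p k = 1)).card with hb_def
  have hpij : p i + p j = (A.card : ℝ) - 1 + b - a := by
    rw [onFacet, hsumA, hBsum, hCsum] at hH
    linarith
  have hi0 : 0 < p i := lt_of_le_of_ne (hbox i).1 (Ne.symm hi.1)
  have hi1 : p i < 1 := lt_of_le_of_ne (hbox i).2 hi.2
  have hj0 : 0 < p j := lt_of_le_of_ne (hbox j).1 (Ne.symm hj.1)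
  have hj1 : p j < 1 := lt_of_le_of_ne (hbox j).2 hj.2
  have hkey : (A.card : ℤ) - 1 + b - a = 1 := by
    have h1 : (0 : ℝ) < ((A.card : ℤ) - 1 + b - a : ℤ) := by push_cast; linarith
    have h2 : (((A.card : ℤ) - 1 + b - a : ℤ) : ℝ) < 2 := by push_cast; linarith
    have h1' : (0 : ℤ) < (A.card : ℤ) - 1 + b - a := by exact_mod_cast h1
    have h2' : ((A.card : ℤ) - 1 + b - a) < 2 := by exact_mod_cast h2
    omega
  have haB : a ≤ B.card := Finset.card_filter_le B _
  have hb0 : b = 0 := by omega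
  have ha : a = A.card - 2 := by omega
  have hfilterB : B.filter (fun k => p k = 1) = B :=
    Finset.eq_of_subset_of_card_le (Finset.filter_subset _ _) (by omega)
  have hfilterC : Aᶜ.filter (fun k => p k = 1) = ∅ := Finset.card_eq_zero.mp hb0
  have hmain : Finset.univ.filter (fun k : Fin m => p k = 1) = B := by
    ext k
    simp only [Finset.mem_filter, Finset.mem_univ, true_and]
    constructor
    · intro hk1
      have hkA : k ∈ A := by
        by_contra hkA
        have : k ∈ Aᶜ.filter (fun k => p k = 1) := by
          simp [Finset.mem_filter, Finset.mem_compl, hkA, hk1]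
        rw [hfilterC] at this
        exact absurd this (Finset.notMem_empty k)
      have hki : k ≠ i := fun h => hi.2 (h ▸ hk1)
      have hkj : k ≠ j := fun h => hj.2 (h ▸ hk1)
      rw [hBdef, Finset.mem_sdiff]
      simp [hkA, hki, hkj]
    · intro hk
      rw [← hfilterB] at hk
      exact (Finset.mem_filter.mp hk).2
  have hcard : (Finset.univ.filter (fun k : Fin m => p k = 1)).card = A.card - 2 := by
    rw [hmain, hBcard]
  have hodd : Odd (A.card - 2) := by
    obtain ⟨t, ht⟩ := hA
    exact ⟨t - 1, by omega⟩
  have hpij1 : p i + p j = 1 := by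
    have haR : (a : ℝ) = (A.card : ℝ) - 2 := by
      rw [ha, Nat.cast_sub hA2]; norm_num
    rw [hpij, hb0, haR]; push_cast; ring
  exact ⟨hpij1, hcard, hcard ▸ hodd, hmain⟩
end

section
/- Let P ∈ [0,1]^m satisfy all demihypercube A-inequalities, have exactly two non-integral coordinates at indices i and j, and lie on H_A for some odd-cardinality A with i ∈ A and j ∉ A. Then p_i = p_j, the set I = {k : p_k = 1} has even cardinality |A| − 1, and A ∩ I = A \ {i}. -/
open Finset

open scoped Classical in
/-- O-facet: if `P` has exactly two non-integral coordinates `p_i, p_j` with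
`i ∈ A`, `j ∉ A` and lies on `H_A`, then `p_i = p_j`, `I = {k : p_k = 1}` has
even cardinality `|A| − 1`, and `A ∩ I = A \ {i}`. -/
theorem O_facet_structure (m : ℕ) (p : Fin m → ℝ) (hp : inDH m p)
    (i j : Fin m) (hij : i ≠ j)
    (hi : p i ≠ 0 ∧ p i ≠ 1) (hj : p j ≠ 0 ∧ p j ≠ 1)
    (hother : ∀ k, k ≠ i → k ≠ j → p k = 0 ∨ p k = 1)
    (A : Finset (Fin m)) (hA : Odd A.card) (hiA : i ∈ A) (hjA : j ∉ A)
    (hH : onFacet m p A) :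
    p i = p j ∧
      (Finset.univ.filter (fun k : Fin m => p k = 1)).card = A.card - 1 ∧
      Even (Finset.univ.filter (fun k : Fin m => p k = 1)).card ∧
      A ∩ (Finset.univ.filter (fun k : Fin m => p k = 1)) = A.erase i := by
  classical
  obtain ⟨hbound, _⟩ := hp
  have hi0 : 0 < p i := lt_of_le_of_ne (hbound i).1 (Ne.symm hi.1)
  have hi1 : p i < 1 := lt_of_le_of_ne (hbound i).2 hi.2
  have hj0 : 0 < p j := lt_of_le_of_ne (hbound j).1 (Ne.symm hj.1)
  have hj1 : p j < 1 := lt_of_le_of_ne (hbound j).2 hj.2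
  -- sum over 0/1-valued sets equals the count of ones
  have key : ∀ S : Finset (Fin m), (∀ k ∈ S, p k = 0 ∨ p k = 1) →
      ∑ k ∈ S, p k = ((S.filter (fun k => p k = 1)).card : ℝ) := by
    intro S hS
    rw [← Finset.sum_filter_add_sum_filter_not S (fun k => p k = 1)]
    have h1 : ∑ k ∈ S.filter (fun k => p k = 1), p k
        = ((S.filter (fun k => p k = 1)).card : ℝ) := by
      rw [Finset.sum_congr rfl (fun k hk => (Finset.mem_filter.mp hk).2),
        Finset.sum_const, nsmul_eq_mul, mul_one]
    have h2 : ∑ k ∈ S.filter (fun k => ¬ p k = 1), p k = 0 :=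
      Finset.sum_eq_zero (fun k hk => by
        rcases Finset.mem_filter.mp hk with ⟨hkS, hk1⟩
        rcases hS k hkS with h | h
        · exact h
        · exact absurd h hk1)
    rw [h1, h2, add_zero]
  have hjAc : j ∈ Aᶜ := Finset.mem_compl.mpr hjA
  have hAi01 : ∀ k ∈ A.erase i, p k = 0 ∨ p k = 1 := by
    intro k hk
    rcases Finset.mem_erase.mp hk with ⟨hki, hkA⟩
    exact hother k hki (fun h => hjA (h ▸ hkA))
  have hAc01 : ∀ k ∈ Aᶜ.erase j, p k = 0 ∨ p k = 1 := by
    intro k hk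
    rcases Finset.mem_erase.mp hk with ⟨hkj, hkAc⟩
    exact hother k (fun h => (Finset.mem_compl.mp hkAc) (h ▸ hiA)) hkj
  set a : ℕ := ((A.erase i).filter (fun k => p k = 1)).card with ha
  set b : ℕ := ((Aᶜ.erase j).filter (fun k => p k = 1)).card with hb
  have hsumA : ∑ k ∈ A, p k = p i + (a : ℝ) := by
    rw [← Finset.add_sum_erase A p hiA, key _ hAi01]
  have hsumC : ∑ k ∈ Aᶜ, p k = p j + (b : ℝ) := by
    rw [← Finset.add_sum_erase Aᶜ p hjAc, key _ hAc01]
  have heq : p i + (a : ℝ) = (A.card : ℝ) - 1 + (p j + (b : ℝ)) := by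
    rw [← hsumA, ← hsumC]; exact hH
  -- the integer (A.card - 1 + b - a) equals p i - p j ∈ (-1, 1)
  set n : ℤ := (A.card : ℤ) - 1 + (b : ℤ) - (a : ℤ) with hn
  have hnval : (n : ℝ) = p i - p j := by
    push_cast [hn]; linarith
  have hn0 : n = 0 := by
    have h1 : (n : ℝ) < 1 := by rw [hnval]; linarith
    have h2 : (-1 : ℝ) < (n : ℝ) := by rw [hnval]; linarith
    have h3 : n < 1 := by exact_mod_cast h1
    have h4 : (-1 : ℤ) < n := by exact_mod_cast h2
    omega
  have hpij : p i = p j := by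
    have : (n : ℝ) = 0 := by exact_mod_cast hn0
    rw [hnval] at this; linarith
  have hcard1 : 1 ≤ A.card := Finset.card_pos.mpr ⟨i, hiA⟩
  have hale : a ≤ A.card - 1 := by
    have := Finset.card_filter_le (A.erase i) (fun k => p k = 1)
    rwa [Finset.card_erase_of_mem hiA] at this
  have hb0 : b = 0 := by omega
  have haeq : a = A.card - 1 := by omega
  -- filter of A.erase i is all of A.erase i
  have hfull : (A.erase i).filter (fun k => p k = 1) = A.erase i := by
    apply Finset.eq_of_subset_of_card_le (Finset.filter_subset _ _)
    rw [← ha, haeq, Finset.card_erase_of_mem hiA]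
  have hempty : (Aᶜ.erase j).filter (fun k => p k = 1) = ∅ :=
    Finset.card_eq_zero.mp hb0
  have hIeq : Finset.univ.filter (fun k : Fin m => p k = 1) = A.erase i := by
    ext k
    simp only [Finset.mem_filter, Finset.mem_univ, true_and]
    constructor
    · intro hk1
      have hki : k ≠ i := fun h => hi.2 (h ▸ hk1)
      have hkj : k ≠ j := fun h => hj.2 (h ▸ hk1)
      by_cases hkA : k ∈ A
      · exact Finset.mem_erase.mpr ⟨hki, hkA⟩
      · exfalso
        have : k ∈ (Aᶜ.erase j).filter (fun k => p k = 1) :=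
          Finset.mem_filter.mpr ⟨Finset.mem_erase.mpr ⟨hkj, Finset.mem_compl.mpr hkA⟩, hk1⟩
        rw [hempty] at this
        exact absurd this (Finset.notMem_empty k)
    · intro hk
      rw [← hfull] at hk
      exact (Finset.mem_filter.mp hk).2
  refine ⟨hpij, ?_, ?_, ?_⟩
  · rw [hIeq, Finset.card_erase_of_mem hiA]
  · rw [hIeq, Finset.card_erase_of_mem hiA]
    exact Nat.Odd.sub_odd hA odd_one
  · rw [hIeq]
    exact Finset.inter_eq_right.mpr (Finset.erase_subset _ _)
end

section
/- If P ∈ [0,1]^m satisfies all demihypercube A-inequalities and has exactly two non-integral coordinates, then the parity of |{k : p_k = 1}| is odd if P lies on an S-facet and even if P lies on an O-facet; consequently P cannot lie simultaneously on an S-facet and an O-facet. -/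
open Finset

open scoped Classical in
/-- For a point with exactly two non-integral coordinates, `|{k : p_k = 1}|` is
odd if `P` lies on an S-facet and even if `P` lies on an O-facet; hence `P`
cannot lie on both an S-facet and an O-facet. -/
theorem S_O_facet_parity (m : ℕ) (p : Fin m → ℝ) (hp : inDH m p)
    (i j : Fin m) (hij : i ≠ j)
    (hi : p i ≠ 0 ∧ p i ≠ 1) (hj : p j ≠ 0 ∧ p j ≠ 1)
    (hother : ∀ k, k ≠ i → k ≠ j → p k = 0 ∨ p k = 1) :
    (∀ A : Finset (Fin m), Odd A.card → onFacet m p A →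
        ((i ∈ A ∧ j ∈ A) ∨ (i ∉ A ∧ j ∉ A)) →
        Odd (Finset.univ.filter (fun k : Fin m => p k = 1)).card) ∧
    (∀ A : Finset (Fin m), Odd A.card → onFacet m p A →
        ((i ∈ A ∧ j ∉ A) ∨ (i ∉ A ∧ j ∈ A)) →
        Even (Finset.univ.filter (fun k : Fin m => p k = 1)).card) ∧
    ¬ ((∃ A : Finset (Fin m), Odd A.card ∧ onFacet m p A ∧
          ((i ∈ A ∧ j ∈ A) ∨ (i ∉ A ∧ j ∉ A))) ∧
       (∃ B : Finset (Fin m), Odd B.card ∧ onFacet m p B ∧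
          ((i ∈ B ∧ j ∉ B) ∨ (i ∉ B ∧ j ∈ B)))) := by
  obtain ⟨hbox, _⟩ := hp
  have hi0 : 0 < p i := lt_of_le_of_ne (hbox i).1 (Ne.symm hi.1)
  have hi1 : p i < 1 := lt_of_le_of_ne (hbox i).2 hi.2
  have hj0 : 0 < p j := lt_of_le_of_ne (hbox j).1 (Ne.symm hj.1)
  have hj1 : p j < 1 := lt_of_le_of_ne (hbox j).2 hj.2
  set O : Finset (Fin m) := univ.filter (fun k => p k = 1) with hO
  have hiO : i ∉ O := by simp [hO, hi.2]
  have hjO : j ∉ O := by simp [hO, hj.2]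
  have step : ∀ S : Finset (Fin m), i ∉ S → j ∉ S →
      ∑ k ∈ S, p k = ((S ∩ O).card : ℝ) := by
    intro S hiS hjS
    have h1 : ∀ k ∈ S, p k = if p k = 1 then (1:ℝ) else 0 := by
      intro k hk
      rcases hother k (fun h => hiS (h ▸ hk)) (fun h => hjS (h ▸ hk)) with h | h
      · simp [h]
      · simp [h]
    rw [Finset.sum_congr rfl h1, Finset.sum_boole]
    have hfe : S.filter (fun k => p k = 1) = S ∩ O := by
      ext k; simp [hO, and_comm]
    rw [hfe]
  have hsum : ∀ A : Finset (Fin m),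
      ∑ k ∈ A, p k = (if i ∈ A then p i else 0) + (if j ∈ A then p j else 0)
        + ((A ∩ O).card : ℝ) := by
    intro A
    have hsplit := Finset.sum_inter_add_sum_sdiff A ({i, j} : Finset (Fin m)) p
    have hd : ∑ k ∈ A \ {i, j}, p k = (((A \ ({i,j} : Finset (Fin m))) ∩ O).card : ℝ) :=
      step _ (by simp) (by simp)
    have hset : (A \ ({i,j} : Finset (Fin m))) ∩ O = A ∩ O := by
      ext k
      simp only [Finset.mem_inter, Finset.mem_sdiff, Finset.mem_insert, Finset.mem_singleton]
      constructor
      · rintro ⟨⟨hkA, _⟩, hkO⟩; exact ⟨hkA, hkO⟩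
      · rintro ⟨hkA, hkO⟩
        refine ⟨⟨hkA, ?_⟩, hkO⟩
        rintro (rfl | rfl)
        · exact hiO hkO
        · exact hjO hkO
    have hint : ∑ k ∈ A ∩ ({i, j} : Finset (Fin m)), p k
        = (if i ∈ A then p i else 0) + (if j ∈ A then p j else 0) := by
      rw [Finset.inter_comm, ← Finset.filter_mem_eq_inter, Finset.sum_filter,
        Finset.sum_insert (by simp [hij]), Finset.sum_singleton]
    rw [hset] at hd
    linarith [hsplit, hint, hd]
  have hmain : ∀ A : Finset (Fin m), onFacet m p A →
      (if i ∈ A then p i else 0) + (if j ∈ A then p j else 0) + ((A ∩ O).card : ℝ)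
      = (A.card : ℝ) - 1 + ((if i ∈ A then 0 else p i) + (if j ∈ A then 0 else p j)
          + ((Aᶜ ∩ O).card : ℝ)) := by
    intro A hF
    have hF' := hF
    unfold onFacet at hF'
    rw [hsum A, hsum Aᶜ] at hF'
    have e1 : (if i ∈ Aᶜ then p i else 0) = (if i ∈ A then 0 else p i) := by
      by_cases h : i ∈ A <;> simp [h]
    have e2 : (if j ∈ Aᶜ then p j else 0) = (if j ∈ A then 0 else p j) := by
      by_cases h : j ∈ A <;> simp [h]
    rw [e1, e2] at hF'
    exact hF'
  have hcard : ∀ A : Finset (Fin m), (A ∩ O).card + (Aᶜ ∩ O).card = O.card := by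
    intro A
    have h := Finset.card_inter_add_card_sdiff O A
    have h1 : A ∩ O = O ∩ A := Finset.inter_comm A O
    have h2 : Aᶜ ∩ O = O \ A := by
      ext k; simp [Finset.mem_sdiff, and_comm]
    rw [h1, h2, h]
  have part1 : ∀ A : Finset (Fin m), Odd A.card → onFacet m p A →
      ((i ∈ A ∧ j ∈ A) ∨ (i ∉ A ∧ j ∉ A)) → Odd O.card := by
    intro A hA hF hS
    have heq := hmain A hF
    have hc := hcard A
    rw [Nat.odd_iff] at hA ⊢
    rcases hS with ⟨h1, h2⟩ | ⟨h1, h2⟩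
    · simp only [h1, h2] at heq
      simp at heq
      have hz : (p i + p j : ℝ)
          = (((A.card : ℤ) - 1 - ((A ∩ O).card : ℤ) + ((Aᶜ ∩ O).card : ℤ) : ℤ) : ℝ) := by
        push_cast
        linarith
      have hzb : (0:ℤ) < (A.card : ℤ) - 1 - ((A ∩ O).card : ℤ) + ((Aᶜ ∩ O).card : ℤ) ∧
          (A.card : ℤ) - 1 - ((A ∩ O).card : ℤ) + ((Aᶜ ∩ O).card : ℤ) < 2 := by
        constructor <;> [exact_mod_cast (by rw [← hz]; linarith :
            (0:ℝ) < (((A.card : ℤ) - 1 - ((A ∩ O).card : ℤ) + ((Aᶜ ∩ O).card : ℤ) : ℤ) : ℝ));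
          exact_mod_cast (by rw [← hz]; linarith :
            ((((A.card : ℤ) - 1 - ((A ∩ O).card : ℤ) + ((Aᶜ ∩ O).card : ℤ) : ℤ) : ℝ) < 2))]
      omega
    · simp only [h1, h2] at heq
      simp at heq
      have hz : (p i + p j : ℝ)
          = ((((A ∩ O).card : ℤ) - ((Aᶜ ∩ O).card : ℤ) - (A.card : ℤ) + 1 : ℤ) : ℝ) := by
        push_cast
        linarith
      have hzb : (0:ℤ) < ((A ∩ O).card : ℤ) - ((Aᶜ ∩ O).card : ℤ) - (A.card : ℤ) + 1 ∧
          ((A ∩ O).card : ℤ) - ((Aᶜ ∩ O).card : ℤ) - (A.card : ℤ) + 1 < 2 := by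
        constructor <;> [exact_mod_cast (by rw [← hz]; linarith :
            (0:ℝ) < ((((A ∩ O).card : ℤ) - ((Aᶜ ∩ O).card : ℤ) - (A.card : ℤ) + 1 : ℤ) : ℝ));
          exact_mod_cast (by rw [← hz]; linarith :
            (((((A ∩ O).card : ℤ) - ((Aᶜ ∩ O).card : ℤ) - (A.card : ℤ) + 1 : ℤ) : ℝ) < 2))]
      omega
  have part2 : ∀ A : Finset (Fin m), Odd A.card → onFacet m p A →
      ((i ∈ A ∧ j ∉ A) ∨ (i ∉ A ∧ j ∈ A)) → Even O.card := by
    intro A hA hF hS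
    have heq := hmain A hF
    have hc := hcard A
    rw [Nat.odd_iff] at hA
    rw [Nat.even_iff]
    rcases hS with ⟨h1, h2⟩ | ⟨h1, h2⟩
    · simp only [h1, h2] at heq
      simp at heq
      have hz : (p i - p j : ℝ)
          = (((A.card : ℤ) - 1 - ((A ∩ O).card : ℤ) + ((Aᶜ ∩ O).card : ℤ) : ℤ) : ℝ) := by
        push_cast
        linarith
      have hzb : (-1:ℤ) < (A.card : ℤ) - 1 - ((A ∩ O).card : ℤ) + ((Aᶜ ∩ O).card : ℤ) ∧
          (A.card : ℤ) - 1 - ((A ∩ O).card : ℤ) + ((Aᶜ ∩ O).card : ℤ) < 1 := by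
        constructor <;> [exact_mod_cast (by rw [← hz]; linarith :
            (-1:ℝ) < (((A.card : ℤ) - 1 - ((A ∩ O).card : ℤ) + ((Aᶜ ∩ O).card : ℤ) : ℤ) : ℝ));
          exact_mod_cast (by rw [← hz]; linarith :
            ((((A.card : ℤ) - 1 - ((A ∩ O).card : ℤ) + ((Aᶜ ∩ O).card : ℤ) : ℤ) : ℝ) < 1))]
      omega
    · simp only [h1, h2] at heq
      simp at heq
      have hz : (p j - p i : ℝ)
          = (((A.card : ℤ) - 1 - ((A ∩ O).card : ℤ) + ((Aᶜ ∩ O).card : ℤ) : ℤ) : ℝ) := by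
        push_cast
        linarith
      have hzb : (-1:ℤ) < (A.card : ℤ) - 1 - ((A ∩ O).card : ℤ) + ((Aᶜ ∩ O).card : ℤ) ∧
          (A.card : ℤ) - 1 - ((A ∩ O).card : ℤ) + ((Aᶜ ∩ O).card : ℤ) < 1 := by
        constructor <;> [exact_mod_cast (by rw [← hz]; linarith :
            (-1:ℝ) < (((A.card : ℤ) - 1 - ((A ∩ O).card : ℤ) + ((Aᶜ ∩ O).card : ℤ) : ℤ) : ℝ));
          exact_mod_cast (by rw [← hz]; linarith :
            ((((A.card : ℤ) - 1 - ((A ∩ O).card : ℤ) + ((Aᶜ ∩ O).card : ℤ) : ℤ) : ℝ) < 1))]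
      omega
  refine ⟨part1, part2, ?_⟩
  rintro ⟨⟨A, hA1, hA2, hA3⟩, ⟨B, hB1, hB2, hB3⟩⟩
  exact (Nat.not_odd_iff_even.mpr (part2 B hB1 hB2 hB3)) (part1 A hA1 hA2 hA3)
end

section
/- Let P ∈ [0,1]^m satisfy all demihypercube A-inequalities with exactly two non-integral coordinates p_i, p_j, both lying in sets with respect to which P lies on S-facets. Then p_i + p_j = 1. -/
open Finset

/-- If `P` has exactly two non-integral coordinates `p_i, p_j` and lies on an
S-facet (a facet hyperplane `H_A` with `i, j` both in `A` or both outside `A`),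
then `p_i + p_j = 1`. -/
theorem S_facet_sum_one (m : ℕ) (p : Fin m → ℝ) (hp : inDH m p)
    (i j : Fin m) (hij : i ≠ j)
    (hi : p i ≠ 0 ∧ p i ≠ 1) (hj : p j ≠ 0 ∧ p j ≠ 1)
    (hother : ∀ k, k ≠ i → k ≠ j → p k = 0 ∨ p k = 1)
    (hS : ∃ A : Finset (Fin m), Odd A.card ∧ onFacet m p A ∧
        ((i ∈ A ∧ j ∈ A) ∨ (i ∉ A ∧ j ∉ A))) :
    p i + p j = 1 := by
  obtain ⟨A, hodd, hfac, hcase⟩ := hS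
  obtain ⟨hbox, _⟩ := hp
  have hi0 : 0 < p i := lt_of_le_of_ne (hbox i).1 (Ne.symm hi.1)
  have hi1 : p i < 1 := lt_of_le_of_ne (hbox i).2 hi.2
  have hj0 : 0 < p j := lt_of_le_of_ne (hbox j).1 (Ne.symm hj.1)
  have hj1 : p j < 1 := lt_of_le_of_ne (hbox j).2 hj.2
  -- integer-valued surrogate on the other coordinates
  have hint : ∀ S : Finset (Fin m), i ∉ S → j ∉ S → ∃ n : ℤ, ∑ k ∈ S, p k = (n : ℝ) := by
    intro S hiS hjS
    refine ⟨∑ k ∈ S, if p k = 1 then 1 else 0, ?_⟩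
    push_cast
    refine Finset.sum_congr rfl fun k hk => ?_
    have hki : k ≠ i := fun h => hiS (h ▸ hk)
    have hkj : k ≠ j := fun h => hjS (h ▸ hk)
    rcases hother k hki hkj with h | h <;> simp [h]
  unfold onFacet at hfac
  have key : ∃ N : ℤ, p i + p j = (N : ℝ) := by
    rcases hcase with ⟨hiA, hjA⟩ | ⟨hiA, hjA⟩
    · have hjA' : j ∈ A.erase i := Finset.mem_erase.2 ⟨Ne.symm hij, hjA⟩
      have hsplit : ∑ k ∈ A, p k = p i + (p j + ∑ k ∈ (A.erase i).erase j, p k) := by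
        rw [← Finset.add_sum_erase _ _ hiA, ← Finset.add_sum_erase _ _ hjA']
      obtain ⟨c, hc⟩ := hint ((A.erase i).erase j)
        (fun h => (Finset.mem_erase.1 (Finset.mem_of_mem_erase h)).1 rfl)
        (fun h => (Finset.mem_erase.1 h).1 rfl)
      obtain ⟨d, hd⟩ := hint Aᶜ (by simpa using hiA) (by simpa using hjA)
      refine ⟨(A.card : ℤ) - 1 + d - c, ?_⟩
      rw [hsplit, hc, hd] at hfac
      push_cast
      linarith
    · have hiA' : i ∈ Aᶜ := Finset.mem_compl.2 hiA
      have hjA' : j ∈ Aᶜ.erase i := Finset.mem_erase.2 ⟨Ne.symm hij, Finset.mem_compl.2 hjA⟩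
      have hsplit : ∑ k ∈ Aᶜ, p k = p i + (p j + ∑ k ∈ (Aᶜ.erase i).erase j, p k) := by
        rw [← Finset.add_sum_erase _ _ hiA', ← Finset.add_sum_erase _ _ hjA']
      obtain ⟨c, hc⟩ := hint ((Aᶜ.erase i).erase j)
        (fun h => (Finset.mem_erase.1 (Finset.mem_of_mem_erase h)).1 rfl)
        (fun h => (Finset.mem_erase.1 h).1 rfl)
      obtain ⟨d, hd⟩ := hint A hiA hjA
      refine ⟨d - (A.card : ℤ) + 1 - c, ?_⟩
      rw [hsplit, hc, hd] at hfac
      push_cast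
      linarith
  obtain ⟨N, hN⟩ := key
  have h0 : (0 : ℝ) < (N : ℝ) := by rw [← hN]; linarith
  have h2 : (N : ℝ) < 2 := by rw [← hN]; linarith
  have h0' : (0 : ℤ) < N := by exact_mod_cast h0
  have h2' : N < 2 := by exact_mod_cast h2
  have : N = 1 := by omega
  rw [hN, this]; norm_num
end

section
/- The polytope Δ'(m) = {x' ∈ R^{3×m} : 0 ≤ x'_{ij} ≤ 1, all row A-inequalities and all column B-inequalities hold} is an integral polytope: every point of Δ'(m) that is not in {0,1}^{3m} is a convex combination P = (Q+R)/2 of two distinct points Q, R ∈ Δ'(m), hence is not a vertex. -/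
open Finset

open scoped symmDiff Classical

namespace DeltaAux

variable {n : ℕ}

noncomputable def slackV (v : Fin n → ℝ) (A : Finset (Fin n)) : ℝ :=
  (A.card : ℝ) - 1 + ∑ j ∈ Aᶜ, v j - ∑ j ∈ A, v j

noncomputable def FrV (v : Fin n → ℝ) : Finset (Fin n) :=
  univ.filter (fun j => v j ≠ 0 ∧ v j ≠ 1)

noncomputable def yV (v : Fin n → ℝ) (A : Finset (Fin n)) (j : Fin n) : ℝ :=
  if j ∈ A then 1 - v j else v j

noncomputable def etaV (A : Finset (Fin n)) (j : Fin n) : ℝ := if j ∈ A then 1 else -1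

noncomputable def onesV (v : Fin n → ℝ) : Finset (Fin n) := univ.filter (fun j => v j = 1)

lemma mem_FrV {v : Fin n → ℝ} {j : Fin n} : j ∈ FrV v ↔ v j ≠ 0 ∧ v j ≠ 1 := by
  simp [FrV]

lemma etaV_pm (A : Finset (Fin n)) (j : Fin n) : etaV A j = 1 ∨ etaV A j = -1 := by
  unfold etaV; split <;> simp

lemma sum_eta_mul (A : Finset (Fin n)) (w : Fin n → ℝ) :
    ∑ j, etaV A j * w j = ∑ j ∈ A, w j - ∑ j ∈ Aᶜ, w j := by
  have h1 : univ.filter (fun j => j ∈ A) = A := by simp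
  have h2 : univ.filter (fun j => ¬ j ∈ A) = Aᶜ := by ext j; simp
  rw [← Finset.sum_filter_add_sum_filter_not univ (fun j => j ∈ A)]
  rw [h1, h2]
  have e1 : ∑ j ∈ A, etaV A j * w j = ∑ j ∈ A, w j :=
    Finset.sum_congr rfl (fun j hj => by simp [etaV, hj])
  have e2 : ∑ j ∈ Aᶜ, etaV A j * w j = ∑ j ∈ Aᶜ, (- w j) :=
    Finset.sum_congr rfl (fun j hj => by
      have : j ∉ A := by simpa using hj
      simp [etaV, this])
  rw [e1, e2, Finset.sum_neg_distrib]
  ring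

lemma slack_eq_ysum (v : Fin n → ℝ) (A : Finset (Fin n)) :
    slackV v A = ∑ j, yV v A j - 1 := by
  have h1 : univ.filter (fun j => j ∈ A) = A := by simp
  have h2 : univ.filter (fun j => ¬ j ∈ A) = Aᶜ := by ext j; simp
  have : ∑ j, yV v A j = ∑ j ∈ A, (1 - v j) + ∑ j ∈ Aᶜ, v j := by
    rw [← Finset.sum_filter_add_sum_filter_not univ (fun j => j ∈ A), h1, h2]
    congr 1
    · exact Finset.sum_congr rfl (fun j hj => by simp [yV, hj])
    · exact Finset.sum_congr rfl (fun j hj => by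
        have : j ∉ A := by simpa using hj
        simp [yV, this])
  rw [this, Finset.sum_sub_distrib]
  simp [slackV]
  ring

variable {v : Fin n → ℝ}

lemma y_nonneg (hb : ∀ j, 0 ≤ v j ∧ v j ≤ 1) (A : Finset (Fin n)) (j : Fin n) :
    0 ≤ yV v A j := by
  unfold yV; split
  · linarith [(hb j).2]
  · exact (hb j).1

lemma y_pos (hb : ∀ j, 0 ≤ v j ∧ v j ≤ 1) {A : Finset (Fin n)} {j : Fin n}
    (hj : j ∈ FrV v) : 0 < yV v A j := by
  obtain ⟨h0, h1⟩ := mem_FrV.mp hj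
  unfold yV; split
  · have := (hb j).2; cases lt_or_eq_of_le this with
    | inl h => linarith
    | inr h => exact absurd h h1
  · have := (hb j).1; cases lt_or_eq_of_le this with
    | inl h => linarith
    | inr h => exact absurd h.symm h0

/-- a fully integral parity vector has an even number of ones -/
lemma even_ones (hs : ∀ A : Finset (Fin n), Odd A.card → 0 ≤ slackV v A)
    (hint : FrV v = ∅) : Even (onesV v).card := by
  by_contra hodd
  rw [Nat.not_even_iff_odd] at hodd
  have h := hs (onesV v) hodd
  have hzero : ∀ j, v j = 0 ∨ v j = 1 := by
    intro j
    by_contra hc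
    push_neg at hc
    have : j ∈ FrV v := mem_FrV.mpr hc
    simp [hint] at this
  have e1 : ∑ j ∈ onesV v, v j = (onesV v).card := by
    rw [show ∑ j ∈ onesV v, v j = ∑ j ∈ onesV v, (1:ℝ) from
      Finset.sum_congr rfl (fun j hj => (mem_filter.mp hj).2)]
    simp
  have e2 : ∑ j ∈ (onesV v)ᶜ, v j = 0 := by
    apply Finset.sum_eq_zero
    intro j hj
    have hj' : j ∉ onesV v := by simpa using hj
    rcases hzero j with h0 | h1
    · exact h0
    · exact absurd (by simp [onesV, h1]) hj'
  rw [slackV, e1, e2] at h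
  linarith

/-- the fractional support cannot be a singleton -/
lemma frac_card_ne_one (hb : ∀ j, 0 ≤ v j ∧ v j ≤ 1)
    (hs : ∀ A : Finset (Fin n), Odd A.card → 0 ≤ slackV v A)
    (hne : (FrV v).Nonempty) : 2 ≤ (FrV v).card := by
  by_contra hc
  push_neg at hc
  interval_cases h : (FrV v).card
  · rw [Finset.card_eq_zero] at h
    rw [h] at hne
    simp at hne
  · obtain ⟨j0, hj0⟩ := Finset.card_eq_one.mp h
    have hj0mem : j0 ∈ FrV v := by rw [hj0]; simp
    obtain ⟨hj00, hj01⟩ := mem_FrV.mp hj0mem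
    have hint : ∀ j, j ≠ j0 → (v j = 0 ∨ v j = 1) := by
      intro j hj
      by_contra hcc
      push_neg at hcc
      have : j ∈ FrV v := mem_FrV.mpr hcc
      rw [hj0] at this; simp at this; exact hj this
    have hj0notone : j0 ∉ onesV v := by simp [onesV, hj01]
    rcases Nat.even_or_odd (onesV v).card with hev | hod
    · -- use A = insert j0 (onesV v)
      have hodd : Odd (insert j0 (onesV v)).card := by
        rw [Finset.card_insert_of_notMem hj0notone]
        exact Even.add_one hev
      have h2 := hs _ hodd
      rw [slack_eq_ysum] at h2
      have hsum : ∑ j, yV v (insert j0 (onesV v)) j = yV v (insert j0 (onesV v)) j0 := by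
        apply Finset.sum_eq_single_of_mem j0 (mem_univ j0)
        intro b _ hbne
        rcases hint b hbne with h0 | h1
        · have hb' : b ∉ insert j0 (onesV v) := by
            simp only [Finset.mem_insert]
            push_neg
            exact ⟨hbne, by simp [onesV, h0]⟩
          simp [yV, hb', h0]
        · have hb' : b ∈ insert j0 (onesV v) := by simp [onesV, h1]
          simp [yV, hb', h1]
      rw [hsum] at h2
      have : yV v (insert j0 (onesV v)) j0 = 1 - v j0 := by
        simp [yV]
      rw [this] at h2
      have := (hb j0).1
      have : v j0 = 0 := by linarith
      exact hj00 this
    · have h2 := hs _ hod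
      rw [slack_eq_ysum] at h2
      have hsum : ∑ j, yV v (onesV v) j = yV v (onesV v) j0 := by
        apply Finset.sum_eq_single_of_mem j0 (mem_univ j0)
        intro b _ hbne
        rcases hint b hbne with h0 | h1
        · have hb' : b ∉ onesV v := by simp [onesV, h0]
          simp [yV, hb', h0]
        · have hb' : b ∈ onesV v := by simp [onesV, h1]
          simp [yV, hb', h1]
      rw [hsum] at h2
      have : yV v (onesV v) j0 = v j0 := by simp [yV, hj0notone]
      rw [this] at h2
      have := (hb j0).2
      have : v j0 = 1 := by linarith
      exact hj01 this

section Tight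

variable (hb : ∀ j, 0 ≤ v j ∧ v j ≤ 1)
variable {A A' : Finset (Fin n)}

include hb

/-- at a tight constraint, integral ones belong to A and zeros don't -/
lemma tight_align (hne : (FrV v).Nonempty) (ht : slackV v A = 0) :
    (∀ j, v j = 1 → j ∈ A) ∧ (∀ j, v j = 0 → j ∉ A) := by
  obtain ⟨p, hp⟩ := hne
  have hysum : ∑ j, yV v A j = 1 := by
    have := slack_eq_ysum v A
    rw [ht] at this
    linarith
  have hkey : ∀ j, yV v A j = 1 → False := by
    intro j hj1
    have hjp : j ≠ p := by
      intro h
      subst h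
      simp only [mem_FrV] at hp
      unfold yV at hj1
      split at hj1
      · exact hp.1 (by linarith)
      · exact hp.2 hj1
    have hsum2 : yV v A j + yV v A p ≤ ∑ i, yV v A i :=
      Finset.add_le_sum (fun i _ => y_nonneg hb A i) (mem_univ j) (mem_univ p) hjp
    have := y_pos hb (A := A) hp
    rw [hysum, hj1] at hsum2
    linarith
  constructor
  · intro j hj
    by_contra hnot
    exact hkey j (by simp [yV, hnot, hj])
  · intro j hj hmem
    exact hkey j (by simp [yV, hmem, hj])

lemma tight_frac_ysum (hne : (FrV v).Nonempty) (ht : slackV v A = 0) :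
    ∑ j ∈ FrV v, yV v A j = 1 := by
  obtain ⟨h1, h0⟩ := tight_align hb hne ht
  have hysum : ∑ j, yV v A j = 1 := by
    have := slack_eq_ysum v A
    rw [ht] at this
    linarith
  have hcompl : ∑ j ∈ (FrV v)ᶜ, yV v A j = 0 := by
    apply Finset.sum_eq_zero
    intro j hj
    have hjint : v j = 0 ∨ v j = 1 := by
      by_contra hc
      push_neg at hc
      have : j ∈ FrV v := mem_FrV.mpr hc
      simp at hj
      exact hj this
    rcases hjint with hz | ho
    · simp [yV, h0 j hz, hz]
    · simp [yV, h1 j ho, ho]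
  have := Finset.sum_add_sum_compl (FrV v) (yV v A)
  rw [hcompl] at this
  linarith [hysum, this]

/-- two tight sets agree on the fractional support, up to complement -/
lemma tight_dichotomy (hne : (FrV v).Nonempty)
    (hA : Odd A.card) (hA' : Odd A'.card)
    (ht : slackV v A = 0) (ht' : slackV v A' = 0) :
    (∀ j ∈ FrV v, (j ∈ A ↔ j ∈ A')) ∨ (∀ j ∈ FrV v, (j ∈ A ↔ j ∉ A')) := by
  obtain ⟨hone, hzero⟩ := tight_align hb hne ht
  obtain ⟨hone', hzero'⟩ := tight_align hb hne ht'
  set D := A ∆ A' with hD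
  have hDsub : D ⊆ FrV v := by
    intro j hj
    rw [hD, Finset.mem_symmDiff] at hj
    by_contra hjf
    have hjint : v j = 0 ∨ v j = 1 := by
      by_contra hc
      push_neg at hc
      exact hjf (mem_FrV.mpr hc)
    rcases hjint with hz | ho
    · rcases hj with ⟨h1, _⟩ | ⟨h1, _⟩
      · exact hzero j hz h1
      · exact hzero' j hz h1
    · rcases hj with ⟨_, h2⟩ | ⟨_, h2⟩
      · exact h2 (hone' j ho)
      · exact h2 (hone j ho)
  have hDeven : Even D.card := by
    have e1 : D ∪ (A ∩ A') = A ∪ A' := by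
      have := symmDiff_sup_inf A A'
      rw [hD]
      simpa using this
    have e2 : Disjoint D (A ∩ A') := by
      have := disjoint_symmDiff_inf A A'
      rw [hD]
      simpa using this
    have e3 : D.card + (A ∩ A').card = (A ∪ A').card := by
      rw [← Finset.card_union_of_disjoint e2, e1]
    have e4 : (A ∪ A').card + (A ∩ A').card = A.card + A'.card :=
      Finset.card_union_add_card_inter A A'
    obtain ⟨a, ha⟩ := hA
    obtain ⟨b, hb'⟩ := hA'
    rw [Nat.even_iff]
    omega
  have hy1 : ∑ j ∈ FrV v, yV v A j = 1 := tight_frac_ysum hb hne ht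
  have hy2 : ∑ j ∈ FrV v, yV v A' j = 1 := tight_frac_ysum hb hne ht'
  have hsplit1 : ∑ j ∈ FrV v \ D, yV v A j + ∑ j ∈ D, yV v A j = 1 := by
    rw [Finset.sum_sdiff hDsub]; exact hy1
  have hDval : ∀ j ∈ D, yV v A' j = 1 - yV v A j := by
    intro j hj
    rw [hD, Finset.mem_symmDiff] at hj
    rcases hj with ⟨h1, h2⟩ | ⟨h1, h2⟩
    · simp [yV, h1, h2]
    · simp [yV, h1, h2]
  have hRval : ∀ j ∈ FrV v \ D, yV v A' j = yV v A j := by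
    intro j hj
    have hj' : j ∉ D := (Finset.mem_sdiff.mp hj).2
    rw [hD, Finset.mem_symmDiff] at hj'
    push_neg at hj'
    by_cases hmem : j ∈ A
    · have : j ∈ A' := hj'.1 hmem
      simp [yV, hmem, this]
    · have : j ∉ A' := fun hmem' => hmem (hj'.2 hmem')
      simp [yV, hmem, this]
  have hsplit2 : ∑ j ∈ FrV v \ D, yV v A j + ∑ j ∈ D, (1 - yV v A j) = 1 := by
    rw [← Finset.sum_congr rfl hRval, ← Finset.sum_congr rfl hDval, Finset.sum_sdiff hDsub]
    exact hy2
  have hDsum : 2 * ∑ j ∈ D, yV v A j = D.card := by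
    have : ∑ j ∈ D, (1 - yV v A j) = D.card - ∑ j ∈ D, yV v A j := by
      rw [Finset.sum_sub_distrib]; simp
    rw [this] at hsplit2
    linarith
  by_cases hDemp : D = ∅
  · left
    intro j hj
    have : j ∉ D := by rw [hDemp]; simp
    rw [hD, Finset.mem_symmDiff] at this
    push_neg at this
    exact ⟨fun h => this.1 h, fun h => this.2 h⟩
  · have hDpos : 2 ≤ D.card := by
      have : D.card ≠ 0 := by
        simpa [Finset.card_eq_zero] using hDemp
      rw [Nat.even_iff] at hDeven
      omega
    have hDsum1 : 1 ≤ ∑ j ∈ D, yV v A j := by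
      have : (2:ℝ) ≤ D.card := by exact_mod_cast hDpos
      linarith
    have hDeq : D = FrV v := by
      by_contra hne'
      obtain ⟨j0, hj0F, hj0D⟩ := Finset.exists_of_ssubset (ssubset_of_subset_of_ne hDsub hne')
      have hj0mem : j0 ∈ FrV v \ D := Finset.mem_sdiff.mpr ⟨hj0F, hj0D⟩
      have hpos := y_pos hb (A := A) hj0F
      have hrest : yV v A j0 ≤ ∑ j ∈ FrV v \ D, yV v A j :=
        Finset.single_le_sum (fun i _ => y_nonneg hb A i) hj0mem
      linarith
    right
    intro j hj
    rw [← hDeq] at hj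
    rw [hD, Finset.mem_symmDiff] at hj
    constructor
    · intro h
      rcases hj with ⟨_, h2⟩ | ⟨_, h2⟩
      · exact h2
      · exact absurd h h2
    · intro h
      rcases hj with ⟨h1, _⟩ | ⟨h1, _⟩
      · exact h1
      · exact absurd h1 h

/-- pair relation: with exactly two fractional coordinates, the sign pattern of a tight
set on them is determined by the parity of the number of ones -/
lemma tight_pair {p q : Fin n} (hpq : p ≠ q) (hF : FrV v = {p, q})
    (hA : Odd A.card) (ht : slackV v A = 0) :
    etaV A p * etaV A q = (-1:ℝ) ^ ((onesV v).card + 1) := by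
  have hne : (FrV v).Nonempty := by rw [hF]; exact ⟨p, by simp⟩
  obtain ⟨hone, hzero⟩ := tight_align hb hne ht
  have hAeq : A = onesV v ∪ (A ∩ {p, q}) := by
    ext j
    constructor
    · intro hj
      by_cases h1 : v j = 1
      · exact Finset.mem_union_left _ (by simp [onesV, h1])
      · by_cases h0 : v j = 0
        · exact absurd hj (hzero j h0)
        · have : j ∈ FrV v := mem_FrV.mpr ⟨h0, h1⟩
          rw [hF] at this
          exact Finset.mem_union_right _ (Finset.mem_inter.mpr ⟨hj, this⟩)
    · intro hj
      rcases Finset.mem_union.mp hj with h | h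
      · exact hone j (mem_filter.mp h).2
      · exact (Finset.mem_inter.mp h).1
  have hdisj : Disjoint (onesV v) (A ∩ {p, q}) := by
    rw [Finset.disjoint_left]
    intro j hj hj2
    have h1 : v j = 1 := (mem_filter.mp hj).2
    have : j ∈ FrV v := by rw [hF]; exact (Finset.mem_inter.mp hj2).2
    exact (mem_FrV.mp this).2 h1
  have hcard : A.card = (onesV v).card + (A ∩ {p, q}).card := by
    conv_lhs => rw [hAeq]
    exact Finset.card_union_of_disjoint hdisj
  have hfil : A ∩ {p, q} = ({p, q} : Finset (Fin n)).filter (fun j => j ∈ A) := by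
    rw [Finset.filter_mem_eq_inter, Finset.inter_comm]
  by_cases hp : p ∈ A <;> by_cases hq : q ∈ A
  · have : (A ∩ {p, q}).card = 2 := by
      rw [hfil, Finset.filter_true_of_mem (by intro j hj; simp at hj; rcases hj with h|h <;> subst h <;> assumption)]
      simp [hpq]
    rw [this] at hcard
    obtain ⟨a, ha⟩ := hA
    have : Even ((onesV v).card + 1) := by rw [Nat.even_iff]; omega
    rw [Even.neg_one_pow this]
    simp [etaV, hp, hq]
  · have : (A ∩ {p, q}).card = 1 := by
      rw [hfil]
      rw [show ({p,q} : Finset (Fin n)).filter (fun j => j ∈ A) = {p} by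
        ext j; simp; constructor
        · rintro ⟨h|h, hA'⟩
          · exact h
          · subst h; exact absurd hA' hq
        · intro h; subst h; exact ⟨Or.inl rfl, hp⟩]
      simp
    rw [this] at hcard
    obtain ⟨a, ha⟩ := hA
    have : Odd ((onesV v).card + 1) := by rw [Nat.odd_iff]; omega
    rw [Odd.neg_one_pow this]
    simp [etaV, hp, hq]
  · have : (A ∩ {p, q}).card = 1 := by
      rw [hfil]
      rw [show ({p,q} : Finset (Fin n)).filter (fun j => j ∈ A) = {q} by
        ext j; simp; constructor
        · rintro ⟨h|h, hA'⟩
          · subst h; exact absurd hA' hp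
          · exact h
        · intro h; subst h; exact ⟨Or.inr rfl, hq⟩]
      simp
    rw [this] at hcard
    obtain ⟨a, ha⟩ := hA
    have : Odd ((onesV v).card + 1) := by rw [Nat.odd_iff]; omega
    rw [Odd.neg_one_pow this]
    simp [etaV, hp, hq]
  · have : (A ∩ {p, q}).card = 0 := by
      rw [hfil]
      rw [show ({p,q} : Finset (Fin n)).filter (fun j => j ∈ A) = ∅ by
        ext j; simp; rintro (h|h) <;> subst h <;> assumption]
      simp
    rw [this] at hcard
    obtain ⟨a, ha⟩ := hA
    have : Even ((onesV v).card + 1) := by rw [Nat.even_iff]; omega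
    rw [Even.neg_one_pow this]
    simp [etaV, hp, hq]

end Tight

variable {m : ℕ} (x : Fin 3 → Fin m → ℝ)

noncomputable def colv (j : Fin m) : Fin 3 → ℝ := fun i => x i j

noncomputable def FrT : Finset (Fin 3 × Fin m) :=
  univ.filter (fun p => x p.1 p.2 ≠ 0 ∧ x p.1 p.2 ≠ 1)

lemma mem_FrT {p : Fin 3 × Fin m} : p ∈ FrT x ↔ x p.1 p.2 ≠ 0 ∧ x p.1 p.2 ≠ 1 := by
  simp [FrT]

lemma row_col_mem {i : Fin 3} {j : Fin m} :
    (j ∈ FrV (x i) ↔ (i, j) ∈ FrT x) ∧ (i ∈ FrV (colv x j) ↔ (i, j) ∈ FrT x) := by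
  simp [mem_FrV, mem_FrT, colv]

noncomputable def k1 (i : Fin 3) : ℕ := (onesV (x i)).card
noncomputable def c1 (j : Fin m) : ℕ := (onesV (colv x j)).card

/-- mod 2 indicator of ones -/
noncomputable def N2 (i : Fin 3) (j : Fin m) : ZMod 2 := if x i j = 1 then 1 else 0

lemma k1_cast (i : Fin 3) : ((k1 x i : ℕ) : ZMod 2) = ∑ j, N2 x i j := by
  unfold k1 onesV N2
  rw [Finset.card_filter]
  push_cast
  apply Finset.sum_congr rfl
  intro j _
  split <;> simp

lemma c1_cast (j : Fin m) : ((c1 x j : ℕ) : ZMod 2) = ∑ i, N2 x i j := by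
  unfold c1 onesV N2 colv
  rw [Finset.card_filter]
  push_cast
  apply Finset.sum_congr rfl
  intro i _
  split <;> simp

lemma even_cast {k : ℕ} (h : Even k) : (k : ZMod 2) = 0 := by
  rw [ZMod.natCast_eq_zero_iff, ← even_iff_two_dvd]
  exact h

lemma cast_even {k : ℕ} (h : (k : ZMod 2) = 0) : Even k := by
  rwa [ZMod.natCast_eq_zero_iff, ← even_iff_two_dvd] at h

/-- The global parity lemma. -/
lemma parity_lemma
    (hrow : ∀ i (A : Finset (Fin m)), Odd A.card → 0 ≤ slackV (x i) A)
    (hcol : ∀ j (B : Finset (Fin 3)), Odd B.card → 0 ≤ slackV (colv x j) B)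
    (I : Finset (Fin 3)) (J : Finset (Fin m))
    (hI : ∀ i, i ∉ I → FrV (x i) = ∅)
    (hJ : ∀ j, j ∉ J → FrV (colv x j) = ∅) :
    Even (∑ i ∈ I, k1 x i + ∑ j ∈ J, c1 x j) := by
  have hrow0 : ∀ i, i ∉ I → ∑ j, N2 x i j = 0 := by
    intro i hi
    rw [← k1_cast]
    exact even_cast (even_ones (hrow i) (hI i hi))
  have hcol0 : ∀ j, j ∉ J → ∑ i, N2 x i j = 0 := by
    intro j hj
    rw [← c1_cast]
    exact even_cast (even_ones (hcol j) (hJ j hj))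
  apply cast_even
  push_cast
  rw [Finset.sum_congr rfl (fun i (_ : i ∈ I) => k1_cast x i),
      Finset.sum_congr rfl (fun j (_ : j ∈ J) => c1_cast x j)]
  -- expand into four blocks
  have two0 : ∀ a : ZMod 2, a + a = 0 := by decide
  have z2 : ∀ u v : ZMod 2, u + v = 0 → u = v := by decide
  have zabc : ∀ a b c : ZMod 2, (a + b) + (a + c) = b + c := by decide
  have splitJ : ∀ i : Fin 3, ∑ j, N2 x i j = ∑ j ∈ J, N2 x i j + ∑ j ∈ Jᶜ, N2 x i j := by
    intro i
    rw [Finset.sum_add_sum_compl]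
  have splitI : ∀ j : Fin m, ∑ i, N2 x i j = ∑ i ∈ I, N2 x i j + ∑ i ∈ Iᶜ, N2 x i j := by
    intro j
    rw [Finset.sum_add_sum_compl]
  have hbeq : ∑ i ∈ I, ∑ j ∈ Jᶜ, N2 x i j = ∑ j ∈ Jᶜ, ∑ i ∈ Iᶜ, N2 x i j := by
    rw [Finset.sum_comm]
    apply Finset.sum_congr rfl
    intro j hj
    apply z2
    rw [Finset.sum_add_sum_compl]
    exact hcol0 j (by simpa using hj)
  have hceq : ∑ j ∈ J, ∑ i ∈ Iᶜ, N2 x i j = ∑ i ∈ Iᶜ, ∑ j ∈ Jᶜ, N2 x i j := by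
    rw [Finset.sum_comm]
    apply Finset.sum_congr rfl
    intro i hi
    apply z2
    rw [Finset.sum_add_sum_compl]
    exact hrow0 i (by simpa using hi)
  calc (∑ i ∈ I, ∑ j, N2 x i j) + ∑ j ∈ J, ∑ i, N2 x i j
      = ((∑ i ∈ I, ∑ j ∈ J, N2 x i j) + ∑ i ∈ I, ∑ j ∈ Jᶜ, N2 x i j)
        + ((∑ i ∈ I, ∑ j ∈ J, N2 x i j) + ∑ j ∈ J, ∑ i ∈ Iᶜ, N2 x i j) := by
        rw [Finset.sum_congr rfl (fun i (_ : i ∈ I) => splitJ i),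
          Finset.sum_congr rfl (fun j (_ : j ∈ J) => splitI j),
          Finset.sum_add_distrib, Finset.sum_add_distrib,
          Finset.sum_comm (s := J) (t := I)]
    _ = (∑ i ∈ I, ∑ j ∈ Jᶜ, N2 x i j) + ∑ j ∈ J, ∑ i ∈ Iᶜ, N2 x i j := zabc _ _ _
    _ = (∑ j ∈ Jᶜ, ∑ i ∈ Iᶜ, N2 x i j) + ∑ i ∈ Iᶜ, ∑ j ∈ Jᶜ, N2 x i j := by rw [hbeq, hceq]
    _ = 0 := by
        rw [Finset.sum_comm]
        exact two0 _

lemma frt_filter_row (i : Fin 3) :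
    (FrT x).filter (fun p => p.1 = i) = (FrV (x i)).map ⟨fun j => (i, j), fun a b h => by simpa using h⟩ := by
  ext p
  simp only [Finset.mem_filter, Finset.mem_map, Function.Embedding.coeFn_mk, mem_FrT, mem_FrV]
  constructor
  · rintro ⟨⟨h0, h1⟩, rfl⟩
    exact ⟨p.2, ⟨h0, h1⟩, rfl⟩
  · rintro ⟨j, ⟨h0, h1⟩, rfl⟩
    exact ⟨⟨h0, h1⟩, rfl⟩

lemma frt_filter_col (j : Fin m) :
    (FrT x).filter (fun p => p.2 = j) = (FrV (colv x j)).map ⟨fun i => (i, j), fun a b h => by simpa using h⟩ := by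
  ext p
  simp only [Finset.mem_filter, Finset.mem_map, Function.Embedding.coeFn_mk, mem_FrT, mem_FrV, colv]
  constructor
  · rintro ⟨⟨h0, h1⟩, rfl⟩
    exact ⟨p.1, ⟨h0, h1⟩, rfl⟩
  · rintro ⟨i, ⟨h0, h1⟩, rfl⟩
    exact ⟨⟨h0, h1⟩, rfl⟩

lemma frt_card_rows : (FrT x).card = ∑ i, (FrV (x i)).card := by
  rw [Finset.card_eq_sum_card_fiberwise (f := Prod.fst) (t := univ) (fun p _ => mem_univ _)]
  apply Finset.sum_congr rfl
  intro i _
  rw [frt_filter_row, Finset.card_map]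

lemma frt_card_cols : (FrT x).card = ∑ j, (FrV (colv x j)).card := by
  rw [Finset.card_eq_sum_card_fiberwise (f := Prod.snd) (t := univ) (fun p _ => mem_univ _)]
  apply Finset.sum_congr rfl
  intro j _
  rw [frt_filter_col, Finset.card_map]


lemma pm_pow (k : ℕ) : (-1:ℝ)^k = 1 ∨ (-1:ℝ)^k = -1 :=
  (Nat.even_or_odd k).imp (fun h => h.neg_one_pow) (fun h => h.neg_one_pow)

lemma sq_one_of_pm {e : ℝ} (h : e = 1 ∨ e = -1) : e * e = 1 := by
  rcases h with rfl | rfl <;> norm_num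

lemma ttc (e1 e2 s a : ℝ) (h1 : e1 = 1 ∨ e1 = -1) (h2 : e2 = 1 ∨ e2 = -1)
    (hrel : e1 * e2 = s) : e1 * a + e2 * (-s * a) = 0 := by
  rw [← hrel]
  rcases h1 with h | h <;> rcases h2 with h' | h' <;> subst h <;> subst h' <;> ring

lemma closing_helper (t1 t2 s q : ℝ) (h2 : t2 * t2 = 1) (hs : s * s = 1)
    (hrel : t1 * t2 = s) (hq : q * s = 1) : t1 - t2 * q = 0 := by
  have hs0 : s ≠ 0 := by
    intro h
    rw [h] at hs
    norm_num at hs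
  have hq' : q = s := mul_right_cancel₀ hs0 (by rw [hq, hs])
  have ht1 : t1 = s * t2 := by
    calc t1 = t1 * (t2 * t2) := by rw [h2]; ring
    _ = (t1 * t2) * t2 := by ring
    _ = s * t2 := by rw [hrel]
  rw [hq', ht1]
  ring

lemma sum_two_support {ι : Type*} [Fintype ι] [DecidableEq ι] (f : ι → ℝ) (p q : ι)
    (hpq : p ≠ q) (h : ∀ j, j ≠ p → j ≠ q → f j = 0) : ∑ j, f j = f p + f q := by
  rw [← Finset.sum_pair hpq]
  symm
  apply Finset.sum_subset (Finset.subset_univ _)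
  intro j _ hj
  simp only [Finset.mem_insert, Finset.mem_singleton] at hj
  push_neg at hj
  exact h j hj.1 hj.2

/-- Existence of a feasible perturbation direction. -/
theorem exists_dir
    (hb : ∀ i j, 0 ≤ x i j ∧ x i j ≤ 1)
    (hrow : ∀ i (A : Finset (Fin m)), Odd A.card → 0 ≤ slackV (x i) A)
    (hcol : ∀ j (B : Finset (Fin 3)), Odd B.card → 0 ≤ slackV (colv x j) B)
    (hni : ∃ i j, x i j ≠ 0 ∧ x i j ≠ 1) :
    ∃ d : Fin 3 → Fin m → ℝ, d ≠ 0 ∧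
      (∀ i j, (x i j = 0 ∨ x i j = 1) → d i j = 0) ∧
      (∀ i (A : Finset (Fin m)), Odd A.card → slackV (x i) A = 0 →
        ∑ j, etaV A j * d i j = 0) ∧
      (∀ j (B : Finset (Fin 3)), Odd B.card → slackV (colv x j) B = 0 →
        ∑ i, etaV B i * d i j = 0) := by
  classical
  set I' : Finset (Fin 3) := univ.filter (fun i => (FrV (x i)).Nonempty ∧
      ∃ A : Finset (Fin m), Odd A.card ∧ slackV (x i) A = 0) with hI'def
  set J' : Finset (Fin m) := univ.filter (fun j => (FrV (colv x j)).Nonempty ∧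
      ∃ B : Finset (Fin 3), Odd B.card ∧ slackV (colv x j) B = 0) with hJ'def
  have hsupp_of_frac : ∀ i j, x i j ≠ 0 ∧ x i j ≠ 1 ↔ (i, j) ∈ FrT x := fun i j => (mem_FrT x (p := (i, j))).symm
  by_cases hrank : I'.card + J'.card < (FrT x).card
  · -- rank case
    have hchA : ∀ i : Fin 3, ∃ A : Finset (Fin m), i ∈ I' → (Odd A.card ∧ slackV (x i) A = 0) := by
      intro i
      by_cases h : i ∈ I'
      · obtain ⟨-, A, hA⟩ := (Finset.mem_filter.mp h).2
        exact ⟨A, fun _ => hA⟩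
      · exact ⟨∅, fun hc => absurd hc h⟩
    have hchB : ∀ j : Fin m, ∃ B : Finset (Fin 3), j ∈ J' → (Odd B.card ∧ slackV (colv x j) B = 0) := by
      intro j
      by_cases h : j ∈ J'
      · obtain ⟨-, B, hB⟩ := (Finset.mem_filter.mp h).2
        exact ⟨B, fun _ => hB⟩
      · exact ⟨∅, fun hc => absurd hc h⟩
    choose RA hRA using hchA
    choose CB hCB using hchB
    -- the linear map
    let L1 : ((Fin 3 × Fin m) → ℝ) →ₗ[ℝ] ({p : Fin 3 × Fin m // p ∈ (FrT x)ᶜ} → ℝ) :=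
      LinearMap.pi (fun p => LinearMap.proj p.1)
    let L2 : ((Fin 3 × Fin m) → ℝ) →ₗ[ℝ] ({i : Fin 3 // i ∈ I'} → ℝ) :=
      LinearMap.pi (fun ii => ∑ j, etaV (RA ii.1) j • LinearMap.proj (R := ℝ)
        (φ := fun _ : Fin 3 × Fin m => ℝ) (ii.1, j))
    let L3 : ((Fin 3 × Fin m) → ℝ) →ₗ[ℝ] ({j : Fin m // j ∈ J'} → ℝ) :=
      LinearMap.pi (fun jj => ∑ i, etaV (CB jj.1) i • LinearMap.proj (R := ℝ)
        (φ := fun _ : Fin 3 × Fin m => ℝ) (i, jj.1))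
    let L := L1.prod (L2.prod L3)
    have hL1 : ∀ D p, L1 D p = D p.1 := fun D p => rfl
    have hL2 : ∀ (D : (Fin 3 × Fin m) → ℝ) ii, L2 D ii = ∑ j, etaV (RA ii.1) j * D (ii.1, j) := by
      intro D ii
      simp [L2, LinearMap.pi_apply, LinearMap.sum_apply, LinearMap.smul_apply,
        LinearMap.proj_apply, smul_eq_mul]
    have hL3 : ∀ (D : (Fin 3 × Fin m) → ℝ) jj, L3 D jj = ∑ i, etaV (CB jj.1) i * D (i, jj.1) := by
      intro D jj
      simp [L3, LinearMap.pi_apply, LinearMap.sum_apply, LinearMap.smul_apply,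
        LinearMap.proj_apply, smul_eq_mul]
    have hnotinj : ¬ Function.Injective L := by
      intro hinj
      have hle := LinearMap.finrank_le_finrank_of_injective hinj
      rw [Module.finrank_fintype_fun_eq_card] at hle
      have hWrank : Module.finrank ℝ (({p : Fin 3 × Fin m // p ∈ (FrT x)ᶜ} → ℝ) ×
          (({i : Fin 3 // i ∈ I'} → ℝ) × ({j : Fin m // j ∈ J'} → ℝ)))
          = (FrT x)ᶜ.card + (I'.card + J'.card) := by
        rw [Module.finrank_prod, Module.finrank_prod,
          Module.finrank_fintype_fun_eq_card, Module.finrank_fintype_fun_eq_card,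
          Module.finrank_fintype_fun_eq_card, Fintype.card_coe, Fintype.card_coe, Fintype.card_coe]
      rw [hWrank] at hle
      have h1 : (FrT x)ᶜ.card = Fintype.card (Fin 3 × Fin m) - (FrT x).card := Finset.card_compl _
      have h2 : (FrT x).card ≤ Fintype.card (Fin 3 × Fin m) := Finset.card_le_univ _
      omega
    rw [← LinearMap.ker_eq_bot] at hnotinj
    obtain ⟨D, hDker, hDne⟩ := Submodule.ne_bot_iff _ |>.mp hnotinj
    have hLD : L D = 0 := LinearMap.mem_ker.mp hDker
    have hsupp : ∀ p : Fin 3 × Fin m, p ∉ FrT x → D p = 0 := by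
      intro p hp
      have h : L1 D ⟨p, by simpa using hp⟩ = 0 := congrFun (congrArg Prod.fst hLD) ⟨p, by simpa using hp⟩
      rw [hL1] at h
      exact h
    have hrowker : ∀ i : Fin 3, (hi : i ∈ I') → ∑ j, etaV (RA i) j * D (i, j) = 0 := by
      intro i hi
      have h : L2 D ⟨i, hi⟩ = 0 := congrFun (congrArg (fun w => w.2.1) hLD) ⟨i, hi⟩
      rw [hL2] at h
      simpa using h
    have hcolker : ∀ j : Fin m, (hj : j ∈ J') → ∑ i, etaV (CB j) i * D (i, j) = 0 := by
      intro j hj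
      have h : L3 D ⟨j, hj⟩ = 0 := congrFun (congrArg (fun w => w.2.2) hLD) ⟨j, hj⟩
      rw [hL3] at h
      simpa using h
    refine ⟨fun i j => D (i, j), ?_, ?_, ?_, ?_⟩
    · intro hzero
      apply hDne
      funext p
      have := congrFun (congrFun hzero p.1) p.2
      simpa using this
    · intro i j hint
      apply hsupp
      simp only [mem_FrT]
      rintro ⟨h0, h1⟩
      rcases hint with h | h
      · exact h0 h
      · exact h1 h
    · -- row constraints
      intro i A hA ht
      show ∑ j, etaV A j * D (i, j) = 0
      by_cases hact : (FrV (x i)).Nonempty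
      · have hi : i ∈ I' := by
          rw [hI'def, Finset.mem_filter]
          exact ⟨mem_univ _, hact, A, hA, ht⟩
        have hker := hrowker i hi
        obtain ⟨hRAodd, hRAt⟩ := hRA i hi
        rcases tight_dichotomy (fun j => hb i j) hact hA hRAodd ht hRAt with hsame | hopp
        · rw [← hker]
          apply Finset.sum_congr rfl
          intro j _
          by_cases hj : j ∈ FrV (x i)
          · have := hsame j hj
            unfold etaV
            rw [if_congr this rfl rfl]
          · have : D (i, j) = 0 := by
              apply hsupp
              rw [mem_FrT]
              intro hc
              exact hj (mem_FrV.mpr hc)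
            rw [this, mul_zero, mul_zero]
        · have : ∑ j, etaV A j * D (i, j) = ∑ j, -(etaV (RA i) j * D (i, j)) := by
            apply Finset.sum_congr rfl
            intro j _
            by_cases hj : j ∈ FrV (x i)
            · have hiff := hopp j hj
              have : etaV A j = - etaV (RA i) j := by
                unfold etaV
                by_cases hjA : j ∈ A
                · rw [if_pos hjA, if_neg (hiff.mp hjA)]
                  norm_num
                · rw [if_neg hjA]
                  have : j ∈ RA i := by
                    by_contra hc
                    exact hjA (hiff.mpr hc)
                  rw [if_pos this]
              rw [this]
              ring
            · have : D (i, j) = 0 := by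
                apply hsupp
                rw [mem_FrT]
                intro hc
                exact hj (mem_FrV.mpr hc)
              rw [this, mul_zero, mul_zero]
              ring
          rw [this, Finset.sum_neg_distrib, hker, neg_zero]
      · apply Finset.sum_eq_zero
        intro j _
        have : D (i, j) = 0 := by
          apply hsupp
          rw [mem_FrT]
          intro hc
          exact hact ⟨j, mem_FrV.mpr hc⟩
        rw [this, mul_zero]
    · -- column constraints
      intro j B hB ht
      show ∑ i, etaV B i * D (i, j) = 0
      by_cases hact : (FrV (colv x j)).Nonempty
      · have hj : j ∈ J' := by
          rw [hJ'def, Finset.mem_filter]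
          exact ⟨mem_univ _, hact, B, hB, ht⟩
        have hker := hcolker j hj
        obtain ⟨hCBodd, hCBt⟩ := hCB j hj
        rcases tight_dichotomy (fun i => hb i j) hact hB hCBodd ht hCBt with hsame | hopp
        · rw [← hker]
          apply Finset.sum_congr rfl
          intro i _
          by_cases hi : i ∈ FrV (colv x j)
          · have := hsame i hi
            unfold etaV
            rw [if_congr this rfl rfl]
          · have : D (i, j) = 0 := by
              apply hsupp
              rw [mem_FrT]
              intro hc
              exact hi (mem_FrV.mpr (by simpa [colv] using hc))
            rw [this, mul_zero, mul_zero]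
        · have : ∑ i, etaV B i * D (i, j) = ∑ i, -(etaV (CB j) i * D (i, j)) := by
            apply Finset.sum_congr rfl
            intro i _
            by_cases hi : i ∈ FrV (colv x j)
            · have hiff := hopp i hi
              have : etaV B i = - etaV (CB j) i := by
                unfold etaV
                by_cases hiB : i ∈ B
                · rw [if_pos hiB, if_neg (hiff.mp hiB)]
                  norm_num
                · rw [if_neg hiB]
                  have : i ∈ CB j := by
                    by_contra hc
                    exact hiB (hiff.mpr hc)
                  rw [if_pos this]
              rw [this]
              ring
            · have : D (i, j) = 0 := by
                apply hsupp
                rw [mem_FrT]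
                intro hc
                exact hi (mem_FrV.mpr (by simpa [colv] using hc))
              rw [this, mul_zero, mul_zero]
              ring
          rw [this, Finset.sum_neg_distrib, hker, neg_zero]
      · apply Finset.sum_eq_zero
        intro i _
        have : D (i, j) = 0 := by
          apply hsupp
          rw [mem_FrT]
          intro hc
          exact hact ⟨i, mem_FrV.mpr (by simpa [colv] using hc)⟩
        rw [this, mul_zero]
  · -- critical case
    push_neg at hrank
    have memrowcol : ∀ (i : Fin 3) (j : Fin m), j ∈ FrV (x i) ↔ i ∈ FrV (colv x j) := by
      intro i j
      simp [mem_FrV, colv]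
    set actR : Finset (Fin 3) := univ.filter (fun i => (FrV (x i)).Nonempty) with hactRdef
    set actC : Finset (Fin m) := univ.filter (fun j => (FrV (colv x j)).Nonempty) with hactCdef
    have hFrowsub : ∀ i, FrV (x i) ⊆ actC := by
      intro i j hj
      exact Finset.mem_filter.mpr ⟨mem_univ _, ⟨i, (memrowcol i j).mp hj⟩⟩
    have hFcolsub : ∀ j, FrV (colv x j) ⊆ actR := by
      intro j i hi
      exact Finset.mem_filter.mpr ⟨mem_univ _, ⟨j, (memrowcol i j).mpr hi⟩⟩
    have hI'sub : I' ⊆ actR := by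
      intro i hi
      exact Finset.mem_filter.mpr ⟨mem_univ _, ((Finset.mem_filter.mp hi).2).1⟩
    have hJ'sub : J' ⊆ actC := by
      intro j hj
      exact Finset.mem_filter.mpr ⟨mem_univ _, ((Finset.mem_filter.mp hj).2).1⟩
    have hsum_actR : ∑ i ∈ actR, (FrV (x i)).card = (FrT x).card := by
      rw [frt_card_rows]
      apply Finset.sum_subset (Finset.subset_univ _)
      intro i _ hi
      have : FrV (x i) = ∅ := Finset.not_nonempty_iff_eq_empty.mp
        (fun hne => hi (Finset.mem_filter.mpr ⟨mem_univ _, hne⟩))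
      simp [this]
    have hsum_actC : ∑ j ∈ actC, (FrV (colv x j)).card = (FrT x).card := by
      rw [frt_card_cols]
      apply Finset.sum_subset (Finset.subset_univ _)
      intro j _ hj
      have : FrV (colv x j) = ∅ := Finset.not_nonempty_iff_eq_empty.mp
        (fun hne => hj (Finset.mem_filter.mpr ⟨mem_univ _, hne⟩))
      simp [this]
    have hrow_ge2 : ∀ i ∈ actR, 2 ≤ (FrV (x i)).card := by
      intro i hi
      exact frac_card_ne_one (fun j => hb i j) (hrow i) (Finset.mem_filter.mp hi).2
    have hcol_ge2 : ∀ j ∈ actC, 2 ≤ (FrV (colv x j)).card := by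
      intro j hj
      exact frac_card_ne_one (fun i => hb i j) (hcol j) (Finset.mem_filter.mp hj).2
    have h2a : 2 * actR.card ≤ (FrT x).card := by
      rw [← hsum_actR]
      calc 2 * actR.card = ∑ _i ∈ actR, 2 := by rw [Finset.sum_const, smul_eq_mul, mul_comm]
        _ ≤ ∑ i ∈ actR, (FrV (x i)).card := Finset.sum_le_sum hrow_ge2
    have h2t : 2 * actC.card ≤ (FrT x).card := by
      rw [← hsum_actC]
      calc 2 * actC.card = ∑ _j ∈ actC, 2 := by rw [Finset.sum_const, smul_eq_mul, mul_comm]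
        _ ≤ ∑ j ∈ actC, (FrV (colv x j)).card := Finset.sum_le_sum hcol_ge2
    have hIa : I'.card ≤ actR.card := Finset.card_le_card hI'sub
    have hJt : J'.card ≤ actC.card := Finset.card_le_card hJ'sub
    have hateq : actR.card = actC.card := by omega
    have hFr2a : (FrT x).card = 2 * actR.card := by omega
    have hrow2 : ∀ i ∈ actR, (FrV (x i)).card = 2 := by
      by_contra hc
      push_neg at hc
      obtain ⟨i0, hi0, hne2⟩ := hc
      have hgt : (2:ℕ) < (FrV (x i0)).card := lt_of_le_of_ne (hrow_ge2 i0 hi0) (Ne.symm hne2)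
      have : ∑ _i ∈ actR, 2 < ∑ i ∈ actR, (FrV (x i)).card :=
        Finset.sum_lt_sum hrow_ge2 ⟨i0, hi0, hgt⟩
      rw [Finset.sum_const, smul_eq_mul, hsum_actR] at this
      omega
    have hcol2 : ∀ j ∈ actC, (FrV (colv x j)).card = 2 := by
      by_contra hc
      push_neg at hc
      obtain ⟨j0, hj0, hne2⟩ := hc
      have hgt : (2:ℕ) < (FrV (colv x j0)).card := lt_of_le_of_ne (hcol_ge2 j0 hj0) (Ne.symm hne2)
      have : ∑ _j ∈ actC, 2 < ∑ j ∈ actC, (FrV (colv x j)).card :=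
        Finset.sum_lt_sum hcol_ge2 ⟨j0, hj0, hgt⟩
      rw [Finset.sum_const, smul_eq_mul, hsum_actC] at this
      omega
    obtain ⟨i0, j0, hfr0⟩ := hni
    have hi0act : i0 ∈ actR := Finset.mem_filter.mpr ⟨mem_univ _, ⟨j0, mem_FrV.mpr hfr0⟩⟩
    have hj0act : j0 ∈ actC := Finset.mem_filter.mpr ⟨mem_univ _,
      ⟨i0, (memrowcol i0 j0).mp (mem_FrV.mpr hfr0)⟩⟩
    have hage2 : 2 ≤ actR.card := by
      by_contra hc
      push_neg at hc
      have hsub : FrV (colv x j0) ⊆ actR := hFcolsub j0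
      have h2 := hcol2 j0 hj0act
      have := Finset.card_le_card hsub
      omega
    have hale3 : actR.card ≤ 3 := by
      calc actR.card ≤ (univ : Finset (Fin 3)).card := Finset.card_le_card (Finset.subset_univ _)
        _ = 3 := by simp
    -- the sign functions
    set sR : Fin 3 → ℝ := fun i => (-1)^(k1 x i + 1) with hsRdef
    set sC : Fin m → ℝ := fun j => (-1)^(c1 x j + 1) with hsCdef
    have relR : ∀ (i : Fin 3) (p q : Fin m), p ≠ q → FrV (x i) = {p, q} →
        ∀ A : Finset (Fin m), Odd A.card → slackV (x i) A = 0 →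
          etaV A p * etaV A q = sR i := by
      intro i p q hpq hF A hA ht
      exact tight_pair (fun j => hb i j) hpq hF hA ht
    have relC : ∀ (j : Fin m) (p q : Fin 3), p ≠ q → FrV (colv x j) = {p, q} →
        ∀ B : Finset (Fin 3), Odd B.card → slackV (colv x j) B = 0 →
          etaV B p * etaV B q = sC j := by
      intro j p q hpq hF B hB ht
      exact tight_pair (fun i => hb i j) hpq hF hB ht
    have hinactR : ∀ i, i ∉ actR → FrV (x i) = ∅ := by
      intro i hi
      exact Finset.not_nonempty_iff_eq_empty.mp
        (fun hne => hi (Finset.mem_filter.mpr ⟨mem_univ _, hne⟩))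
    have hinactC : ∀ j, j ∉ actC → FrV (colv x j) = ∅ := by
      intro j hj
      exact Finset.not_nonempty_iff_eq_empty.mp
        (fun hne => hj (Finset.mem_filter.mpr ⟨mem_univ _, hne⟩))
    have hacase : actR.card = 2 ∨ actR.card = 3 := by omega
    rcases hacase with hacard | hacard
    · -- shape A : a 4-cycle
      obtain ⟨i1, i2, hi12, hactR⟩ := Finset.card_eq_two.mp hacard
      have htcard : actC.card = 2 := by omega
      obtain ⟨j1, j2, hj12, hactC⟩ := Finset.card_eq_two.mp htcard
      have hi1 : i1 ∈ actR := by rw [hactR]; simp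
      have hi2 : i2 ∈ actR := by rw [hactR]; simp
      have hj1C : j1 ∈ actC := by rw [hactC]; simp
      have hj2C : j2 ∈ actC := by rw [hactC]; simp
      have hFrow : ∀ i ∈ actR, FrV (x i) = ({j1, j2} : Finset (Fin m)) := by
        intro i hi
        apply Finset.eq_of_subset_of_card_le
        · intro j hj
          rw [← hactC]
          exact hFrowsub i hj
        · rw [Finset.card_pair hj12, hrow2 i hi]
      have hFcol : ∀ j ∈ actC, FrV (colv x j) = ({i1, i2} : Finset (Fin 3)) := by
        intro j hj
        apply Finset.eq_of_subset_of_card_le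
        · intro i hi
          rw [← hactR]
          exact hFcolsub j hi
        · rw [Finset.card_pair hi12, hcol2 j hj]
      have hF1 := hFrow i1 hi1
      have hF2 := hFrow i2 hi2
      have hFc1 := hFcol j1 hj1C
      have hFc2 := hFcol j2 hj2C
      -- parity
      have hpar := parity_lemma x hrow hcol {i1, i2} {j1, j2}
        (fun i hi => hinactR i (by rwa [hactR]))
        (fun j hj => hinactC j (by rwa [hactC]))
      rw [Finset.sum_pair hi12, Finset.sum_pair hj12] at hpar
      have hprod : sR i1 * sR i2 * (sC j1 * sC j2) = 1 := by
        simp only [hsRdef, hsCdef]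
        rw [← pow_add, ← pow_add, ← pow_add]
        apply Even.neg_one_pow
        rw [Nat.even_iff] at hpar ⊢
        omega
      -- the direction
      set d : Fin 3 → Fin m → ℝ := fun i j =>
        if i = i1 then (if j = j1 then 1 else if j = j2 then -(sR i1) else 0)
        else if i = i2 then (if j = j2 then sC j2 * sR i1
          else if j = j1 then -(sR i2) * (sC j2 * sR i1) else 0)
        else 0 with hddef
      have hd11 : d i1 j1 = 1 := by simp [hddef]
      have hd12 : d i1 j2 = -(sR i1) := by simp [hddef, Ne.symm hj12]
      have hd22 : d i2 j2 = sC j2 * sR i1 := by simp [hddef, Ne.symm hi12]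
      have hd21 : d i2 j1 = -(sR i2) * (sC j2 * sR i1) := by
        simp [hddef, Ne.symm hi12, hj12]
      have hd_row_other : ∀ j, j ≠ j1 → j ≠ j2 → ∀ i, d i j = 0 := by
        intro j h1 h2 i
        simp [hddef, h1, h2]
      have hd_col_other : ∀ i, i ≠ i1 → i ≠ i2 → ∀ j, d i j = 0 := by
        intro i h1 h2 j
        simp [hddef, h1, h2]
      have hfrac : ∀ i ∈ actR, ∀ j ∈ actC, x i j ≠ 0 ∧ x i j ≠ 1 := by
        intro i hi j hj
        apply mem_FrV.mp
        rw [hFrow i hi, ← hactC]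
        exact hj
      refine ⟨d, ?_, ?_, ?_, ?_⟩
      · intro h
        have h0 : (1:ℝ) = 0 := by
          rw [← hd11]
          exact congrFun (congrFun h i1) j1
        exact one_ne_zero h0
      · intro i j hint
        by_cases e1 : i = i1
        · subst e1
          by_cases f1 : j = j1
          · subst f1
            rcases hfrac i hi1 j hj1C with ⟨h0, h1⟩
            rcases hint with h | h
            · exact absurd h h0
            · exact absurd h h1
          · by_cases f2 : j = j2
            · subst f2
              rcases hfrac i hi1 j hj2C with ⟨h0, h1⟩
              rcases hint with h | h
              · exact absurd h h0
              · exact absurd h h1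
            · exact hd_row_other j f1 f2 i
        · by_cases e2 : i = i2
          · subst e2
            by_cases f1 : j = j1
            · subst f1
              rcases hfrac i hi2 j hj1C with ⟨h0, h1⟩
              rcases hint with h | h
              · exact absurd h h0
              · exact absurd h h1
            · by_cases f2 : j = j2
              · subst f2
                rcases hfrac i hi2 j hj2C with ⟨h0, h1⟩
                rcases hint with h | h
                · exact absurd h h0
                · exact absurd h h1
              · exact hd_row_other j f1 f2 i
          · exact hd_col_other i e1 e2 j
      · -- rows
        intro i A hA ht
        by_cases hi : i ∈ actR
        · rw [hactR] at hi
          simp only [Finset.mem_insert, Finset.mem_singleton] at hi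
          rcases hi with rfl | rfl
          · rw [sum_two_support (fun j => etaV A j * d i j) j1 j2 hj12
              (fun j h1 h2 => by show etaV A j * d i j = 0; rw [hd_row_other j h1 h2]; ring)]
            show etaV A j1 * d i j1 + etaV A j2 * d i j2 = 0
            rw [hd11, hd12]
            have hrel := relR i j1 j2 hj12 hF1 A hA ht
            have := ttc (etaV A j1) (etaV A j2) (sR i) 1 (etaV_pm A j1) (etaV_pm A j2) hrel
            linear_combination this
          · rw [sum_two_support (fun j => etaV A j * d i j) j1 j2 hj12
              (fun j h1 h2 => by show etaV A j * d i j = 0; rw [hd_row_other j h1 h2]; ring)]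
            show etaV A j1 * d i j1 + etaV A j2 * d i j2 = 0
            rw [hd21, hd22]
            have hrel := relR i j1 j2 hj12 hF2 A hA ht
            have hrel' : etaV A j2 * etaV A j1 = sR i := by rw [mul_comm]; exact hrel
            have := ttc (etaV A j2) (etaV A j1) (sR i) (sC j2 * sR i1)
              (etaV_pm A j2) (etaV_pm A j1) hrel'
            linear_combination this
        · apply Finset.sum_eq_zero
          intro j _
          rw [hactR] at hi
          simp only [Finset.mem_insert, Finset.mem_singleton] at hi
          push_neg at hi
          rw [hd_col_other i hi.1 hi.2 j, mul_zero]
      · -- columns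
        intro j B hB ht
        by_cases hj : j ∈ actC
        · rw [hactC] at hj
          simp only [Finset.mem_insert, Finset.mem_singleton] at hj
          rcases hj with rfl | rfl
          · rw [sum_two_support (fun i => etaV B i * d i j) i1 i2 hi12
              (fun i h1 h2 => by show etaV B i * d i j = 0; rw [hd_col_other i h1 h2]; ring)]
            show etaV B i1 * d i1 j + etaV B i2 * d i2 j = 0
            rw [hd11, hd21]
            have hrel := relC j i1 i2 hi12 hFc1 B hB ht
            have h2 : etaV B i2 * etaV B i2 = 1 := sq_one_of_pm (etaV_pm B i2)
            have hs : sC j * sC j = 1 := by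
              simp only [hsCdef]
              exact sq_one_of_pm (pm_pow _)
            have hq : (sR i2 * (sC j2 * sR i1)) * sC j = 1 := by
              linear_combination hprod
            have hch := closing_helper (etaV B i1) (etaV B i2) (sC j)
              (sR i2 * (sC j2 * sR i1)) h2 hs hrel hq
            linear_combination hch
          · rw [sum_two_support (fun i => etaV B i * d i j) i1 i2 hi12
              (fun i h1 h2 => by show etaV B i * d i j = 0; rw [hd_col_other i h1 h2]; ring)]
            show etaV B i1 * d i1 j + etaV B i2 * d i2 j = 0
            rw [hd12, hd22]
            have hrel := relC j i1 i2 hi12 hFc2 B hB ht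
            have := ttc (etaV B i1) (etaV B i2) (sC j) (-(sR i1))
              (etaV_pm B i1) (etaV_pm B i2) hrel
            linear_combination this
        · apply Finset.sum_eq_zero
          intro i _
          rw [hactC] at hj
          simp only [Finset.mem_insert, Finset.mem_singleton] at hj
          push_neg at hj
          rw [hd_row_other j hj.1 hj.2 i, mul_zero]
    · -- shape B : a 6-cycle
      have hactRuniv : actR = univ := Finset.eq_univ_of_card _ (by rw [hacard]; simp)
      have htcard : actC.card = 3 := by omega
      obtain ⟨q1, q2, q3, h12, h13, h23, hactC⟩ := Finset.card_eq_three.mp htcard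
      have hq1C : q1 ∈ actC := by rw [hactC]; simp
      have hq2C : q2 ∈ actC := by rw [hactC]; simp
      have hq3C : q3 ∈ actC := by rw [hactC]; simp
      have hmiss : ∀ q ∈ actC, ∃ r : Fin 3, (FrV (colv x q))ᶜ = {r} := by
        intro q hq
        apply Finset.card_eq_one.mp
        rw [Finset.card_compl, hcol2 q hq]
        simp
      obtain ⟨r1, hr1⟩ := hmiss q1 hq1C
      obtain ⟨r2, hr2⟩ := hmiss q2 hq2C
      obtain ⟨r3, hr3⟩ := hmiss q3 hq3C
      have hmem : ∀ (q : Fin m) (r : Fin 3), (FrV (colv x q))ᶜ = {r} →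
          ∀ i : Fin 3, i ∈ FrV (colv x q) ↔ i ≠ r := by
        intro q r hqr i
        constructor
        · intro hi hir
          subst hir
          have : i ∈ (FrV (colv x q))ᶜ := by rw [hqr]; simp
          exact (Finset.mem_compl.mp this) hi
        · intro hir
          by_contra hc
          have : i ∈ (FrV (colv x q))ᶜ := Finset.mem_compl.mpr hc
          rw [hqr] at this
          simp at this
          exact hir this
      have hmem1 := hmem q1 r1 hr1
      have hmem2 := hmem q2 r2 hr2
      have hmem3 := hmem q3 r3 hr3
      have hrowsubC : ∀ i : Fin 3, FrV (x i) ⊆ {q1, q2, q3} := by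
        intro i
        rw [← hactC]
        exact hFrowsub i
      have hractive : ∀ i : Fin 3, (FrV (x i)).card = 2 := fun i =>
        hrow2 i (by rw [hactRuniv]; exact mem_univ i)
      have hnomem : ∀ (i : Fin 3) (q : Fin m) (r : Fin 3), (∀ i' : Fin 3,
          i' ∈ FrV (colv x q) ↔ i' ≠ r) → i = r → q ∉ FrV (x i) := by
        intro i q r hq hir hc
        exact ((hq i).mp ((memrowcol i q).mp hc)) hir
      have hdist : ∀ (ra : Fin 3) (qa qb : Fin m), qa ≠ qb →
          qa ∈ ({q1, q2, q3} : Finset (Fin m)) → qb ∈ ({q1, q2, q3} : Finset (Fin m)) →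
          qa ∉ FrV (x ra) → qb ∉ FrV (x ra) → False := by
        intro ra qa qb hab hqa hqb ha hb'
        have hsub : FrV (x ra) ⊆ ({q1, q2, q3} : Finset (Fin m)) \ {qa, qb} := by
          intro j hj
          rw [Finset.mem_sdiff]
          refine ⟨hrowsubC ra hj, ?_⟩
          simp only [Finset.mem_insert, Finset.mem_singleton]
          rintro (rfl | rfl)
          · exact ha hj
          · exact hb' hj
        have hcard := Finset.card_le_card hsub
        rw [hractive ra] at hcard
        have hsub2 : ({qa, qb} : Finset (Fin m)) ⊆ {q1, q2, q3} := by
          intro z hz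
          simp only [Finset.mem_insert, Finset.mem_singleton] at hz
          rcases hz with rfl | rfl
          · exact hqa
          · exact hqb
        have h3 : ({q1, q2, q3} : Finset (Fin m)).card = 3 := by
          rw [Finset.card_insert_of_notMem (by simp [h12, h13]), Finset.card_pair h23]
        have h1 : (({q1, q2, q3} : Finset (Fin m)) \ {qa, qb}).card = 1 := by
          rw [Finset.card_sdiff_of_subset hsub2, Finset.card_pair hab, h3]
        omega
      have hr12 : r1 ≠ r2 := by
        intro hr
        exact hdist r1 q1 q2 h12 (by simp) (by simp) (hnomem r1 q1 r1 hmem1 rfl)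
          (hnomem r1 q2 r2 hmem2 hr)
      have hr13 : r1 ≠ r3 := by
        intro hr
        exact hdist r1 q1 q3 h13 (by simp) (by simp) (hnomem r1 q1 r1 hmem1 rfl)
          (hnomem r1 q3 r3 hmem3 hr)
      have hr23 : r2 ≠ r3 := by
        intro hr
        exact hdist r2 q2 q3 h23 (by simp) (by simp) (hnomem r2 q2 r2 hmem2 rfl)
          (hnomem r2 q3 r3 hmem3 hr)
      have hFrow1 : FrV (x r1) = {q2, q3} := by
        apply Finset.eq_of_subset_of_card_le
        · intro j hj
          have hm := hrowsubC r1 hj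
          simp only [Finset.mem_insert, Finset.mem_singleton] at hm ⊢
          rcases hm with rfl | h
          · exact absurd hj (hnomem r1 j r1 hmem1 rfl)
          · exact h
        · rw [Finset.card_pair h23, hractive r1]
      have hFrow2 : FrV (x r2) = {q1, q3} := by
        apply Finset.eq_of_subset_of_card_le
        · intro j hj
          have hm := hrowsubC r2 hj
          simp only [Finset.mem_insert, Finset.mem_singleton] at hm ⊢
          rcases hm with rfl | hm'
          · exact Or.inl rfl
          · rcases hm' with rfl | rfl
            · exact absurd hj (hnomem r2 j r2 hmem2 rfl)
            · exact Or.inr rfl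
        · rw [Finset.card_pair h13, hractive r2]
      have hFrow3 : FrV (x r3) = {q1, q2} := by
        apply Finset.eq_of_subset_of_card_le
        · intro j hj
          have hm := hrowsubC r3 hj
          simp only [Finset.mem_insert, Finset.mem_singleton] at hm ⊢
          rcases hm with rfl | hm'
          · exact Or.inl rfl
          · rcases hm' with rfl | rfl
            · exact Or.inr rfl
            · exact absurd hj (hnomem r3 j r3 hmem3 rfl)
        · rw [Finset.card_pair h12, hractive r3]
      have hFcol1 : FrV (colv x q1) = {r2, r3} := by
        symm
        apply Finset.eq_of_subset_of_card_le
        · intro i hi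
          simp only [Finset.mem_insert, Finset.mem_singleton] at hi
          rcases hi with rfl | rfl
          · exact (hmem1 i).mpr (Ne.symm hr12)
          · exact (hmem1 i).mpr (Ne.symm hr13)
        · rw [hcol2 q1 hq1C, Finset.card_pair hr23]
      have hFcol2 : FrV (colv x q2) = {r1, r3} := by
        symm
        apply Finset.eq_of_subset_of_card_le
        · intro i hi
          simp only [Finset.mem_insert, Finset.mem_singleton] at hi
          rcases hi with rfl | rfl
          · exact (hmem2 i).mpr hr12
          · exact (hmem2 i).mpr (Ne.symm hr23)
        · rw [hcol2 q2 hq2C, Finset.card_pair hr13]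
      have hFcol3 : FrV (colv x q3) = {r1, r2} := by
        symm
        apply Finset.eq_of_subset_of_card_le
        · intro i hi
          simp only [Finset.mem_insert, Finset.mem_singleton] at hi
          rcases hi with rfl | rfl
          · exact (hmem3 i).mpr hr13
          · exact (hmem3 i).mpr hr23
        · rw [hcol2 q3 hq3C, Finset.card_pair hr12]
      have hruniv : ({r1, r2, r3} : Finset (Fin 3)) = univ := by
        apply Finset.eq_univ_of_card
        rw [Finset.card_insert_of_notMem (by simp [hr12, hr13]), Finset.card_pair hr23]
        simp
      have hiuniv : ∀ i : Fin 3, i = r1 ∨ i = r2 ∨ i = r3 := by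
        intro i
        have : i ∈ ({r1, r2, r3} : Finset (Fin 3)) := by rw [hruniv]; exact mem_univ i
        simpa using this
      -- parity
      have hpar := parity_lemma x hrow hcol univ {q1, q2, q3}
        (fun i hi => absurd (mem_univ i) hi)
        (fun j hj => hinactC j (by rwa [hactC]))
      have hsumrows : ∑ i, k1 x i = k1 x r1 + (k1 x r2 + k1 x r3) := by
        rw [← hruniv, Finset.sum_insert (by simp [hr12, hr13]), Finset.sum_pair hr23]
      have hsumcols : ∑ j ∈ ({q1, q2, q3} : Finset (Fin m)), c1 x j
          = c1 x q1 + (c1 x q2 + c1 x q3) := by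
        rw [Finset.sum_insert (by simp [h12, h13]), Finset.sum_pair h23]
      rw [hsumrows, hsumcols] at hpar
      have hprod : sR r1 * sR r2 * sR r3 * (sC q1 * sC q2 * sC q3) = 1 := by
        simp only [hsRdef, hsCdef]
        rw [← pow_add, ← pow_add, ← pow_add, ← pow_add, ← pow_add]
        apply Even.neg_one_pow
        rw [Nat.even_iff] at hpar ⊢
        omega
      -- the direction
      set d : Fin 3 → Fin m → ℝ := fun i j =>
        if i = r1 then (if j = q2 then 1 else if j = q3 then -(sR r1) else 0)
        else if i = r2 then (if j = q3 then sC q3 * sR r1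
          else if j = q1 then -(sR r2) * (sC q3 * sR r1) else 0)
        else if i = r3 then (if j = q1 then sC q1 * (sR r2 * (sC q3 * sR r1))
          else if j = q2 then -(sR r3) * (sC q1 * (sR r2 * (sC q3 * sR r1))) else 0)
        else 0 with hddef
      have hd12 : d r1 q2 = 1 := by simp [hddef]
      have hd13 : d r1 q3 = -(sR r1) := by simp [hddef, Ne.symm h23]
      have hd23 : d r2 q3 = sC q3 * sR r1 := by simp [hddef, Ne.symm hr12]
      have hd21 : d r2 q1 = -(sR r2) * (sC q3 * sR r1) := by
        simp [hddef, Ne.symm hr12, h13]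
      have hd31 : d r3 q1 = sC q1 * (sR r2 * (sC q3 * sR r1)) := by
        simp [hddef, Ne.symm hr13, Ne.symm hr23]
      have hd32 : d r3 q2 = -(sR r3) * (sC q1 * (sR r2 * (sC q3 * sR r1))) := by
        simp [hddef, Ne.symm hr13, Ne.symm hr23, Ne.symm h12]
      have hd11z : d r1 q1 = 0 := by simp [hddef, h12, h13]
      have hd22z : d r2 q2 = 0 := by simp [hddef, Ne.symm hr12, h23, Ne.symm h12]
      have hd33z : d r3 q3 = 0 := by simp [hddef, Ne.symm hr13, Ne.symm hr23, Ne.symm h13, Ne.symm h23]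
      have hd_other_j : ∀ j, j ≠ q1 → j ≠ q2 → j ≠ q3 → ∀ i, d i j = 0 := by
        intro j hj1 hj2 hj3 i
        simp [hddef, hj1, hj2, hj3]
      have hrow1_zero : ∀ j, j ≠ q2 → j ≠ q3 → d r1 j = 0 := by
        intro j hj2 hj3
        by_cases hj1 : j = q1
        · subst hj1; exact hd11z
        · exact hd_other_j j hj1 hj2 hj3 r1
      have hrow2_zero : ∀ j, j ≠ q1 → j ≠ q3 → d r2 j = 0 := by
        intro j hj1 hj3
        by_cases hj2 : j = q2
        · subst hj2; exact hd22z
        · exact hd_other_j j hj1 hj2 hj3 r2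
      have hrow3_zero : ∀ j, j ≠ q1 → j ≠ q2 → d r3 j = 0 := by
        intro j hj1 hj2
        by_cases hj3 : j = q3
        · subst hj3; exact hd33z
        · exact hd_other_j j hj1 hj2 hj3 r3
      have hcol1_zero : ∀ i, i ≠ r2 → i ≠ r3 → d i q1 = 0 := by
        intro i h2 h3
        rcases hiuniv i with rfl | rfl | rfl
        · exact hd11z
        · exact absurd rfl h2
        · exact absurd rfl h3
      have hcol2_zero : ∀ i, i ≠ r1 → i ≠ r3 → d i q2 = 0 := by
        intro i h1 h3
        rcases hiuniv i with rfl | rfl | rfl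
        · exact absurd rfl h1
        · exact hd22z
        · exact absurd rfl h3
      have hcol3_zero : ∀ i, i ≠ r1 → i ≠ r2 → d i q3 = 0 := by
        intro i h1 h2
        rcases hiuniv i with rfl | rfl | rfl
        · exact absurd rfl h1
        · exact absurd rfl h2
        · exact hd33z
      have hfracrow : ∀ (i : Fin 3) (j : Fin m), j ∈ FrV (x i) →
          (x i j = 0 ∨ x i j = 1) → False := by
        intro i j hj hint
        rcases mem_FrV.mp hj with ⟨h0, h1⟩
        rcases hint with h | h
        · exact h0 h
        · exact h1 h
      refine ⟨d, ?_, ?_, ?_, ?_⟩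
      · intro h
        have h0 : (1:ℝ) = 0 := by
          rw [← hd12]
          exact congrFun (congrFun h r1) q2
        exact one_ne_zero h0
      · intro i j hint
        by_cases hj1 : j = q1
        · subst hj1
          rcases hiuniv i with rfl | rfl | rfl
          · exact hd11z
          · exact absurd hint (fun hc => hfracrow i j (by rw [hFrow2]; simp) hc)
          · exact absurd hint (fun hc => hfracrow i j (by rw [hFrow3]; simp) hc)
        · by_cases hj2 : j = q2
          · subst hj2
            rcases hiuniv i with rfl | rfl | rfl
            · exact absurd hint (fun hc => hfracrow i j (by rw [hFrow1]; simp) hc)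
            · exact hd22z
            · exact absurd hint (fun hc => hfracrow i j (by rw [hFrow3]; simp) hc)
          · by_cases hj3 : j = q3
            · subst hj3
              rcases hiuniv i with rfl | rfl | rfl
              · exact absurd hint (fun hc => hfracrow i j (by rw [hFrow1]; simp) hc)
              · exact absurd hint (fun hc => hfracrow i j (by rw [hFrow2]; simp) hc)
              · exact hd33z
            · exact hd_other_j j hj1 hj2 hj3 i
      · -- rows
        intro i A hA ht
        rcases hiuniv i with rfl | rfl | rfl
        · rw [sum_two_support (fun j => etaV A j * d i j) q2 q3 h23
            (fun j hj2 hj3 => by show etaV A j * d i j = 0; rw [hrow1_zero j hj2 hj3]; ring)]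
          show etaV A q2 * d i q2 + etaV A q3 * d i q3 = 0
          rw [hd12, hd13]
          have hrel := relR i q2 q3 h23 hFrow1 A hA ht
          have := ttc (etaV A q2) (etaV A q3) (sR i) 1 (etaV_pm A q2) (etaV_pm A q3) hrel
          linear_combination this
        · rw [sum_two_support (fun j => etaV A j * d i j) q1 q3 h13
            (fun j hj1 hj3 => by show etaV A j * d i j = 0; rw [hrow2_zero j hj1 hj3]; ring)]
          show etaV A q1 * d i q1 + etaV A q3 * d i q3 = 0
          rw [hd21, hd23]
          have hrel := relR i q1 q3 h13 hFrow2 A hA ht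
          have hrel' : etaV A q3 * etaV A q1 = sR i := by rw [mul_comm]; exact hrel
          have := ttc (etaV A q3) (etaV A q1) (sR i) (sC q3 * sR r1)
            (etaV_pm A q3) (etaV_pm A q1) hrel'
          linear_combination this
        · rw [sum_two_support (fun j => etaV A j * d i j) q1 q2 h12
            (fun j hj1 hj2 => by show etaV A j * d i j = 0; rw [hrow3_zero j hj1 hj2]; ring)]
          show etaV A q1 * d i q1 + etaV A q2 * d i q2 = 0
          rw [hd31, hd32]
          have hrel := relR i q1 q2 h12 hFrow3 A hA ht
          have := ttc (etaV A q1) (etaV A q2) (sR i) (sC q1 * (sR r2 * (sC q3 * sR r1)))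
            (etaV_pm A q1) (etaV_pm A q2) hrel
          linear_combination this
      · -- columns
        intro j B hB ht
        by_cases hj : j ∈ actC
        · rw [hactC] at hj
          simp only [Finset.mem_insert, Finset.mem_singleton] at hj
          rcases hj with rfl | rfl | rfl
          · rw [sum_two_support (fun i => etaV B i * d i j) r2 r3 hr23
              (fun i h2 h3 => by show etaV B i * d i j = 0; rw [hcol1_zero i h2 h3]; ring)]
            show etaV B r2 * d r2 j + etaV B r3 * d r3 j = 0
            rw [hd21, hd31]
            have hrel := relC j r2 r3 hr23 hFcol1 B hB ht
            have := ttc (etaV B r2) (etaV B r3) (sC j) (-(sR r2) * (sC q3 * sR r1))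
              (etaV_pm B r2) (etaV_pm B r3) hrel
            linear_combination this
          · -- closing column q2
            rw [sum_two_support (fun i => etaV B i * d i j) r1 r3 hr13
              (fun i h1 h3 => by show etaV B i * d i j = 0; rw [hcol2_zero i h1 h3]; ring)]
            show etaV B r1 * d r1 j + etaV B r3 * d r3 j = 0
            rw [hd12, hd32]
            have hrel := relC j r1 r3 hr13 hFcol2 B hB ht
            have h2 : etaV B r3 * etaV B r3 = 1 := sq_one_of_pm (etaV_pm B r3)
            have hs : sC j * sC j = 1 := by
              simp only [hsCdef]
              exact sq_one_of_pm (pm_pow _)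
            have hq : (sR r3 * (sC q1 * (sR r2 * (sC q3 * sR r1)))) * sC j = 1 := by
              linear_combination hprod
            have hch := closing_helper (etaV B r1) (etaV B r3) (sC j)
              (sR r3 * (sC q1 * (sR r2 * (sC q3 * sR r1)))) h2 hs hrel hq
            linear_combination hch
          · rw [sum_two_support (fun i => etaV B i * d i j) r1 r2 hr12
              (fun i h1 h2 => by show etaV B i * d i j = 0; rw [hcol3_zero i h1 h2]; ring)]
            show etaV B r1 * d r1 j + etaV B r2 * d r2 j = 0
            rw [hd13, hd23]
            have hrel := relC j r1 r2 hr12 hFcol3 B hB ht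
            have := ttc (etaV B r1) (etaV B r2) (sC j) (-(sR r1))
              (etaV_pm B r1) (etaV_pm B r2) hrel
            linear_combination this
        · apply Finset.sum_eq_zero
          intro i _
          rw [hactC] at hj
          simp only [Finset.mem_insert, Finset.mem_singleton] at hj
          push_neg at hj
          rw [hd_other_j j hj.1 hj.2.1 hj.2.2 i, mul_zero]



lemma slack_perturb {n : ℕ} (v w : Fin n → ℝ) (A : Finset (Fin n)) :
    slackV (fun j => v j + w j) A = slackV v A - ∑ j, etaV A j * w j := by
  rw [sum_eta_mul]
  unfold slackV
  rw [Finset.sum_add_distrib, Finset.sum_add_distrib]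
  ring

end DeltaAux

/-- Membership in the polytope `Δ'(m)` (H-representation): coordinate bounds,
row A-inequalities and column B-inequalities. -/
def inDelta' (m : ℕ) (x : Fin 3 → Fin m → ℝ) : Prop :=
  (∀ i j, x i j ∈ Set.Icc (0:ℝ) 1) ∧
  (∀ i : Fin 3, ∀ A : Finset (Fin m), Odd A.card →
    ∑ j ∈ A, x i j ≤ (A.card : ℝ) - 1 + ∑ j ∈ Aᶜ, x i j) ∧
  (∀ j : Fin m, ∀ B : Finset (Fin 3), Odd B.card →
    ∑ i ∈ B, x i j ≤ (B.card : ℝ) - 1 + ∑ i ∈ Bᶜ, x i j)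

set_option maxHeartbeats 1000000 in
/-- `Δ'(m)` is integral: every non-integral point of `Δ'(m)` is the midpoint of
two distinct points of `Δ'(m)`, hence not a vertex. -/
theorem DeltaPrime_integral (m : ℕ) (hm : 3 ≤ m) (x : Fin 3 → Fin m → ℝ)
    (hx : inDelta' m x) (hni : ∃ i j, x i j ≠ 0 ∧ x i j ≠ 1) :
    ∃ Q R : Fin 3 → Fin m → ℝ, inDelta' m Q ∧ inDelta' m R ∧ Q ≠ R ∧
      x = fun i j => (Q i j + R i j) / 2 := by
  classical
  open DeltaAux in
  obtain ⟨hb0, hrow0, hcol0⟩ := hx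
  have hb : ∀ i j, 0 ≤ x i j ∧ x i j ≤ 1 := fun i j => ⟨(hb0 i j).1, (hb0 i j).2⟩
  have hrow : ∀ i (A : Finset (Fin m)), Odd A.card → 0 ≤ DeltaAux.slackV (x i) A := by
    intro i A hA
    have := hrow0 i A hA
    unfold DeltaAux.slackV
    linarith
  have hcol : ∀ j (B : Finset (Fin 3)), Odd B.card → 0 ≤ DeltaAux.slackV (DeltaAux.colv x j) B := by
    intro j B hB
    have := hcol0 j B hB
    unfold DeltaAux.slackV DeltaAux.colv
    linarith
  obtain ⟨d, hd0, hsupp, hdr, hdc⟩ := DeltaAux.exists_dir x hb hrow hcol hni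
  -- global bound
  set Bd : ℝ := (∑ i, ∑ j, |d i j|) + 1 with hBd
  have habs_nonneg : (0:ℝ) ≤ ∑ i, ∑ j, |d i j| :=
    Finset.sum_nonneg fun i _ => Finset.sum_nonneg fun j _ => abs_nonneg _
  have hBpos : 0 < Bd := by rw [hBd]; linarith
  have hrowsum_le : ∀ i : Fin 3, ∑ j, |d i j| ≤ Bd - 1 := by
    intro i
    have h2 : ∑ j', |d i j'| ≤ ∑ i', ∑ j', |d i' j'| :=
      Finset.single_le_sum (f := fun i' => ∑ j', |d i' j'|)
        (fun i' _ => Finset.sum_nonneg fun j' _ => abs_nonneg _) (mem_univ i)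
    rw [hBd]
    linarith
  have hcolsum_le : ∀ j : Fin m, ∑ i, |d i j| ≤ Bd - 1 := by
    intro j
    have h1 : ∑ i, |d i j| ≤ ∑ i, ∑ j', |d i j'| :=
      Finset.sum_le_sum (f := fun i => |d i j|) (g := fun i => ∑ j', |d i j'|)
        (fun i _ => Finset.single_le_sum (f := fun j' => |d i j'|)
          (fun j' _ => abs_nonneg _) (mem_univ j))
    rw [hBd]
    linarith
  have hd_le : ∀ i j, |d i j| ≤ Bd - 1 := by
    intro i j
    have h1 : |d i j| ≤ ∑ j', |d i j'| :=
      Finset.single_le_sum (f := fun j' => |d i j'|) (fun j' _ => abs_nonneg _) (mem_univ j)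
    linarith [hrowsum_le i]
  have hrate_row : ∀ i (A : Finset (Fin m)), |∑ j, DeltaAux.etaV A j * d i j| ≤ Bd - 1 := by
    intro i A
    calc |∑ j, DeltaAux.etaV A j * d i j| ≤ ∑ j, |DeltaAux.etaV A j * d i j| :=
          Finset.abs_sum_le_sum_abs _ _
      _ = ∑ j, |d i j| := by
          apply Finset.sum_congr rfl
          intro j _
          rw [abs_mul]
          rcases DeltaAux.etaV_pm A j with h | h <;> rw [h] <;> simp
      _ ≤ Bd - 1 := hrowsum_le i
  have hrate_col : ∀ j (B : Finset (Fin 3)), |∑ i, DeltaAux.etaV B i * d i j| ≤ Bd - 1 := by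
    intro j B
    calc |∑ i, DeltaAux.etaV B i * d i j| ≤ ∑ i, |DeltaAux.etaV B i * d i j| :=
          Finset.abs_sum_le_sum_abs _ _
      _ = ∑ i, |d i j| := by
          apply Finset.sum_congr rfl
          intro i _
          rw [abs_mul]
          rcases DeltaAux.etaV_pm B i with h | h <;> rw [h] <;> simp
      _ ≤ Bd - 1 := hcolsum_le j
  -- minima over the (finitely many) constraints
  haveI : Nonempty (Fin m) := ⟨⟨0, by omega⟩⟩
  set f1 : Fin 3 × Finset (Fin m) → ℝ := fun c =>
    if Odd c.2.card ∧ (∑ j, DeltaAux.etaV c.2 j * d c.1 j) ≠ 0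
    then DeltaAux.slackV (x c.1) c.2 else 1 with hf1
  have hf1pos : ∀ c, 0 < f1 c := by
    intro c
    rw [hf1]
    dsimp only
    split
    · rename_i hc
      obtain ⟨hodd, hrate⟩ := hc
      rcases lt_or_eq_of_le (hrow c.1 c.2 hodd) with h | h
      · exact h
      · exact absurd (hdr c.1 c.2 hodd h.symm) hrate
    · norm_num
  set δ1 : ℝ := Finset.univ.inf' Finset.univ_nonempty f1 with hδ1
  have hδ1pos : 0 < δ1 := by
    rw [hδ1, Finset.lt_inf'_iff]
    exact fun c _ => hf1pos c
  have hδ1le : ∀ c, δ1 ≤ f1 c := fun c => Finset.inf'_le _ (mem_univ c)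
  set f2 : Fin m × Finset (Fin 3) → ℝ := fun c =>
    if Odd c.2.card ∧ (∑ i, DeltaAux.etaV c.2 i * d i c.1) ≠ 0
    then DeltaAux.slackV (DeltaAux.colv x c.1) c.2 else 1 with hf2
  have hf2pos : ∀ c, 0 < f2 c := by
    intro c
    rw [hf2]
    dsimp only
    split
    · rename_i hc
      obtain ⟨hodd, hrate⟩ := hc
      rcases lt_or_eq_of_le (hcol c.1 c.2 hodd) with h | h
      · exact h
      · exact absurd (hdc c.1 c.2 hodd h.symm) hrate
    · norm_num
  set δ2 : ℝ := Finset.univ.inf' Finset.univ_nonempty f2 with hδ2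
  have hδ2pos : 0 < δ2 := by
    rw [hδ2, Finset.lt_inf'_iff]
    exact fun c _ => hf2pos c
  have hδ2le : ∀ c, δ2 ≤ f2 c := fun c => Finset.inf'_le _ (mem_univ c)
  set f3 : Fin 3 × Fin m → ℝ := fun p =>
    if d p.1 p.2 ≠ 0 then min (x p.1 p.2) (1 - x p.1 p.2) else 1 with hf3
  have hfrac_of_d : ∀ i j, d i j ≠ 0 → 0 < x i j ∧ x i j < 1 := by
    intro i j hd
    have hni' : ¬ (x i j = 0 ∨ x i j = 1) := fun hc => hd (hsupp i j hc)
    push_neg at hni'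
    exact ⟨lt_of_le_of_ne (hb i j).1 (Ne.symm hni'.1), lt_of_le_of_ne (hb i j).2 hni'.2⟩
  have hf3pos : ∀ p, 0 < f3 p := by
    intro p
    rw [hf3]
    dsimp only
    split
    · rename_i hc
      obtain ⟨h1, h2⟩ := hfrac_of_d p.1 p.2 hc
      exact lt_min h1 (by linarith)
    · norm_num
  set δ3 : ℝ := Finset.univ.inf' Finset.univ_nonempty f3 with hδ3
  have hδ3pos : 0 < δ3 := by
    rw [hδ3, Finset.lt_inf'_iff]
    exact fun c _ => hf3pos c
  have hδ3le : ∀ c, δ3 ≤ f3 c := fun c => Finset.inf'_le _ (mem_univ c)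
  set δ : ℝ := min δ1 (min δ2 δ3) with hδ
  have hδpos : 0 < δ := lt_min hδ1pos (lt_min hδ2pos hδ3pos)
  set ε : ℝ := δ / Bd with hε
  have hεpos : 0 < ε := div_pos hδpos hBpos
  have hkey : ∀ r : ℝ, |r| ≤ Bd - 1 → ε * |r| < δ := by
    intro r hr
    have h1 : ε * |r| ≤ ε * (Bd - 1) := mul_le_mul_of_nonneg_left hr (le_of_lt hεpos)
    have h2 : ε * (Bd - 1) < δ := by
      rw [hε, div_mul_eq_mul_div, div_lt_iff₀ hBpos]
      nlinarith
    linarith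
  -- bounds for perturbed points
  have hbounds : ∀ (σ : ℝ), σ = 1 ∨ σ = -1 → ∀ i j,
      0 ≤ x i j + σ * (ε * d i j) ∧ x i j + σ * (ε * d i j) ≤ 1 := by
    intro σ hσ i j
    by_cases hdij : d i j = 0
    · rw [hdij]
      simpa using hb i j
    · have hf3val : f3 (i, j) = min (x i j) (1 - x i j) := by rw [hf3]; simp [hdij]
      have hδle : δ ≤ min (x i j) (1 - x i j) := by
        rw [← hf3val]
        calc δ ≤ min δ2 δ3 := min_le_right _ _
          _ ≤ δ3 := min_le_right _ _
          _ ≤ f3 (i, j) := hδ3le (i, j)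
      have habs : |ε * d i j| < min (x i j) (1 - x i j) := by
        rw [abs_mul, abs_of_pos hεpos]
        exact lt_of_lt_of_le (hkey (d i j) (hd_le i j)) hδle
      have h1 := neg_abs_le (ε * d i j)
      have h2 := le_abs_self (ε * d i j)
      have hm1 : min (x i j) (1 - x i j) ≤ x i j := min_le_left _ _
      have hm2 : min (x i j) (1 - x i j) ≤ 1 - x i j := min_le_right _ _
      rcases hσ with rfl | rfl
      · constructor <;> nlinarith
      · constructor <;> nlinarith
  -- row inequalities for perturbed points
  have hrows : ∀ (σ : ℝ), σ = 1 ∨ σ = -1 → ∀ i (A : Finset (Fin m)), Odd A.card →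
      0 ≤ DeltaAux.slackV (fun j => x i j + σ * (ε * d i j)) A := by
    intro σ hσ i A hA
    rw [DeltaAux.slack_perturb (x i) (fun j => σ * (ε * d i j)) A]
    have hsum : ∑ j, DeltaAux.etaV A j * (σ * (ε * d i j))
        = σ * ε * ∑ j, DeltaAux.etaV A j * d i j := by
      rw [Finset.mul_sum]
      apply Finset.sum_congr rfl
      intro j _
      ring
    rw [hsum]
    by_cases hr0 : (∑ j, DeltaAux.etaV A j * d i j) = 0
    · rw [hr0]
      have := hrow i A hA
      linarith
    · have hf1val : f1 (i, A) = DeltaAux.slackV (x i) A := by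
        rw [hf1]
        simp only
        rw [if_pos ⟨hA, hr0⟩]
      have hδleA : δ ≤ DeltaAux.slackV (x i) A := by
        rw [← hf1val]
        calc δ ≤ δ1 := min_le_left _ _
          _ ≤ f1 (i, A) := hδ1le (i, A)
      have habs : ε * |∑ j, DeltaAux.etaV A j * d i j| < δ :=
        hkey _ (hrate_row i A)
      have h1 := neg_abs_le (∑ j, DeltaAux.etaV A j * d i j)
      have h2 := le_abs_self (∑ j, DeltaAux.etaV A j * d i j)
      rcases hσ with rfl | rfl <;> nlinarith
  have hcols : ∀ (σ : ℝ), σ = 1 ∨ σ = -1 → ∀ j (B : Finset (Fin 3)), Odd B.card →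
      0 ≤ DeltaAux.slackV (fun i => x i j + σ * (ε * d i j)) B := by
    intro σ hσ j B hB
    rw [DeltaAux.slack_perturb (fun i => x i j) (fun i => σ * (ε * d i j)) B]
    have hsum : ∑ i, DeltaAux.etaV B i * (σ * (ε * d i j))
        = σ * ε * ∑ i, DeltaAux.etaV B i * d i j := by
      rw [Finset.mul_sum]
      apply Finset.sum_congr rfl
      intro i _
      ring
    rw [hsum]
    by_cases hr0 : (∑ i, DeltaAux.etaV B i * d i j) = 0
    · rw [hr0]
      have := hcol j B hB
      have hcv : DeltaAux.slackV (DeltaAux.colv x j) B = DeltaAux.slackV (fun i => x i j) B := rfl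
      linarith [hcv ▸ this]
    · have hf2val : f2 (j, B) = DeltaAux.slackV (DeltaAux.colv x j) B := by
        rw [hf2]
        simp only
        rw [if_pos ⟨hB, hr0⟩]
      have hδleB : δ ≤ DeltaAux.slackV (DeltaAux.colv x j) B := by
        rw [← hf2val]
        calc δ ≤ min δ2 δ3 := min_le_right _ _
          _ ≤ δ2 := min_le_left _ _
          _ ≤ f2 (j, B) := hδ2le (j, B)
      have habs : ε * |∑ i, DeltaAux.etaV B i * d i j| < δ :=
        hkey _ (hrate_col j B)
      have h1 := neg_abs_le (∑ i, DeltaAux.etaV B i * d i j)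
      have h2 := le_abs_self (∑ i, DeltaAux.etaV B i * d i j)
      have hcv : DeltaAux.slackV (DeltaAux.colv x j) B = DeltaAux.slackV (fun i => x i j) B := rfl
      rw [hcv] at hδleB
      rcases hσ with rfl | rfl <;> nlinarith
  -- convert slack statements to the inDelta' form
  have hmkDelta : ∀ (σ : ℝ), σ = 1 ∨ σ = -1 →
      inDelta' m (fun i j => x i j + σ * (ε * d i j)) := by
    intro σ hσ
    refine ⟨?_, ?_, ?_⟩
    · intro i j
      exact Set.mem_Icc.mpr (hbounds σ hσ i j)
    · intro i A hA
      have := hrows σ hσ i A hA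
      unfold DeltaAux.slackV at this
      linarith
    · intro j B hB
      have := hcols σ hσ j B hB
      unfold DeltaAux.slackV at this
      linarith
  have hQ := hmkDelta 1 (Or.inl rfl)
  have hR := hmkDelta (-1) (Or.inr rfl)
  refine ⟨fun i j => x i j + 1 * (ε * d i j), fun i j => x i j + (-1) * (ε * d i j),
    hQ, hR, ?_, ?_⟩
  · intro hQR
    have hex : ∃ i j, d i j ≠ 0 := by
      by_contra hc
      push_neg at hc
      exact hd0 (funext fun i => funext fun j => hc i j)
    obtain ⟨i0, j0, hd00⟩ := hex
    have := congrFun (congrFun hQR i0) j0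
    have : ε * d i0 j0 = 0 := by linarith
    rcases mul_eq_zero.mp this with h | h
    · exact absurd h (ne_of_gt hεpos)
    · exact hd00 h
  · funext i j
    ring
end

section
/- Let P ∈ {0,1}^m be integral with I = {k : p_k = 1} of even cardinality 2k. Then P lies on exactly m facet hyperplanes of the demihypercube, namely those indexed by the sets I \ {i} for i ∈ I and I ∪ {j} for j ∉ I, and on no other facet hyperplane H_A. -/
open Finset

open scoped Classical in
/-- An integral point `P ∈ {0,1}^m` with an even number of ones lies on exactly
`m` facet hyperplanes of the demihypercube, namely those indexed by `I \ {i}`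
for `i ∈ I` and `I ∪ {j}` for `j ∉ I`, where `I = {k : p_k = 1}`. -/
theorem integral_point_facets (m : ℕ) (p : Fin m → ℝ)
    (hint : ∀ k, p k = 0 ∨ p k = 1)
    (heven : Even (Finset.univ.filter (fun k : Fin m => p k = 1)).card) :
    (∀ A : Finset (Fin m), Odd A.card →
      (onFacet m p A ↔
        (∃ i ∈ (Finset.univ.filter (fun k : Fin m => p k = 1)),
            A = (Finset.univ.filter (fun k : Fin m => p k = 1)).erase i) ∨
        (∃ j, j ∉ (Finset.univ.filter (fun k : Fin m => p k = 1)) ∧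
            A = insert j (Finset.univ.filter (fun k : Fin m => p k = 1))))) ∧
    (Finset.univ.filter
      (fun A : Finset (Fin m) => Odd A.card ∧ onFacet m p A)).card = m := by
  set I : Finset (Fin m) := Finset.univ.filter (fun k : Fin m => p k = 1) with hI
  have hmemI : ∀ k, k ∈ I ↔ p k = 1 := by intro k; simp [hI]
  have hp : ∀ k, p k = if k ∈ I then (1:ℝ) else 0 := by
    intro k
    rcases hint k with h | h
    · rw [if_neg]; · exact h
      rw [hmemI]; rw [h]; norm_num
    · rw [if_pos] <;> [exact h; exact (hmemI k).2 h]
  have hsum : ∀ S : Finset (Fin m), ∑ j ∈ S, p j = ((S ∩ I).card : ℝ) := by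
    intro S
    have : ∑ j ∈ S, p j = ∑ j ∈ S, (if j ∈ I then (1:ℝ) else 0) := by
      exact Finset.sum_congr rfl fun j _ => hp j
    rw [this, Finset.sum_ite_mem]
    simp
  -- onFacet as a nat equation
  have hfacet : ∀ A : Finset (Fin m),
      onFacet m p A ↔ 2 * (A ∩ I).card + 1 = A.card + I.card := by
    intro A
    have hc : (Aᶜ ∩ I) = I \ A := by ext x; simp [Finset.mem_sdiff, and_comm]
    have hcard : (I \ A).card + (I ∩ A).card = I.card :=
      Finset.card_sdiff_add_card_inter I A
    rw [onFacet, hsum A, hsum Aᶜ, hc]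
    constructor
    · intro h
      have e1 : ((I ∩ A).card : ℝ) = ((A ∩ I).card : ℝ) := by rw [Finset.inter_comm]
      have e2 : ((I \ A).card : ℝ) + ((I ∩ A).card : ℝ) = (I.card : ℝ) := by
        exact_mod_cast congrArg (Nat.cast : ℕ → ℝ) hcard
      have h2 : ((2 * (A ∩ I).card + 1 : ℕ) : ℝ) = ((A.card + I.card : ℕ) : ℝ) := by
        push_cast; linarith
      exact_mod_cast h2
    · intro h
      have h2 : ((I \ A).card : ℝ) = (I.card : ℝ) - ((A ∩ I).card : ℝ) := by
        rw [Finset.inter_comm A I]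
        have : ((I \ A).card : ℝ) + ((I ∩ A).card : ℝ) = (I.card : ℝ) := by
          exact_mod_cast congrArg (Nat.cast : ℕ → ℝ) hcard
        linarith
      have h3 : (2 * (A ∩ I).card + 1 : ℝ) = (A.card : ℝ) + (I.card : ℝ) := by
        exact_mod_cast congrArg (Nat.cast : ℕ → ℝ) h
      push_cast at h3
      linarith
  -- symmetric-difference characterization
  have hchar : ∀ A : Finset (Fin m),
      (2 * (A ∩ I).card + 1 = A.card + I.card) ↔
      ((∃ i ∈ I, A = I.erase i) ∨ (∃ j, j ∉ I ∧ A = insert j I)) := by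
    intro A
    have hA : (A ∩ I).card + (A \ I).card = A.card := Finset.card_inter_add_card_sdiff A I
    have hI' : (I ∩ A).card + (I \ A).card = I.card := Finset.card_inter_add_card_sdiff I A
    rw [Finset.inter_comm I A] at hI'
    constructor
    · intro h
      have huv : (A \ I).card + (I \ A).card = 1 := by omega
      rcases Nat.add_eq_one_iff.1 huv with ⟨hu, hv⟩ | ⟨hu, hv⟩
      · -- A \ I empty, I \ A singleton: A = I.erase i
        left
        obtain ⟨i, hi⟩ := Finset.card_eq_one.1 hv
        have hsub : A ⊆ I := by
          rw [← Finset.sdiff_eq_empty_iff_subset]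
          exact Finset.card_eq_zero.1 hu
        have hiI : i ∈ I := (Finset.mem_sdiff.1 (hi ▸ Finset.mem_singleton_self i)).1
        refine ⟨i, hiI, ?_⟩
        ext x
        simp only [Finset.mem_erase]
        constructor
        · intro hx
          have hiA : i ∉ A := (Finset.mem_sdiff.1
            (show i ∈ I \ A by rw [hi]; exact Finset.mem_singleton_self i)).2
          exact ⟨fun hxi => hiA (hxi ▸ hx), hsub hx⟩
        · rintro ⟨hxi, hxI⟩
          by_contra hxA
          have : x ∈ I \ A := Finset.mem_sdiff.2 ⟨hxI, hxA⟩
          rw [hi] at this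
          exact hxi (Finset.mem_singleton.1 this)
      · -- I ⊆ A, A \ I singleton: A = insert j I
        right
        obtain ⟨j, hj⟩ := Finset.card_eq_one.1 hu
        have hsub : I ⊆ A := by
          rw [← Finset.sdiff_eq_empty_iff_subset]
          exact Finset.card_eq_zero.1 hv
        have hjA : j ∈ A := (Finset.mem_sdiff.1 (hj ▸ Finset.mem_singleton_self j)).1
        have hjI : j ∉ I := (Finset.mem_sdiff.1 (hj ▸ Finset.mem_singleton_self j)).2
        refine ⟨j, hjI, ?_⟩
        ext x
        simp only [Finset.mem_insert]
        constructor
        · intro hx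
          by_cases hxI : x ∈ I
          · exact Or.inr hxI
          · left
            have : x ∈ A \ I := Finset.mem_sdiff.2 ⟨hx, hxI⟩
            rw [hj] at this
            exact Finset.mem_singleton.1 this
        · rintro (rfl | hxI)
          · exact hjA
          · exact hsub hxI
    · rintro (⟨i, hi, rfl⟩ | ⟨j, hj, rfl⟩)
      · have h1 : (I.erase i ∩ I) = I.erase i := Finset.inter_eq_left.2 (Finset.erase_subset i I)
        have h2 : (I.erase i).card = I.card - 1 := Finset.card_erase_of_mem hi
        have hpos : 1 ≤ I.card := Finset.card_pos.2 ⟨i, hi⟩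
        rw [h1, h2]; omega
      · have h1 : (insert j I ∩ I) = I := Finset.inter_eq_right.2 (Finset.subset_insert j I)
        have h2 : (insert j I).card = I.card + 1 := Finset.card_insert_of_notMem hj
        rw [h1, h2]; omega
  have main : ∀ A : Finset (Fin m),
      onFacet m p A ↔
      ((∃ i ∈ I, A = I.erase i) ∨ (∃ j, j ∉ I ∧ A = insert j I)) := by
    intro A; rw [hfacet A, hchar A]
  obtain ⟨K, hK⟩ := heven
  refine ⟨fun A _ => main A, ?_⟩
  -- counting part
  have hodd : ∀ A : Finset (Fin m),
      ((∃ i ∈ I, A = I.erase i) ∨ (∃ j, j ∉ I ∧ A = insert j I)) → Odd A.card := by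
    rintro A (⟨i, hi, rfl⟩ | ⟨j, hj, rfl⟩)
    · rw [Finset.card_erase_of_mem hi]
      have hpos : 1 ≤ I.card := Finset.card_pos.2 ⟨i, hi⟩
      refine ⟨K - 1, by omega⟩
    · rw [Finset.card_insert_of_notMem hj]
      exact ⟨K, by omega⟩
  have hset : Finset.univ.filter (fun A : Finset (Fin m) => Odd A.card ∧ onFacet m p A)
      = I.image (fun i => I.erase i) ∪ Iᶜ.image (fun j => insert j I) := by
    ext A
    simp only [Finset.mem_filter, Finset.mem_univ, true_and, Finset.mem_union,
      Finset.mem_image, Finset.mem_compl]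
    constructor
    · rintro ⟨_, hA⟩
      rcases (main A).1 hA with ⟨i, hi, rfl⟩ | ⟨j, hj, rfl⟩
      · exact Or.inl ⟨i, hi, rfl⟩
      · exact Or.inr ⟨j, hj, rfl⟩
    · rintro (⟨i, hi, rfl⟩ | ⟨j, hj, rfl⟩)
      · exact ⟨hodd _ (Or.inl ⟨i, hi, rfl⟩), (main _).2 (Or.inl ⟨i, hi, rfl⟩)⟩
      · exact ⟨hodd _ (Or.inr ⟨j, hj, rfl⟩), (main _).2 (Or.inr ⟨j, hj, rfl⟩)⟩
  rw [hset]
  have hdisj : Disjoint (I.image (fun i => I.erase i)) (Iᶜ.image (fun j => insert j I)) := by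
    rw [Finset.disjoint_left]
    rintro A hA hB
    obtain ⟨i, hi, rfl⟩ := Finset.mem_image.1 hA
    obtain ⟨j, hj, hEq⟩ := Finset.mem_image.1 hB
    have hjI : j ∉ I := Finset.mem_compl.1 hj
    have h1 : (I.erase i).card = I.card - 1 := Finset.card_erase_of_mem hi
    have h2 : (insert j I).card = I.card + 1 := Finset.card_insert_of_notMem hjI
    have hpos : 1 ≤ I.card := Finset.card_pos.2 ⟨i, hi⟩
    rw [hEq, h1] at h2
    omega
  rw [Finset.card_union_of_disjoint hdisj]
  have c1 : (I.image (fun i => I.erase i)).card = I.card :=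
    Finset.card_image_of_injOn (fun a ha b hb h => by
      by_contra hne
      have : a ∈ I.erase b := Finset.mem_erase.2 ⟨hne, ha⟩
      rw [← h] at this
      exact (Finset.mem_erase.1 this).1 rfl)
  have c2 : (Iᶜ.image (fun j => insert j I)).card = Iᶜ.card :=
    Finset.card_image_of_injOn (fun a ha b hb h => by
      have haI : a ∉ I := Finset.mem_compl.1 ha
      have hbI : b ∉ I := Finset.mem_compl.1 hb
      have : a ∈ insert b I := h ▸ Finset.mem_insert_self a I
      rcases Finset.mem_insert.1 this with h' | h'
      · exact h'
      · exact absurd h' haI)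
  rw [c1, c2]
  have := Finset.card_add_card_compl I
  simpa using this
end

section
/- Suppose x' ∈ Δ'(m) has some row i₀ containing at least three non-integral coordinates and x' restricted to row i₀ lies on at most one row facet hyperplane. Then there is a nonzero vector v ∈ R^{3×m}, supported on the non-integral coordinates of x', and ε > 0 such that x' + λv ∈ Δ'(m) for all λ ∈ (−ε, ε); hence x' is not a vertex of Δ'(m). -/
open Finset

/-- The point `x'` (restricted to row `i`) lies on the row facet hyperplane
indexed by the odd-cardinality set `A`. -/
def onRowFacet (m : ℕ) (x : Fin 3 → Fin m → ℝ) (i : Fin 3)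
    (A : Finset (Fin m)) : Prop :=
  ∑ j ∈ A, x i j = (A.card : ℝ) - 1 + ∑ j ∈ Aᶜ, x i j


section DeltaAux

variable {ι : Type*} [Fintype ι] [DecidableEq ι]

/-- The slack of the odd-set inequality indexed by `A` at the line vector `y`. -/
def lineSlack (y : ι → ℝ) (A : Finset ι) : ℝ := ∑ j, if j ∈ A then 1 - y j else y j

/-- The signed functional of the odd-set inequality indexed by `A`. -/
def linePhi (w : ι → ℝ) (A : Finset ι) : ℝ := ∑ j, (if j ∈ A then (1:ℝ) else -1) * w j

lemma lineSlack_eq (y : ι → ℝ) (A : Finset ι) :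
    lineSlack y A = (A.card : ℝ) - ∑ j ∈ A, y j + ∑ j ∈ Aᶜ, y j := by
  rw [lineSlack, ← Finset.sum_add_sum_compl A]
  rw [Finset.sum_congr rfl (fun j hj => if_pos hj),
    Finset.sum_congr rfl (fun j hj => if_neg (Finset.mem_compl.mp hj))]
  rw [Finset.sum_sub_distrib]
  simp [mul_comm]

lemma linePhi_eq (w : ι → ℝ) (A : Finset ι) :
    linePhi w A = ∑ j ∈ A, w j - ∑ j ∈ Aᶜ, w j := by
  have h1 : ∑ j ∈ A, (if j ∈ A then (1:ℝ) else -1) * w j = ∑ j ∈ A, w j :=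
    Finset.sum_congr rfl fun j hj => by rw [if_pos hj, one_mul]
  have h2 : ∑ j ∈ Aᶜ, (if j ∈ A then (1:ℝ) else -1) * w j = ∑ j ∈ Aᶜ, -w j :=
    Finset.sum_congr rfl fun j hj => by rw [if_neg (Finset.mem_compl.mp hj), neg_one_mul]
  rw [linePhi, ← Finset.sum_add_sum_compl A, h1, h2, Finset.sum_neg_distrib]
  ring

lemma le_iff_lineSlack (y : ι → ℝ) (A : Finset ι) :
    (∑ j ∈ A, y j ≤ (A.card : ℝ) - 1 + ∑ j ∈ Aᶜ, y j) ↔ 1 ≤ lineSlack y A := by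
  rw [lineSlack_eq]; constructor <;> intro h <;> linarith

lemma lineSlack_affine (y w : ι → ℝ) (A : Finset ι) (l : ℝ) :
    lineSlack (fun j => y j + l * w j) A = lineSlack y A - l * linePhi w A := by
  rw [lineSlack, lineSlack, linePhi, Finset.mul_sum, ← Finset.sum_sub_distrib]
  refine Finset.sum_congr rfl fun j _ => ?_
  split_ifs <;> ring

/-- In a tight line, a fractional coordinate has a fractional companion. -/
lemma frac_pair (y : ι → ℝ) (hb : ∀ j, y j ∈ Set.Icc (0:ℝ) 1) {A : Finset ι}
    (ht : lineSlack y A = 1) {j₀ : ι} (hf : y j₀ ≠ 0 ∧ y j₀ ≠ 1) :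
    ∃ j₁, j₁ ≠ j₀ ∧ (y j₁ ≠ 0 ∧ y j₁ ≠ 1) := by
  by_contra hcon
  push_neg at hcon
  set t : ι → ℝ := fun j => if j ∈ A then 1 - y j else y j with hT
  have htnn : ∀ j, 0 ≤ t j := by
    intro j; have := hb j; simp only [Set.mem_Icc] at this
    simp only [hT]; split_ifs <;> linarith [this.1, this.2]
  have ht01 : ∀ j, j ≠ j₀ → t j = 0 ∨ t j = 1 := by
    intro j hj
    have h : y j = 0 ∨ y j = 1 := by
      by_cases h0 : y j = 0
      · exact Or.inl h0
      · exact Or.inr (hcon j hj h0)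
    rcases h with h | h <;> simp only [hT] <;> split_ifs <;> simp [h]
  have hfr : 0 < t j₀ ∧ t j₀ < 1 := by
    have := hb j₀; simp only [Set.mem_Icc] at this
    simp only [hT]; split_ifs <;>
      constructor <;>
      first
        | (rcases (this.1).lt_or_eq with h | h
           · linarith
           · exact absurd h.symm hf.1)
        | (rcases (this.2).lt_or_eq with h | h
           · linarith
           · exact absurd h hf.2)
  have hsum : ∑ j ∈ Finset.univ.erase j₀, t j = 1 - t j₀ := by
    have : ∑ j, t j = 1 := ht
    rw [← Finset.add_sum_erase _ t (Finset.mem_univ j₀)] at this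
    linarith
  by_cases hz : ∀ j ∈ Finset.univ.erase j₀, t j = 0
  · rw [Finset.sum_eq_zero hz] at hsum; linarith [hfr.2]
  · push_neg at hz
    obtain ⟨j₁, hj₁, hj₁'⟩ := hz
    have h1 : t j₁ = 1 := by
      rcases ht01 j₁ (Finset.ne_of_mem_erase hj₁) with h | h
      · exact absurd h hj₁'
      · exact h
    have : (1:ℝ) ≤ ∑ j ∈ Finset.univ.erase j₀, t j := by
      rw [← h1]
      exact Finset.single_le_sum (fun j _ => htnn j) hj₁
    linarith [hfr.1]

/-- Two distinct tight odd-set equalities force integrality outside the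
symmetric difference. -/
lemma collapse (y : ι → ℝ) (hb : ∀ j, y j ∈ Set.Icc (0:ℝ) 1) {A A' : Finset ι}
    (hodd : Odd A.card) (hodd' : Odd A'.card) (hne : A ≠ A')
    (ht : lineSlack y A = 1) (ht' : lineSlack y A' = 1) :
    ∀ j, (j ∈ A ↔ j ∈ A') → y j = 0 ∨ y j = 1 := by
  set u : ι → ℝ := fun j =>
    ((if j ∈ A then 1 - y j else y j) + (if j ∈ A' then 1 - y j else y j)) with hu
  have hsum2 : ∑ j, u j = 2 := by
    rw [hu]; rw [Finset.sum_add_distrib]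
    rw [show (∑ j, if j ∈ A then 1 - y j else y j) = lineSlack y A from rfl,
      show (∑ j, if j ∈ A' then 1 - y j else y j) = lineSlack y A' from rfl, ht, ht']
    norm_num
  set D : Finset ι := Finset.univ.filter (fun j => ¬(j ∈ A ↔ j ∈ A')) with hD
  have hsplit : ∑ j ∈ D, u j + ∑ j ∈ Finset.univ.filter (fun j => (j ∈ A ↔ j ∈ A')), u j
      = 2 := by
    rw [← hsum2]
    rw [← Finset.sum_filter_add_sum_filter_not Finset.univ (fun j => ¬(j ∈ A ↔ j ∈ A')) u]
    congr 1
    apply Finset.sum_congr _ (fun _ _ => rfl)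
    apply Finset.filter_congr; intro j _; tauto
  have hDval : ∑ j ∈ D, u j = D.card := by
    rw [Finset.card_eq_sum_ones, Nat.cast_sum]
    apply Finset.sum_congr rfl
    intro j hj
    rw [hD, Finset.mem_filter] at hj
    have := hj.2
    simp only [hu]
    by_cases h1 : j ∈ A <;> by_cases h2 : j ∈ A' <;> simp [h1, h2] at this ⊢
  have hnn : ∀ j ∈ Finset.univ.filter (fun j => (j ∈ A ↔ j ∈ A')), 0 ≤ u j := by
    intro j _
    have := hb j; simp only [Set.mem_Icc] at this
    simp only [hu]; split_ifs <;> linarith [this.1, this.2]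
  have hcard_le : D.card ≤ 2 := by
    have h0 : (0:ℝ) ≤ ∑ j ∈ Finset.univ.filter (fun j => (j ∈ A ↔ j ∈ A')), u j :=
      Finset.sum_nonneg hnn
    have : (D.card : ℝ) ≤ 2 := by linarith [hsplit, hDval]
    exact_mod_cast this
  have hDeq : D = (A \ A') ∪ (A' \ A) := by
    ext j; simp only [hD, Finset.mem_filter, Finset.mem_univ, true_and,
      Finset.mem_union, Finset.mem_sdiff]
    tauto
  have hcard_even : D.card % 2 = 0 := by
    have hdisj : Disjoint (A \ A') (A' \ A) := by
      rw [Finset.disjoint_left]; intro a ha ha'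
      rw [Finset.mem_sdiff] at ha ha'; exact ha.2 ha'.1
    have h1 : (A ∩ A').card + (A \ A').card = A.card := Finset.card_inter_add_card_sdiff A A'
    have h2 : (A' ∩ A).card + (A' \ A).card = A'.card := Finset.card_inter_add_card_sdiff A' A
    have h3 : (A ∩ A').card = (A' ∩ A).card := by rw [Finset.inter_comm]
    have h4 : D.card = (A \ A').card + (A' \ A).card := by
      rw [hDeq, Finset.card_union_of_disjoint hdisj]
    obtain ⟨k, hk⟩ := hodd; obtain ⟨k', hk'⟩ := hodd'
    omega
  have hDne : D ≠ ∅ := by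
    intro h
    apply hne
    ext j
    have hj : j ∉ D := by rw [h]; exact Finset.notMem_empty j
    rw [hD, Finset.mem_filter] at hj
    push_neg at hj
    exact hj (Finset.mem_univ j)
  have hDcard : D.card = 2 := by
    have : 0 < D.card := Finset.card_pos.mpr (Finset.nonempty_of_ne_empty hDne)
    omega
  have hrest : ∑ j ∈ Finset.univ.filter (fun j => (j ∈ A ↔ j ∈ A')), u j = 0 := by
    rw [hDval, hDcard] at hsplit; norm_num at hsplit; linarith
  intro j hj
  have hjz : u j = 0 :=
    (Finset.sum_eq_zero_iff_of_nonneg hnn).mp hrest j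
      (Finset.mem_filter.mpr ⟨Finset.mem_univ j, hj⟩)
  have := hb j; simp only [Set.mem_Icc] at this
  simp only [hu] at hjz
  rcases hj with ⟨h1, h2⟩
  by_cases hA : j ∈ A
  · right; have hA' : j ∈ A' := h1 hA; rw [if_pos hA, if_pos hA'] at hjz; linarith
  · left; have hA' : j ∉ A' := fun h => hA (h2 h); rw [if_neg hA, if_neg hA'] at hjz; linarith

/-- If a direction supported on fractional coordinates annihilates one tight
odd-set functional of a line, it annihilates all of them. -/
lemma kill (y : ι → ℝ) (hb : ∀ j, y j ∈ Set.Icc (0:ℝ) 1) {A A' : Finset ι}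
    (hodd : Odd A.card) (hodd' : Odd A'.card)
    (ht : lineSlack y A = 1) (ht' : lineSlack y A' = 1) (v : ι → ℝ)
    (hsupp : ∀ j, (y j = 0 ∨ y j = 1) → v j = 0) (h0 : linePhi v A = 0) :
    linePhi v A' = 0 := by
  by_cases hAA : A = A'
  · rw [← hAA]; exact h0
  have hsum : linePhi v A + linePhi v A' = 0 := by
    rw [linePhi, linePhi, ← Finset.sum_add_distrib]
    apply Finset.sum_eq_zero
    intro j _
    by_cases hiff : (j ∈ A ↔ j ∈ A')
    · rw [hsupp j (collapse y hb hodd hodd' hAA ht ht' j hiff)]; ring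
    · by_cases h1 : j ∈ A <;> by_cases h2 : j ∈ A' <;> simp [h1, h2] at hiff ⊢
  linarith

lemma card_filter_prod {α β : Type*} [Fintype α] [Fintype β] [DecidableEq α]
    (P : α × β → Prop) [DecidablePred P] :
    (Finset.univ.filter P).card = ∑ a : α, (Finset.univ.filter fun b => P (a, b)).card := by
  rw [Finset.card_eq_sum_card_fiberwise
    (f := Prod.fst) (t := Finset.univ) (fun _ _ => Finset.mem_univ _)]
  refine Finset.sum_congr rfl fun a _ => ?_
  refine Finset.card_bij (fun p _ => p.2) ?_ ?_ ?_
  · intro p hp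
    simp only [Finset.mem_filter, Finset.mem_univ, true_and] at hp ⊢
    rcases hp with ⟨hp1, hp2⟩
    rwa [show (a, p.2) = p from by rw [← hp2]]
  · intro p hp q hq hpq
    simp only [Finset.mem_filter] at hp hq
    exact Prod.ext (hp.2.trans hq.2.symm) hpq
  · intro b hb
    simp only [Finset.mem_filter, Finset.mem_univ, true_and] at hb ⊢
    exact ⟨(a, b), ⟨hb, rfl⟩, rfl⟩

lemma card_filter_prod' {α β : Type*} [Fintype α] [Fintype β] [DecidableEq β]
    (P : α × β → Prop) [DecidablePred P] :
    (Finset.univ.filter P).card = ∑ b : β, (Finset.univ.filter fun a => P (a, b)).card := by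
  rw [Finset.card_eq_sum_card_fiberwise
    (f := Prod.snd) (t := Finset.univ) (fun _ _ => Finset.mem_univ _)]
  refine Finset.sum_congr rfl fun b _ => ?_
  refine Finset.card_bij (fun p _ => p.1) ?_ ?_ ?_
  · intro p hp
    simp only [Finset.mem_filter, Finset.mem_univ, true_and] at hp ⊢
    rcases hp with ⟨hp1, hp2⟩
    rwa [show (p.1, b) = p from by rw [← hp2]]
  · intro p hp q hq hpq
    simp only [Finset.mem_filter] at hp hq
    exact Prod.ext hpq (hp.2.trans hq.2.symm)
  · intro a ha
    simp only [Finset.mem_filter, Finset.mem_univ, true_and] at ha ⊢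
    exact ⟨(a, b), ⟨ha, rfl⟩, rfl⟩

end DeltaAux

/-- Extension-by-zero as a linear map. -/
def extendMap {m : ℕ} (P : Fin 3 × Fin m → Prop) [DecidablePred P] :
    ({p // P p} → ℝ) →ₗ[ℝ] (Fin 3 → Fin m → ℝ) where
  toFun u i j := if h : P (i, j) then u ⟨(i, j), h⟩ else 0
  map_add' u w := by funext i j; by_cases h : P (i, j) <;> simp [h]
  map_smul' c u := by funext i j; by_cases h : P (i, j) <;> simp [h]

lemma extendMap_apply {m : ℕ} (P : Fin 3 × Fin m → Prop) [DecidablePred P]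
    (u : {p // P p} → ℝ) (i : Fin 3) (j : Fin m) :
    extendMap P u i j = if h : P (i, j) then u ⟨(i, j), h⟩ else 0 := rfl

/-- The combined tight-functional linear map. -/
def tightMap (m : ℕ) (Cr : Finset (Fin 3)) (Cc : Finset (Fin m))
    (Ar : Fin 3 → Finset (Fin m)) (Bc : Fin m → Finset (Fin 3)) :
    (Fin 3 → Fin m → ℝ) →ₗ[ℝ] (({i // i ∈ Cr} → ℝ) × ({j // j ∈ Cc} → ℝ)) where
  toFun v := (fun i => linePhi (v i.1) (Ar i.1), fun j => linePhi (fun i => v i j.1) (Bc j.1))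
  map_add' v w := by
    refine Prod.ext ?_ ?_ <;> funext c <;>
      simp only [linePhi, Prod.fst_add, Prod.snd_add, Pi.add_apply] <;>
      rw [← Finset.sum_add_distrib] <;>
      exact Finset.sum_congr rfl fun _ _ => by ring
  map_smul' c v := by
    refine Prod.ext ?_ ?_ <;> funext d <;>
      simp only [linePhi, Prod.smul_fst, Prod.smul_snd, Pi.smul_apply, RingHom.id_apply,
        smul_eq_mul, Finset.mul_sum] <;>
      exact Finset.sum_congr rfl fun _ _ => by ring

/-- If the number of constrained lines is smaller than the number of fractional
coordinates, the combined tight-functional map has a nonzero kernel vector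
supported on the fractional coordinates. -/
lemma exists_ker (m : ℕ) (Cr : Finset (Fin 3)) (Cc : Finset (Fin m))
    (Ar : Fin 3 → Finset (Fin m)) (Bc : Fin m → Finset (Fin 3))
    (P : Fin 3 × Fin m → Prop) [DecidablePred P]
    (hcount : Cr.card + Cc.card < Fintype.card {p // P p}) :
    ∃ u : {p : Fin 3 × Fin m // P p} → ℝ, u ≠ 0 ∧
      tightMap m Cr Cc Ar Bc (extendMap P u) = 0 := by
  set Ψ := (tightMap m Cr Cc Ar Bc).comp (extendMap P) with hΨ
  have hker : LinearMap.ker Ψ ≠ ⊥ := by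
    intro hbot
    have hinj : Function.Injective Ψ := LinearMap.ker_eq_bot.mp hbot
    have hle := LinearMap.finrank_le_finrank_of_injective hinj
    rw [Module.finrank_fintype_fun_eq_card] at hle
    rw [Module.finrank_prod, Module.finrank_fintype_fun_eq_card,
      Module.finrank_fintype_fun_eq_card, Fintype.card_coe, Fintype.card_coe] at hle
    omega
  obtain ⟨u, hu, hune⟩ := (Submodule.ne_bot_iff _).mp hker
  exact ⟨u, hune, hu⟩

open scoped Classical in
/-- If some row `i₀` of `x' ∈ Δ'(m)` contains at least three non-integral
coordinates and lies on at most one row facet hyperplane, then there exist a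
nonzero vector `v` supported on the non-integral coordinates of `x'` and
`ε > 0` with `x' + λv ∈ Δ'(m)` for all `λ ∈ (−ε, ε)`; hence `x'` is not a
vertex. -/
theorem interior_of_many_nonintegral (m : ℕ) (hm : 3 ≤ m)
    (x : Fin 3 → Fin m → ℝ) (hx : inDelta' m x) (i₀ : Fin 3)
    (h3 : 3 ≤ (Finset.univ.filter (fun j : Fin m => x i₀ j ≠ 0 ∧ x i₀ j ≠ 1)).card)
    (h1 : (Finset.univ.filter
      (fun A : Finset (Fin m) => Odd A.card ∧ onRowFacet m x i₀ A)).card ≤ 1) :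
    ∃ v : Fin 3 → Fin m → ℝ, v ≠ 0 ∧
      (∀ i j, (x i j = 0 ∨ x i j = 1) → v i j = 0) ∧
      ∃ ε : ℝ, 0 < ε ∧ ∀ l : ℝ, -ε < l → l < ε →
        inDelta' m (fun i j => x i j + l * v i j) := by
  classical
  obtain ⟨hb, hrow, hcol⟩ := hx
  -- reformulate constraints in slack form
  have hbr : ∀ i : Fin 3, ∀ j, x i j ∈ Set.Icc (0:ℝ) 1 := hb
  have hbc : ∀ j : Fin m, ∀ i, (fun i => x i j) i ∈ Set.Icc (0:ℝ) 1 := fun j i => hb i j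
  have hrowS : ∀ i : Fin 3, ∀ A : Finset (Fin m), Odd A.card → 1 ≤ lineSlack (x i) A :=
    fun i A hA => (le_iff_lineSlack _ _).mp (hrow i A hA)
  have hcolS : ∀ j : Fin m, ∀ B : Finset (Fin 3), Odd B.card →
      1 ≤ lineSlack (fun i => x i j) B :=
    fun j B hB => (le_iff_lineSlack _ _).mp (hcol j B hB)
  -- fractional coordinates
  set Frac : Fin 3 × Fin m → Prop := fun p => x p.1 p.2 ≠ 0 ∧ x p.1 p.2 ≠ 1 with hFrac
  -- constrained rows and columns
  set Cr : Finset (Fin 3) := Finset.univ.filter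
    (fun i => (∃ A : Finset (Fin m), Odd A.card ∧ lineSlack (x i) A = 1) ∧
      (∃ j, Frac (i, j))) with hCr
  set Cc : Finset (Fin m) := Finset.univ.filter
    (fun j => (∃ B : Finset (Fin 3), Odd B.card ∧ lineSlack (fun i => x i j) B = 1) ∧
      (∃ i, Frac (i, j))) with hCc
  -- chosen tight sets
  set pickA : Fin 3 → Finset (Fin m) := fun i =>
    if h : ∃ A : Finset (Fin m), Odd A.card ∧ lineSlack (x i) A = 1 then h.choose else ∅
    with hpickA
  set pickB : Fin m → Finset (Fin 3) := fun j =>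
    if h : ∃ B : Finset (Fin 3), Odd B.card ∧ lineSlack (fun i => x i j) B = 1 then h.choose
      else ∅ with hpickB
  have hpickA_spec : ∀ i ∈ Cr, Odd (pickA i).card ∧ lineSlack (x i) (pickA i) = 1 := by
    intro i hi
    rw [hCr, Finset.mem_filter] at hi
    have hex := hi.2.1
    simp only [hpickA]
    rw [dif_pos hex]
    exact hex.choose_spec
  have hpickB_spec : ∀ j ∈ Cc, Odd (pickB j).card ∧ lineSlack (fun i => x i j) (pickB j) = 1 := by
    intro j hj
    rw [hCc, Finset.mem_filter] at hj
    have hex := hj.2.1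
    simp only [hpickB]
    rw [dif_pos hex]
    exact hex.choose_spec
  -- the counting inequality
  have hcount : Cr.card + Cc.card < Fintype.card {p : Fin 3 × Fin m // Frac p} := by
    have hNcard : Fintype.card {p : Fin 3 × Fin m // Frac p}
        = (Finset.univ.filter Frac).card := Fintype.card_subtype Frac
    have hNr : (Finset.univ.filter Frac).card
        = ∑ i : Fin 3, (Finset.univ.filter fun j => Frac (i, j)).card := card_filter_prod Frac
    have hNc : (Finset.univ.filter Frac).card
        = ∑ j : Fin m, (Finset.univ.filter fun i => Frac (i, j)).card := card_filter_prod' Frac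
    have hrd0 : 3 ≤ (Finset.univ.filter fun j => Frac (i₀, j)).card := by
      convert h3 using 2
    have hrd2 : ∀ i ∈ Cr, 2 ≤ (Finset.univ.filter fun j => Frac (i, j)).card := by
      intro i hi
      rw [hCr, Finset.mem_filter] at hi
      obtain ⟨-, ⟨A, hA, ht⟩, ⟨j₀, hj₀⟩⟩ := hi
      obtain ⟨j₁, hne, hfr⟩ := frac_pair (x i) (hbr i) ht hj₀
      exact Finset.one_lt_card.mpr
        ⟨j₁, Finset.mem_filter.mpr ⟨Finset.mem_univ _, hfr⟩,
         j₀, Finset.mem_filter.mpr ⟨Finset.mem_univ _, hj₀⟩, hne⟩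
    have hcd2 : ∀ j ∈ Cc, 2 ≤ (Finset.univ.filter fun i => Frac (i, j)).card := by
      intro j hj
      rw [hCc, Finset.mem_filter] at hj
      obtain ⟨-, ⟨B, hB, ht⟩, ⟨i₁, hi₁⟩⟩ := hj
      obtain ⟨i₂, hne, hfr⟩ := frac_pair (fun i => x i j) (hbc j) ht hi₁
      exact Finset.one_lt_card.mpr
        ⟨i₂, Finset.mem_filter.mpr ⟨Finset.mem_univ _, hfr⟩,
         i₁, Finset.mem_filter.mpr ⟨Finset.mem_univ _, hi₁⟩, hne⟩
    -- row side
    have hrows : 2 * Cr.card + 1 ≤ ∑ i : Fin 3, (Finset.univ.filter fun j => Frac (i, j)).card := by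
      have hstep1 : ∑ i ∈ insert i₀ (Cr.erase i₀), (Finset.univ.filter fun j => Frac (i, j)).card
          ≤ ∑ i : Fin 3, (Finset.univ.filter fun j => Frac (i, j)).card :=
        Finset.sum_le_sum_of_subset (Finset.subset_univ _)
      rw [Finset.sum_insert (Finset.notMem_erase _ _)] at hstep1
      have hstep2 : 2 * (Cr.erase i₀).card ≤
          ∑ i ∈ Cr.erase i₀, (Finset.univ.filter fun j => Frac (i, j)).card := by
        have := Finset.card_nsmul_le_sum (Cr.erase i₀)
          (fun i => (Finset.univ.filter fun j => Frac (i, j)).card) 2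
          (fun i hi => hrd2 i (Finset.mem_of_mem_erase hi))
        simpa [mul_comm] using this
      have hstep3 : Cr.card ≤ (Cr.erase i₀).card + 1 := by
        by_cases hmem : i₀ ∈ Cr
        · rw [Finset.card_erase_of_mem hmem]; omega
        · rw [Finset.erase_eq_of_notMem hmem]; omega
      omega
    -- column side
    have hcols : 2 * Cc.card ≤ ∑ j : Fin m, (Finset.univ.filter fun i => Frac (i, j)).card := by
      have hstep1 : ∑ j ∈ Cc, (Finset.univ.filter fun i => Frac (i, j)).card
          ≤ ∑ j : Fin m, (Finset.univ.filter fun i => Frac (i, j)).card :=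
        Finset.sum_le_sum_of_subset (Finset.subset_univ _)
      have hstep2 := Finset.card_nsmul_le_sum Cc
        (fun j => (Finset.univ.filter fun i => Frac (i, j)).card) 2 hcd2
      simp only [smul_eq_mul] at hstep2
      omega
    omega
  -- get the kernel element
  obtain ⟨u, hune, hker⟩ := exists_ker m Cr Cc pickA pickB Frac hcount
  set v : Fin 3 → Fin m → ℝ := extendMap Frac u with hv
  -- support property
  have hsupp : ∀ i j, (x i j = 0 ∨ x i j = 1) → v i j = 0 := by
    intro i j h
    rw [hv, extendMap_apply, dif_neg]
    intro hF
    rcases h with h | h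
    · exact hF.1 h
    · exact hF.2 h
  have hnfrac : ∀ i j, ¬ Frac (i, j) → v i j = 0 := by
    intro i j h
    rw [hv, extendMap_apply, dif_neg h]
  -- nonzero
  have hvne : v ≠ 0 := by
    intro h0
    apply hune
    funext p
    have hp := congrFun (congrFun h0 p.1.1) p.1.2
    rw [hv, extendMap_apply] at hp
    rw [dif_pos (show Frac (p.1.1, p.1.2) from p.2)] at hp
    simpa using hp
  -- kernel conditions
  have hkerR : ∀ i : Fin 3, ∀ hi : i ∈ Cr, linePhi (v i) (pickA i) = 0 := by
    intro i hi
    have := congrFun (congrArg Prod.fst hker) ⟨i, hi⟩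
    simpa [tightMap, hv] using this
  have hkerC : ∀ j : Fin m, ∀ hj : j ∈ Cc, linePhi (fun i => v i j) (pickB j) = 0 := by
    intro j hj
    have := congrFun (congrArg Prod.snd hker) ⟨j, hj⟩
    simpa [tightMap, hv] using this
  -- the key annihilation properties
  have keyR : ∀ i : Fin 3, ∀ A : Finset (Fin m), Odd A.card → lineSlack (x i) A = 1 →
      linePhi (v i) A = 0 := by
    intro i A hA ht
    by_cases hi : i ∈ Cr
    · exact kill (x i) (hbr i) (hpickA_spec i hi).1 hA (hpickA_spec i hi).2 ht (v i)
        (fun j h => hsupp i j h) (hkerR i hi)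
    · have : ∀ j, v i j = 0 := by
        intro j
        apply hnfrac
        intro hF
        apply hi
        rw [hCr, Finset.mem_filter]
        exact ⟨Finset.mem_univ _, ⟨A, hA, ht⟩, ⟨j, hF⟩⟩
      rw [linePhi]
      apply Finset.sum_eq_zero
      intro j _
      rw [this j, mul_zero]
  have keyC : ∀ j : Fin m, ∀ B : Finset (Fin 3), Odd B.card →
      lineSlack (fun i => x i j) B = 1 → linePhi (fun i => v i j) B = 0 := by
    intro j B hB ht
    by_cases hj : j ∈ Cc
    · exact kill (fun i => x i j) (hbc j) (hpickB_spec j hj).1 hB (hpickB_spec j hj).2 ht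
        (fun i => v i j) (fun i h => hsupp i j h) (hkerC j hj)
    · have : ∀ i, v i j = 0 := by
        intro i
        apply hnfrac
        intro hF
        apply hj
        rw [hCc, Finset.mem_filter]
        exact ⟨Finset.mem_univ _, ⟨B, hB, ht⟩, ⟨i, hF⟩⟩
      rw [linePhi]
      apply Finset.sum_eq_zero
      intro i _
      rw [this i, mul_zero]
  -- eventual membership
  have hev : ∀ᶠ l in nhds (0:ℝ), inDelta' m (fun i j => x i j + l * v i j) := by
    rw [show (fun l => inDelta' m (fun i j => x i j + l * v i j)) = fun l =>
      ((∀ i j, (x i j + l * v i j) ∈ Set.Icc (0:ℝ) 1) ∧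
       (∀ i : Fin 3, ∀ A : Finset (Fin m), Odd A.card →
         ∑ j ∈ A, (x i j + l * v i j) ≤ (A.card : ℝ) - 1 + ∑ j ∈ Aᶜ, (x i j + l * v i j)) ∧
       (∀ j : Fin m, ∀ B : Finset (Fin 3), Odd B.card →
         ∑ i ∈ B, (x i j + l * v i j) ≤ (B.card : ℝ) - 1 + ∑ i ∈ Bᶜ, (x i j + l * v i j)))
      from rfl]
    refine Filter.Eventually.and ?_ (Filter.Eventually.and ?_ ?_)
    · rw [Filter.eventually_all]
      intro i
      rw [Filter.eventually_all]
      intro j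
      by_cases h0 : x i j = 0 ∨ x i j = 1
      · have hv0 := hsupp i j h0
        exact Filter.Eventually.of_forall fun l => by rw [hv0, mul_zero, add_zero]; exact hb i j
      · push_neg at h0
        have hIcc := hb i j
        rw [Set.mem_Icc] at hIcc
        have hlt1 : 0 < x i j := hIcc.1.lt_of_ne (Ne.symm h0.1)
        have hlt2 : x i j < 1 := hIcc.2.lt_of_ne h0.2
        have htend : Filter.Tendsto (fun l : ℝ => x i j + l * v i j) (nhds 0) (nhds (x i j)) := by
          have hc : Continuous fun l : ℝ => x i j + l * v i j := by fun_prop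
          have := hc.tendsto 0
          simpa using this
        filter_upwards [htend.eventually_const_lt hlt1, htend.eventually_lt_const hlt2]
          with l ha hb'
        exact Set.mem_Icc.mpr ⟨ha.le, hb'.le⟩
    · rw [Filter.eventually_all]
      intro i
      rw [Filter.eventually_all]
      intro A
      by_cases hA : Odd A.card
      swap
      · exact Filter.Eventually.of_forall fun l h => absurd h hA
      have main : ∀ᶠ l in nhds (0:ℝ), (1:ℝ) ≤ lineSlack (fun j => x i j + l * v i j) A := by
        by_cases ht : lineSlack (x i) A = 1
        · have hq : linePhi (v i) A = 0 := keyR i A hA ht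
          refine Filter.Eventually.of_forall fun l => ?_
          rw [lineSlack_affine, hq, ht, mul_zero, sub_zero]
        · have hgt : 1 < lineSlack (x i) A := (hrowS i A hA).lt_of_ne (Ne.symm ht)
          have htend : Filter.Tendsto (fun l : ℝ => lineSlack (fun j => x i j + l * v i j) A)
              (nhds 0) (nhds (lineSlack (x i) A)) := by
            have heq : (fun l : ℝ => lineSlack (fun j => x i j + l * v i j) A)
                = fun l : ℝ => lineSlack (x i) A - l * linePhi (v i) A := by
              funext l; exact lineSlack_affine (x i) (v i) A l
            rw [heq]
            have hc : Continuous fun l : ℝ => lineSlack (x i) A - l * linePhi (v i) A := by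
              fun_prop
            have := hc.tendsto 0
            simpa using this
          exact (htend.eventually_const_lt hgt).mono fun l h => h.le
      exact main.mono fun l h _ => (le_iff_lineSlack _ _).mpr h
    · rw [Filter.eventually_all]
      intro j
      rw [Filter.eventually_all]
      intro B
      by_cases hB : Odd B.card
      swap
      · exact Filter.Eventually.of_forall fun l h => absurd h hB
      have main : ∀ᶠ l in nhds (0:ℝ), (1:ℝ) ≤ lineSlack (fun i => x i j + l * v i j) B := by
        by_cases ht : lineSlack (fun i => x i j) B = 1
        · have hq : linePhi (fun i => v i j) B = 0 := keyC j B hB ht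
          refine Filter.Eventually.of_forall fun l => ?_
          rw [lineSlack_affine, hq, ht, mul_zero, sub_zero]
        · have hgt : 1 < lineSlack (fun i => x i j) B := (hcolS j B hB).lt_of_ne (Ne.symm ht)
          have htend : Filter.Tendsto (fun l : ℝ => lineSlack (fun i => x i j + l * v i j) B)
              (nhds 0) (nhds (lineSlack (fun i => x i j) B)) := by
            have heq : (fun l : ℝ => lineSlack (fun i => x i j + l * v i j) B)
                = fun l : ℝ => lineSlack (fun i => x i j) B - l * linePhi (fun i => v i j) B := by
              funext l; exact lineSlack_affine (fun i => x i j) (fun i => v i j) B l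
            rw [heq]
            have hc : Continuous fun l : ℝ =>
                lineSlack (fun i => x i j) B - l * linePhi (fun i => v i j) B := by fun_prop
            have := hc.tendsto 0
            simpa using this
          exact (htend.eventually_const_lt hgt).mono fun l h => h.le
      exact main.mono fun l h _ => (le_iff_lineSlack _ _).mpr h
  rw [Metric.eventually_nhds_iff] at hev
  obtain ⟨ε, hε, hball⟩ := hev
  refine ⟨v, hvne, hsupp, ε, hε, ?_⟩
  intro l hl1 hl2
  apply hball
  rw [Real.dist_eq, sub_zero]
  exact abs_lt.mpr ⟨hl1, hl2⟩
end
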